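/- arXiv:2507.22185 — 18 statements merged into one kernel-verified Lean document; each statement's English description precedes it below -/
import Mathlib

section
/- Let M be an n×n positive semidefinite real matrix and q ∈ ℝⁿ, and suppose there exists a strictly feasible pair (x̂, ŝ) with x̂, ŝ > 0 componentwise and −M x̂ + ŝ = q. Let w = (v₀, v) ∈ ℝ × ℝⁿ satisfy v₀ > ‖v‖², and set ρ(w) = (v₀ − ‖v‖²)/(n+1). Then there exists a unique pair (x, s) with x, s > 0 componentwise such that −M x + s = q and xᵢ sᵢ = vᵢ² + ρ(w) for every i = 1,…,n. Moreover, for this pair F(x, s, w) = −(n+1) ln ρ(w), and for every other pair (x′, s′) with x′, s′ > 0, −M x′ + s′ = q, x′ᵢ s′ᵢ > vᵢ² for all i and (x′)ᵀ s′ < v₀, one has F(x′, s′, w) ≥ −(n+1) ln ρ(w). -/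
open scoped Matrix

lemma log_le_aux {a b : ℝ} (ha : 0 < a) (hb : 0 < b) :
    Real.log a ≤ Real.log b + (a - b) / b := by
  have h := Real.log_le_sub_one_of_pos (x := a / b) (by positivity)
  rw [Real.log_div ha.ne' hb.ne'] at h
  have : a / b - 1 = (a - b) / b := by field_simp
  linarith [this ▸ h]

lemma phi_lb {t w : ℝ} (ht : 0 < t) (hw : 0 < w) :
    w - w * Real.log w ≤ t - w * Real.log t := by
  have h := mul_le_mul_of_nonneg_left (log_le_aux ht hw) hw.le
  have he : w * ((t - w) / w) = t - w := by field_simp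
  rw [mul_add, he] at h
  linarith

lemma phi_sublevel_lb {t w c : ℝ} (ht : 0 < t) (hw : 0 < w)
    (h : t - w * Real.log t ≤ c) : Real.exp (-(c/w)) ≤ t := by
  have h1 : -(c/w) ≤ Real.log t := by
    rw [show -(c/w) = (-c)/w by ring, div_le_iff₀ hw]
    nlinarith
  calc Real.exp (-(c/w)) ≤ Real.exp (Real.log t) := Real.exp_le_exp.2 h1
    _ = t := Real.exp_log ht

lemma phi_sublevel_ub {t w c : ℝ} (ht : 0 < t) (hw : 0 < w)
    (h : t - w * Real.log t ≤ c) : t ≤ 2 * (c - w + w * Real.log (2*w)) := by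
  have h2 : Real.log t ≤ t / (2*w) - 1 + Real.log (2*w) := by
    have := Real.log_le_sub_one_of_pos (x := t / (2*w)) (by positivity)
    rw [Real.log_div ht.ne' (by positivity)] at this
    linarith
  have h3 := mul_le_mul_of_nonneg_left h2 hw.le
  have he : w * (t / (2*w)) = t/2 := by field_simp
  rw [mul_add, mul_sub, he] at h3
  linarith

set_option maxHeartbeats 1000000 in
lemma exists_center {n : ℕ} {M : Matrix (Fin n) (Fin n) ℝ}
    (hM : ∀ u : Fin n → ℝ, 0 ≤ u ⬝ᵥ M.mulVec u) {q : Fin n → ℝ}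
    (hfeas : ∃ x s : Fin n → ℝ, (∀ i, 0 < x i) ∧ (∀ i, 0 < s i) ∧ -(M.mulVec x) + s = q)
    {w : Fin n → ℝ} (hw : ∀ i, 0 < w i) :
    ∃ x s : Fin n → ℝ, (∀ i, 0 < x i) ∧ (∀ i, 0 < s i) ∧ -(M.mulVec x) + s = q ∧
      ∀ i, x i * s i = w i := by
  classical
  obtain ⟨xh, sh, hxh, hsh, hq⟩ := hfeas
  set S : (Fin n → ℝ) → Fin n → ℝ := fun x i => M.mulVec x i + q i with hSdef
  have hSh : ∀ i, S xh i = sh i := by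
    intro i
    have := congrFun hq i
    simp only [Pi.add_apply, Pi.neg_apply] at this
    simp only [S]; linarith
  have hSq : ∀ x, -(M.mulVec x) + S x = q := by
    intro x; funext i
    simp only [Pi.add_apply, Pi.neg_apply, S]; ring
  set Ψ : (Fin n → ℝ) → ℝ :=
    fun x => ∑ i, (x i * S x i - w i * Real.log (x i * S x i)) with hΨdef
  set D : Set (Fin n → ℝ) := {x | (∀ i, 0 < x i) ∧ (∀ i, 0 < S x i)} with hDdef
  have hxhD : xh ∈ D := ⟨hxh, fun i => (hSh i) ▸ hsh i⟩
  set c : ℝ := Ψ xh with hcdef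
  have hprod_pos : ∀ x ∈ D, ∀ i, 0 < x i * S x i := fun x hx i => mul_pos (hx.1 i) (hx.2 i)
  have hScont : ∀ i, Continuous (fun x => S x i) := by
    intro i
    have he : (fun x : Fin n → ℝ => S x i) = fun x => (∑ j, M i j * x j) + q i := rfl
    rw [he]
    exact (continuous_finset_sum _ fun j _ => continuous_const.mul (continuous_apply j)).add
      continuous_const
  have hΨcont : ∀ x ∈ D, ContinuousAt Ψ x := by
    intro x hx
    apply tendsto_finset_sum
    intro i _
    have hmul : Continuous fun y : Fin n → ℝ => y i * S y i :=
      (continuous_apply i).mul (hScont i)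
    have hlogc : ContinuousAt (fun y : Fin n → ℝ => Real.log (y i * S y i)) x :=
      ContinuousAt.comp (g := Real.log) (f := fun y : Fin n → ℝ => y i * S y i)
        (Real.continuousAt_log (hprod_pos x hx i).ne') hmul.continuousAt
    exact hmul.continuousAt.sub (continuousAt_const.mul hlogc)
  have hDmem : ∀ x ∈ D, ∀ᶠ y in nhds x, y ∈ D := by
    intro x hx
    have h1 : ∀ᶠ y in nhds x, ∀ i, 0 < y i := by
      rw [Filter.eventually_all]
      exact fun i => (continuous_apply i).continuousAt.eventually (eventually_gt_nhds (hx.1 i))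
    have h2 : ∀ᶠ y in nhds x, ∀ i, 0 < S y i := by
      rw [Filter.eventually_all]
      exact fun i => (hScont i).continuousAt.eventually (eventually_gt_nhds (hx.2 i))
    filter_upwards [h1, h2] with y hy1 hy2
    exact ⟨hy1, hy2⟩
  set clow : ℝ := ∑ i, (w i - w i * Real.log (w i)) with hclowdef
  set cj : Fin n → ℝ := fun j => c - clow + (w j - w j * Real.log (w j)) with hcjdef
  set aj : Fin n → ℝ := fun j => Real.exp (-(cj j / w j)) with hajdef
  set bj : Fin n → ℝ := fun j => 2 * (cj j - w j + w j * Real.log (2 * w j)) with hbjdef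
  have hajpos : ∀ j, 0 < aj j := fun j => Real.exp_pos _
  have hterm_le : ∀ x ∈ D, Ψ x ≤ c → ∀ j,
      x j * S x j - w j * Real.log (x j * S x j) ≤ cj j := by
    intro x hx hΨx j
    have hsplit : ∑ i ∈ Finset.univ.erase j,
          (x i * S x i - w i * Real.log (x i * S x i))
        + (x j * S x j - w j * Real.log (x j * S x j)) = Ψ x :=
      Finset.sum_erase_add _ _ (Finset.mem_univ j)
    have hlb : ∑ i ∈ Finset.univ.erase j, (w i - w i * Real.log (w i))
        ≤ ∑ i ∈ Finset.univ.erase j, (x i * S x i - w i * Real.log (x i * S x i)) :=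
      Finset.sum_le_sum fun i _ => phi_lb (hprod_pos x hx i) (hw i)
    have hclow_split : ∑ i ∈ Finset.univ.erase j, (w i - w i * Real.log (w i))
        + (w j - w j * Real.log (w j)) = clow :=
      Finset.sum_erase_add _ _ (Finset.mem_univ j)
    simp only [cj]
    linarith
  have hbounds : ∀ x ∈ D, Ψ x ≤ c → ∀ j,
      aj j ≤ x j * S x j ∧ x j * S x j ≤ bj j := by
    intro x hx hΨx j
    exact ⟨phi_sublevel_lb (hprod_pos x hx j) (hw j) (hterm_le x hx hΨx j),
      phi_sublevel_ub (hprod_pos x hx j) (hw j) (hterm_le x hx hΨx j)⟩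
  have hfeasbd : ∀ x ∈ D, ∑ i, (xh i * S x i + x i * sh i)
      ≤ ∑ i, x i * S x i + ∑ i, xh i * sh i := by
    intro x hx
    have h0 : (0:ℝ) ≤ ∑ i, (x i - xh i) * (S x i - sh i) := by
      have hMnn := hM (x - xh)
      have heq : ∀ i, M.mulVec (x - xh) i = S x i - sh i := by
        intro i
        rw [Matrix.mulVec_sub]
        have := hSh i
        simp only [Pi.sub_apply, S] at *
        linarith
      calc (0:ℝ) ≤ (x - xh) ⬝ᵥ M.mulVec (x - xh) := hMnn
        _ = ∑ i, (x - xh) i * (M.mulVec (x - xh)) i := rfl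
        _ = ∑ i, (x i - xh i) * (S x i - sh i) := by
            refine Finset.sum_congr rfl fun i _ => ?_
            rw [Pi.sub_apply, heq i]
    have hexp : ∑ i, (x i - xh i) * (S x i - sh i)
        = ∑ i, x i * S x i + ∑ i, xh i * sh i - ∑ i, (xh i * S x i + x i * sh i) := by
      rw [← Finset.sum_add_distrib, ← Finset.sum_sub_distrib]
      apply Finset.sum_congr rfl
      intro i _; ring
    linarith [hexp ▸ h0]
  set B : ℝ := ∑ i, bj i + ∑ i, xh i * sh i with hBdef
  have hΨxh : Ψ xh ≤ c := le_refl _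
  have hbjpos : ∀ j, 0 < bj j :=
    fun j => lt_of_lt_of_le (hprod_pos xh hxhD j) (hbounds xh hxhD hΨxh j).2
  have hBpos : ∀ _ : Fin n, 0 < B := by
    intro j
    have h1 : (0:ℝ) < ∑ i, bj i :=
      Finset.sum_pos (fun i _ => hbjpos i) ⟨j, Finset.mem_univ j⟩
    have h2 : (0:ℝ) ≤ ∑ i, xh i * sh i :=
      Finset.sum_nonneg fun i _ => (mul_pos (hxh i) (hsh i)).le
    simp only [B]; linarith
  have hxub : ∀ x ∈ D, Ψ x ≤ c → ∀ j, x j ≤ B / sh j ∧ S x j ≤ B / xh j := by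
    intro x hx hΨx j
    have hsum_t : ∑ i, x i * S x i ≤ ∑ i, bj i :=
      Finset.sum_le_sum fun i _ => (hbounds x hx hΨx i).2
    have hfb := hfeasbd x hx
    have hnn : ∀ i ∈ Finset.univ, (0:ℝ) ≤ xh i * S x i + x i * sh i := by
      intro i _
      have := hxh i; have := hx.1 i; have := hx.2 i; have := hsh i
      positivity
    have hone : xh j * S x j + x j * sh j ≤ ∑ i, (xh i * S x i + x i * sh i) :=
      Finset.single_le_sum hnn (Finset.mem_univ j)
    have hB : xh j * S x j + x j * sh j ≤ B := by simp only [B]; linarith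
    constructor
    · rw [le_div_iff₀ (hsh j)]
      nlinarith [mul_pos (hxh j) (hx.2 j)]
    · rw [le_div_iff₀ (hxh j)]
      nlinarith [mul_pos (hx.1 j) (hsh j)]
  have hxlb : ∀ x ∈ D, Ψ x ≤ c → ∀ j,
      aj j * xh j / B ≤ x j ∧ aj j * sh j / B ≤ S x j := by
    intro x hx hΨx j
    have ha := (hbounds x hx hΨx j).1
    have h1 := (hxub x hx hΨx j).1
    have h2 := (hxub x hx hΨx j).2
    have hB := hBpos j
    constructor
    · rw [div_le_iff₀ hB]
      have hs' : S x j * xh j ≤ B := by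
        rw [le_div_iff₀ (hxh j)] at h2; linarith
      nlinarith [hx.1 j, hx.2 j, hxh j]
    · rw [div_le_iff₀ hB]
      have hx' : x j * sh j ≤ B := by
        rw [le_div_iff₀ (hsh j)] at h1; linarith
      nlinarith [hx.1 j, hx.2 j, hsh j]
  set K' : Set (Fin n → ℝ) :=
    ⋂ j, ((fun x : Fin n → ℝ => x j) ⁻¹' Set.Icc (aj j * xh j / B) (B / sh j)
      ∩ (fun x : Fin n → ℝ => S x j) ⁻¹' Set.Icc (aj j * sh j / B) (B / xh j)) with hK'def
  have hK'mem : ∀ x, x ∈ K' ↔ ∀ j, (aj j * xh j / B ≤ x j ∧ x j ≤ B / sh j)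
      ∧ (aj j * sh j / B ≤ S x j ∧ S x j ≤ B / xh j) := by
    intro x
    simp [K', Set.mem_iInter, Set.mem_Icc]
  have hK'closed : IsClosed K' :=
    isClosed_iInter fun j =>
      (isClosed_Icc.preimage (continuous_apply j)).inter (isClosed_Icc.preimage (hScont j))
  have hK'cpt : IsCompact K' := by
    refine IsCompact.of_isClosed_subset
      (isCompact_univ_pi fun j => isCompact_Icc (a := aj j * xh j / B) (b := B / sh j))
      hK'closed ?_
    intro x hx
    rw [Set.mem_univ_pi]
    intro j
    have := (hK'mem x).1 hx j
    exact ⟨this.1.1, this.1.2⟩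
  have hK'D : K' ⊆ D := by
    intro x hx
    rw [hK'mem] at hx
    constructor
    · intro j
      have hB := hBpos j
      have hpos : 0 < aj j * xh j / B := by
        have := hajpos j; have := hxh j; positivity
      exact lt_of_lt_of_le hpos (hx j).1.1
    · intro j
      have hB := hBpos j
      have hpos : 0 < aj j * sh j / B := by
        have := hajpos j; have := hsh j; positivity
      exact lt_of_lt_of_le hpos (hx j).2.1
  have hsubK' : ∀ x ∈ D, Ψ x ≤ c → x ∈ K' := by
    intro x hx hΨx
    rw [hK'mem]
    intro j
    exact ⟨⟨(hxlb x hx hΨx j).1, (hxub x hx hΨx j).1⟩,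
      ⟨(hxlb x hx hΨx j).2, (hxub x hx hΨx j).2⟩⟩
  set K : Set (Fin n → ℝ) := K' ∩ Ψ ⁻¹' Set.Iic c with hKdef
  have hKclosed : IsClosed K :=
    ContinuousOn.preimage_isClosed_of_isClosed
      (fun x hx => (hΨcont x (hK'D hx)).continuousWithinAt) hK'closed isClosed_Iic
  have hKcpt : IsCompact K := hK'cpt.of_isClosed_subset hKclosed Set.inter_subset_left
  have hxhK : xh ∈ K := ⟨hsubK' xh hxhD hΨxh, hΨxh⟩
  obtain ⟨xs, hxsK, hmin⟩ := hKcpt.exists_isMinOn ⟨xh, hxhK⟩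
    (fun x hx => (hΨcont x (hK'D hx.1)).continuousWithinAt)
  have hxsD : xs ∈ D := hK'D hxsK.1
  have hminD : ∀ x ∈ D, Ψ xs ≤ Ψ x := by
    intro x hx
    by_cases hle : Ψ x ≤ c
    · exact (isMinOn_iff.1 hmin) x ⟨hsubK' x hx hle, hle⟩
    · push_neg at hle
      have h1 : Ψ xs ≤ c := hxsK.2
      linarith
  have hlocal : IsLocalMin Ψ xs := (hDmem xs hxsD).mono fun y hy => hminD y hy
  -- derivative along coordinate directions
  have hSline : ∀ (x : Fin n → ℝ) (t : ℝ) (j i), S (x + t • (Pi.single j 1 : Fin n → ℝ)) i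
      = S x i + t * M i j := by
    intro x t j i
    simp only [S, Matrix.mulVec_add, Matrix.mulVec_smul, Matrix.mulVec_single,
      Pi.add_apply, Pi.smul_apply, smul_eq_mul, mul_one, MulOpposite.op_one, one_smul,
      Matrix.col_apply]
    ring
  have hcrit : ∀ j, ∑ i, (((Pi.single j 1 : Fin n → ℝ) i) * S xs i + xs i * M i j)
      * (1 - w i / (xs i * S xs i)) = 0 := by
    intro j
    have h00 : xs + (0:ℝ) • (Pi.single j 1 : Fin n → ℝ) = xs := by simp
    have hg : IsLocalMin (fun t : ℝ => Ψ (xs + t • (Pi.single j 1 : Fin n → ℝ))) 0 := by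
      have hcl : ContinuousAt (fun t : ℝ => xs + t • (Pi.single j 1 : Fin n → ℝ)) 0 := by fun_prop
      have htd := hcl.tendsto
      rw [h00] at htd
      exact (htd.eventually hlocal).mono fun t ht => by simpa [h00] using ht
    have hfun : (fun t : ℝ => Ψ (xs + t • (Pi.single j 1 : Fin n → ℝ))) =
        fun t => ∑ i, ((xs i + t * (Pi.single j 1 : Fin n → ℝ) i) * (S xs i + t * M i j)
          - w i * Real.log ((xs i + t * (Pi.single j 1 : Fin n → ℝ) i) * (S xs i + t * M i j))) := by
      funext t
      simp only [hΨdef]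
      refine Finset.sum_congr rfl fun i _ => ?_
      rw [hSline xs t j i]
      simp [Pi.add_apply, Pi.smul_apply, smul_eq_mul]
    have hder : HasDerivAt (fun t : ℝ => Ψ (xs + t • (Pi.single j 1 : Fin n → ℝ)))
        (∑ i, (((Pi.single j 1 : Fin n → ℝ) i) * S xs i + xs i * M i j)
          * (1 - w i / (xs i * S xs i))) 0 := by
      rw [hfun]
      apply HasDerivAt.fun_sum
      intro i _
      have hA : HasDerivAt (fun t : ℝ => xs i + t * (Pi.single j 1 : Fin n → ℝ) i)
          ((Pi.single j 1 : Fin n → ℝ) i) 0 := (hasDerivAt_mul_const _).const_add _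
      have hB2 : HasDerivAt (fun t : ℝ => S xs i + t * M i j) (M i j) 0 :=
        (hasDerivAt_mul_const _).const_add _
      have hAB := hA.mul hB2
      have hne : (xs i + 0 * (Pi.single j 1 : Fin n → ℝ) i) * (S xs i + 0 * M i j) ≠ 0 := by
        simpa using (hprod_pos xs hxsD i).ne'
      have hlog := hAB.log hne
      have hcomb := hAB.sub (hlog.const_mul (w i))
      convert hcomb using 1
      · rfl
      simp only [zero_mul, add_zero, Pi.mul_apply]
      have h1 := (hprod_pos xs hxsD i).ne'
      field_simp
    have h0 := hg.deriv_eq_zero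
    rw [hder.deriv] at h0
    exact h0
  have hcrit' : ∀ j, (xs j * S xs j - w j)/(xs j)
      + ∑ i, M i j * ((xs i * S xs i - w i)/(S xs i)) = 0 := by
    intro j
    have hsc : ∀ i ∈ Finset.univ, (((Pi.single j 1 : Fin n → ℝ) i) * S xs i + xs i * M i j)
        * (1 - w i / (xs i * S xs i))
        = (if i = j then (xs i * S xs i - w i)/(xs i) else 0)
          + M i j * ((xs i * S xs i - w i)/(S xs i)) := by
      intro i _
      have hxi := (hxsD.1 i).ne'
      have hSi := (hxsD.2 i).ne'
      rcases eq_or_ne i j with rfl | hij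
      · rw [Pi.single_eq_same, if_pos rfl]
        field_simp
      · rw [Pi.single_eq_of_ne hij, if_neg hij]
        field_simp
        ring
    have h0 := hcrit j
    rw [Finset.sum_congr rfl hsc, Finset.sum_add_distrib,
      Finset.sum_ite_eq' Finset.univ j, if_pos (Finset.mem_univ j)] at h0
    exact h0
  set u : Fin n → ℝ := fun i => (xs i * S xs i - w i)/(S xs i) with hudef
  have hsum0 : ∑ j, (u j * ((xs j * S xs j - w j)/(xs j)) + u j * ∑ i, M i j * u i) = 0 := by
    apply Finset.sum_eq_zero
    intro j _
    have := hcrit' j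
    have hexpand : u j * ((xs j * S xs j - w j)/(xs j)) + u j * ∑ i, M i j * u i
        = u j * ((xs j * S xs j - w j)/(xs j) + ∑ i, M i j * u i) := by ring
    rw [hexpand, this, mul_zero]
  have hquad : ∑ j, u j * ∑ i, M i j * u i = u ⬝ᵥ M.mulVec u := by
    simp only [dotProduct, Matrix.mulVec, Finset.mul_sum]
    rw [Finset.sum_comm]
    exact Finset.sum_congr rfl fun i _ => Finset.sum_congr rfl fun j _ => by ring
  have hnn1 : ∀ j ∈ Finset.univ, (0:ℝ) ≤ u j * ((xs j * S xs j - w j)/(xs j)) := by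
    intro j _
    have hxj := hxsD.1 j
    have hSj := hxsD.2 j
    have hx0 : xs j ≠ 0 := hxj.ne'
    have hS0 : S xs j ≠ 0 := hSj.ne'
    have hval : u j * ((xs j * S xs j - w j)/(xs j))
        = (xs j * S xs j - w j)^2 / (S xs j * xs j) := by
      rw [show u j = (xs j * S xs j - w j) / (S xs j) from rfl, div_mul_div_comm, ← pow_two]
    rw [hval]
    positivity
  have hA0 : ∑ j, u j * ((xs j * S xs j - w j)/(xs j)) = 0 := by
    have hsplit : ∑ j, (u j * ((xs j * S xs j - w j)/(xs j)) + u j * ∑ i, M i j * u i)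
        = ∑ j, u j * ((xs j * S xs j - w j)/(xs j)) + ∑ j, u j * ∑ i, M i j * u i :=
      Finset.sum_add_distrib
    have hQ : (0:ℝ) ≤ ∑ j, u j * ∑ i, M i j * u i := by rw [hquad]; exact hM u
    have hA : (0:ℝ) ≤ ∑ j, u j * ((xs j * S xs j - w j)/(xs j)) :=
      Finset.sum_nonneg hnn1
    rw [hsplit] at hsum0
    linarith
  have hyzero : ∀ j, xs j * S xs j = w j := by
    intro j
    have h0 := (Finset.sum_eq_zero_iff_of_nonneg hnn1).1 hA0 j (Finset.mem_univ j)
    have hx0 : xs j ≠ 0 := (hxsD.1 j).ne'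
    have hS0 : S xs j ≠ 0 := (hxsD.2 j).ne'
    have hval : u j * ((xs j * S xs j - w j)/(xs j))
        = (xs j * S xs j - w j)^2 / (S xs j * xs j) := by
      rw [show u j = (xs j * S xs j - w j) / (S xs j) from rfl, div_mul_div_comm, ← pow_two]
    rw [hval] at h0
    have hd : S xs j * xs j ≠ 0 := mul_ne_zero hS0 hx0
    have h2 : (xs j * S xs j - w j)^2 = 0 := (div_eq_zero_iff.1 h0).resolve_right hd
    have h3 := pow_eq_zero_iff (n := 2) (by norm_num) |>.1 h2
    linarith
  exact ⟨xs, S xs, hxsD.1, hxsD.2, hSq xs, hyzero⟩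

lemma uniq_center {n : ℕ} {M : Matrix (Fin n) (Fin n) ℝ}
    (hM : ∀ u : Fin n → ℝ, 0 ≤ u ⬝ᵥ M.mulVec u) {q : Fin n → ℝ}
    {w : Fin n → ℝ} (hw : ∀ i, 0 < w i)
    {x s x' s' : Fin n → ℝ} (hx : ∀ i, 0 < x i) (hs : ∀ i, 0 < s i)
    (hx' : ∀ i, 0 < x' i) (hs' : ∀ i, 0 < s' i)
    (he : -(M.mulVec x) + s = q) (he' : -(M.mulVec x') + s' = q)
    (hc : ∀ i, x i * s i = w i) (hc' : ∀ i, x' i * s' i = w i) :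
    x = x' ∧ s = s' := by
  have hss : s - s' = M.mulVec (x - x') := by
    rw [Matrix.mulVec_sub]
    have h1 : s = M.mulVec x + q := by rw [← he]; abel
    have h2 : s' = M.mulVec x' + q := by rw [← he']; abel
    rw [h1, h2]; abel
  have h0 : (0:ℝ) ≤ ∑ i, (x i - x' i) * (s i - s' i) := by
    have := hM (x - x')
    rw [← hss] at this
    simpa [dotProduct, Pi.sub_apply] using this
  have hterm : ∀ i ∈ Finset.univ, (x i - x' i) * (s i - s' i) ≤ 0 := by
    intro i _
    nlinarith [sq_nonneg (x i * s' i - x' i * s i), hw i, hc i, hc' i,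
      mul_pos (hx i) (hs' i), mul_pos (hx' i) (hs i)]
  have hsum0 : ∑ i, (x i - x' i) * (s i - s' i) = 0 :=
    le_antisymm (Finset.sum_nonpos hterm) h0
  have hzero : ∀ i, (x i - x' i) * (s i - s' i) = 0 := by
    intro i
    exact (Finset.sum_eq_zero_iff_of_nonpos hterm).1 hsum0 i (Finset.mem_univ i)
  have hkey : ∀ i, x i * s' i = w i ∧ x' i * s i = w i := by
    intro i
    have h1 := hzero i
    constructor <;>
      nlinarith [hc i, hc' i, hw i, sq_nonneg (x i * s' i - w i), sq_nonneg (x' i * s i - w i),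
        mul_pos (hx i) (hs' i), mul_pos (hx' i) (hs i)]
  constructor <;> funext i
  · have h1 := (hkey i).2
    have h2 := hc i
    have := hs i
    nlinarith
  · have h1 := (hkey i).1
    have h2 := hc i
    have := hx i
    nlinarith



/-- Theorem 3.2 (closed form of the control barrier function): existence and uniqueness of the
analytic center `(x(w), s(w))`, the value of the barrier there, and its minimality. -/
theorem stmt_0 (n : ℕ) (M : Matrix (Fin n) (Fin n) ℝ)
    (hM : ∀ u : Fin n → ℝ, 0 ≤ u ⬝ᵥ M.mulVec u)
    (q : Fin n → ℝ)
    (hfeas : ∃ x s : Fin n → ℝ, (∀ i, 0 < x i) ∧ (∀ i, 0 < s i) ∧ -(M.mulVec x) + s = q)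
    (v0 : ℝ) (v : Fin n → ℝ) (hw : ∑ i, (v i) ^ 2 < v0)
    (ρ : ℝ) (hρ : ρ = (v0 - ∑ i, (v i) ^ 2) / ((n : ℝ) + 1))
    (F : (Fin n → ℝ) → (Fin n → ℝ) → ℝ)
    (hF : ∀ x s : Fin n → ℝ,
      F x s = -Real.log (v0 - ∑ i, x i * s i) - ∑ i, Real.log (x i * s i - (v i) ^ 2)) :
    (∃! p : (Fin n → ℝ) × (Fin n → ℝ),
      (∀ i, 0 < p.1 i) ∧ (∀ i, 0 < p.2 i) ∧ -(M.mulVec p.1) + p.2 = q ∧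
      ∀ i, p.1 i * p.2 i = (v i) ^ 2 + ρ) ∧
    (∀ x s : Fin n → ℝ, (∀ i, 0 < x i) → (∀ i, 0 < s i) → -(M.mulVec x) + s = q →
      (∀ i, x i * s i = (v i) ^ 2 + ρ) →
      F x s = -((n : ℝ) + 1) * Real.log ρ) ∧
    (∀ x s : Fin n → ℝ, (∀ i, 0 < x i) → (∀ i, 0 < s i) → -(M.mulVec x) + s = q →
      (∀ i, (v i) ^ 2 < x i * s i) → (∑ i, x i * s i) < v0 →
      -((n : ℝ) + 1) * Real.log ρ ≤ F x s) := by
  have hn1 : (0:ℝ) < (n:ℝ) + 1 := by positivity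
  have hρpos : 0 < ρ := by rw [hρ]; exact div_pos (by linarith) hn1
  have hρeq : v0 - ∑ i, (v i)^2 = ((n:ℝ)+1) * ρ := by
    rw [hρ]; field_simp
  have hwpos : ∀ i, 0 < (v i)^2 + ρ := fun i => by positivity
  refine ⟨?_, ?_, ?_⟩
  · -- existence and uniqueness
    obtain ⟨x, s, hx, hs, he, hc⟩ := exists_center hM hfeas hwpos
    refine ⟨(x, s), ⟨hx, hs, he, hc⟩, ?_⟩
    rintro ⟨x', s'⟩ ⟨hx', hs', he', hc'⟩
    obtain ⟨h1, h2⟩ := uniq_center hM hwpos hx' hs' hx hs he' he hc' hc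
    exact Prod.ext h1 h2
  · -- value at the center
    intro x s hx hs he hc
    have hsum : ∑ i, x i * s i = ∑ i, (v i)^2 + (n:ℝ) * ρ := by
      simp [hc, Finset.sum_add_distrib]
    have ht0 : v0 - ∑ i, x i * s i = ρ := by rw [hsum]; linarith [hρeq]
    rw [hF, ht0]
    have : ∀ i ∈ Finset.univ, Real.log (x i * s i - (v i)^2) = Real.log ρ := by
      intro i _; rw [hc i]; ring_nf
    rw [Finset.sum_congr rfl this]
    simp only [Finset.sum_const, Finset.card_univ, Fintype.card_fin, nsmul_eq_mul]
    ring
  · -- minimality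
    intro x s hx hs he hlt hub
    rw [hF]
    have h0 : Real.log (v0 - ∑ i, x i * s i) ≤ Real.log ρ + ((v0 - ∑ i, x i * s i) - ρ)/ρ :=
      log_le_aux (by linarith) hρpos
    have hi : ∀ i ∈ Finset.univ,
        Real.log (x i * s i - (v i)^2) ≤ Real.log ρ + ((x i * s i - (v i)^2) - ρ)/ρ := by
      intro i _; exact log_le_aux (by linarith [hlt i]) hρpos
    have hsum := Finset.sum_le_sum hi
    have hsplit : ∑ i, (Real.log ρ + ((x i * s i - (v i)^2) - ρ)/ρ)
        = (n:ℝ) * Real.log ρ + ((∑ i, x i * s i) - (∑ i, (v i)^2) - (n:ℝ)*ρ)/ρ := by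
      simp only [Finset.sum_add_distrib, Finset.sum_div, Finset.sum_sub_distrib,
        Finset.sum_const, Finset.card_univ, Fintype.card_fin, nsmul_eq_mul, sub_div]
      ring
    have key : Real.log (v0 - ∑ i, x i * s i) + ∑ i, Real.log (x i * s i - (v i)^2)
        ≤ ((n:ℝ)+1) * Real.log ρ := by
      have htot : ((v0 - ∑ i, x i * s i) - ρ)/ρ
          + ((∑ i, x i * s i) - (∑ i, (v i)^2) - (n:ℝ)*ρ)/ρ = 0 := by
        rw [← add_div]
        have : (v0 - ∑ i, x i * s i) - ρ + ((∑ i, x i * s i) - (∑ i, (v i)^2) - (n:ℝ)*ρ) = 0 := by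
          linarith [hρeq]
        rw [this, zero_div]
      calc Real.log (v0 - ∑ i, x i * s i) + ∑ i, Real.log (x i * s i - (v i)^2)
          ≤ (Real.log ρ + ((v0 - ∑ i, x i * s i) - ρ)/ρ)
            + ((n:ℝ) * Real.log ρ + ((∑ i, x i * s i) - (∑ i, (v i)^2) - (n:ℝ)*ρ)/ρ) := by
            rw [← hsplit]; exact add_le_add h0 hsum
        _ = ((n:ℝ)+1) * Real.log ρ := by linarith [htot]
    linarith
end

section
/- Let M be an n×n positive semidefinite real matrix and q ∈ ℝⁿ, and suppose there exists a strictly feasible pair (x̂, ŝ) with x̂, ŝ > 0 componentwise and −M x̂ + ŝ = q. Then the solution set F* = {(x, s) : x, s ≥ 0, −M x + s = q, xᵢ sᵢ = 0 for all i} is nonempty and bounded. -/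
open scoped Matrix


lemma lcp_bound {n : ℕ} (A : Matrix (Fin n) (Fin n) ℝ)
    (hA : ∀ u : Fin n → ℝ, 0 ≤ u ⬝ᵥ A.mulVec u) {q xh sh x s : Fin n → ℝ}
    (hxh : ∀ i, 0 < xh i) (hsh : ∀ i, 0 < sh i)
    (heqh : -(A.mulVec xh) + sh = q)
    (hx : ∀ i, 0 ≤ x i) (hs : ∀ i, 0 ≤ s i)
    (heq : -(A.mulVec x) + s = q) (hcomp : ∀ i, x i * s i = 0) :
    (∀ i, x i * sh i ≤ xh ⬝ᵥ sh) ∧ (∀ i, xh i * s i ≤ xh ⬝ᵥ sh) := by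
  have h1 : A.mulVec x = s - q := by rw [← heq]; abel
  have h2 : A.mulVec xh = sh - q := by rw [← heqh]; abel
  have hAd : A.mulVec (x - xh) = s - sh := by
    rw [Matrix.mulVec_sub, h1, h2]; abel
  have h0 := hA (x - xh)
  rw [hAd, sub_dotProduct, dotProduct_sub, dotProduct_sub] at h0
  have hxs : x ⬝ᵥ s = 0 := by
    simp only [dotProduct]
    exact Finset.sum_eq_zero fun i _ => hcomp i
  have hxsh : ∀ i, x i * sh i ≤ x ⬝ᵥ sh := fun i =>
    Finset.single_le_sum (fun j _ => mul_nonneg (hx j) (hsh j).le) (Finset.mem_univ i)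
  have hxhs : ∀ i, xh i * s i ≤ xh ⬝ᵥ s := fun i =>
    Finset.single_le_sum (fun j _ => mul_nonneg (hxh j).le (hs j)) (Finset.mem_univ i)
  have hn1 : 0 ≤ x ⬝ᵥ sh := Finset.sum_nonneg fun j _ => mul_nonneg (hx j) (hsh j).le
  have hn2 : 0 ≤ xh ⬝ᵥ s := Finset.sum_nonneg fun j _ => mul_nonneg (hxh j).le (hs j)
  constructor
  · intro i; have := hxsh i; linarith
  · intro i; have := hxhs i; linarith


set_option maxHeartbeats 1000000 in
lemma lcp_exists_reg {n : ℕ} (A : Matrix (Fin n) (Fin n) ℝ) {ε : ℝ} (hε : 0 < ε)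
    (hA : ∀ u : Fin n → ℝ, ε * (u ⬝ᵥ u) ≤ u ⬝ᵥ A.mulVec u) (q : Fin n → ℝ) :
    ∃ x : Fin n → ℝ, (∀ i, 0 ≤ x i) ∧ (∀ i, 0 ≤ A.mulVec x i + q i) ∧
      (∀ i, x i * (A.mulVec x i + q i) = 0) := by
  classical
  let E := EuclideanSpace ℝ (Fin n)
  let e := WithLp.linearEquiv 2 ℝ (Fin n → ℝ)
  let lin : E →ₗ[ℝ] E := e.symm.toLinearMap ∘ₗ A.mulVecLin ∘ₗ e.toLinearMap
  let B : E →L[ℝ] E := LinearMap.toContinuousLinearMap lin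
  have hBapp : ∀ (x : E) (i : Fin n), B x i = A.mulVec (e x) i := fun x i => rfl
  have hinner : ∀ x y : E, (inner ℝ x y : ℝ) = (e x) ⬝ᵥ (e y) := by
    intro x y
    simp [PiLp.inner_apply, RCLike.inner_apply, dotProduct]
    exact Finset.sum_congr rfl fun i _ => by simp [mul_comm]; rfl
  have hnormsq : ∀ x : E, ‖x‖ ^ 2 = (e x) ⬝ᵥ (e x) := by
    intro x; rw [← real_inner_self_eq_norm_sq, hinner]
  set L : ℝ := ‖B‖ + ε + 1 with hLdef
  have hBnn : (0:ℝ) ≤ ‖B‖ := norm_nonneg B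
  have hL : 0 < L := by positivity
  have hεL : ε < L := by linarith
  set γ : ℝ := ε / L ^ 2 with hγdef
  have hγ : 0 < γ := by positivity
  set c : ℝ := 1 - ε ^ 2 / L ^ 2 with hcdef
  have hc0 : 0 ≤ c := by
    have h2 : ε ^ 2 / L ^ 2 < 1 := (div_lt_one (by positivity)).2 (by nlinarith)
    simp only [hcdef]; linarith
  have hc1 : c < 1 := by
    have : 0 < ε ^ 2 / L ^ 2 := by positivity
    simp only [hcdef]; linarith
  set k : ℝ := Real.sqrt c with hkdef
  have hk0 : 0 ≤ k := Real.sqrt_nonneg c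
  have hk1 : k < 1 := by
    calc k < Real.sqrt 1 := Real.sqrt_lt_sqrt hc0 hc1
    _ = 1 := Real.sqrt_one
  set K : NNReal := ⟨k, hk0⟩ with hKdef
  have hK1 : K < 1 := by exact_mod_cast hk1
  let qE : E := e.symm q
  let P : E → E := fun x => e.symm (fun i => max (e x i) 0)
  let T : E → E := fun x => P (x - γ • (B x + qE))
  have hTapp : ∀ (x : E) (i : Fin n),
      T x i = max (x i - γ * (A.mulVec (e x) i + q i)) 0 := by
    intro x i
    show (e.symm (fun j => max (e (x - γ • (B x + qE)) j) 0)) i = _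
    have h1 : e (x - γ • (B x + qE)) i = x i - γ * (A.mulVec (e x) i + q i) := by
      show (x - γ • (B x + qE)) i = _
      rw [PiLp.sub_apply, PiLp.smul_apply, PiLp.add_apply, hBapp]
      have hq : qE i = q i := rfl
      rw [hq, smul_eq_mul]
    show max (e (x - γ • (B x + qE)) i) 0 = _
    rw [h1]
  have hlip : ∀ x y : E, dist (T x) (T y) ≤ k * dist x y := by
    intro x y
    set d : E := x - y with hd
    set u : E := x - γ • (B x + qE) with hu
    set v : E := y - γ • (B y + qE) with hv
    have huv : u - v = d - γ • B d := by
      simp only [hu, hv, hd, map_sub, smul_add, smul_sub]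
      abel
    -- step A : ‖T x - T y‖ ≤ ‖u - v‖
    have stepA : ‖T x - T y‖ ≤ ‖u - v‖ := by
      rw [EuclideanSpace.norm_eq, EuclideanSpace.norm_eq]
      apply Real.sqrt_le_sqrt
      apply Finset.sum_le_sum
      intro i _
      apply pow_le_pow_left₀ (norm_nonneg _)
      rw [PiLp.sub_apply, PiLp.sub_apply]
      have hx' : T x i = max (u i) 0 := hTapp x i
      have hy' : T y i = max (v i) 0 := hTapp y i
      rw [hx', hy']
      calc ‖max (u i) 0 - max (v i) 0‖ ≤ |u i - v i| := abs_max_sub_max_le_abs _ _ _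
      _ = ‖u i - v i‖ := rfl
    -- step C : ‖d - γ • B d‖ ≤ k * ‖d‖
    have hBd : ‖B d‖ ≤ L * ‖d‖ := by
      calc ‖B d‖ ≤ ‖B‖ * ‖d‖ := B.le_opNorm d
      _ ≤ L * ‖d‖ := by nlinarith [norm_nonneg d]
    have hmono : ε * ‖d‖ ^ 2 ≤ inner ℝ d (B d) := by
      rw [hinner, hnormsq]
      have h := hA (e d)
      have : e (B d) = A.mulVec (e d) := rfl
      rw [this]
      exact h
    have hsq : ‖d - γ • B d‖ ^ 2 ≤ c * ‖d‖ ^ 2 := by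
      rw [norm_sub_sq_real]
      have h1 : inner ℝ d (γ • B d) = γ * (inner ℝ d (B d) : ℝ) := real_inner_smul_right d (B d) γ
      have h2 : ‖γ • B d‖ = γ * ‖B d‖ := by
        rw [norm_smul]; simp [abs_of_pos hγ]
      rw [h1, h2]
      have h3 : (γ * ‖B d‖) ^ 2 ≤ γ ^ 2 * L ^ 2 * ‖d‖ ^ 2 := by
        have h3' : ‖B d‖ * ‖B d‖ ≤ (L * ‖d‖) * (L * ‖d‖) :=
          mul_self_le_mul_self (norm_nonneg _) hBd
        nlinarith [sq_nonneg γ]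
      have h4 : γ * (inner ℝ d (B d) : ℝ) ≥ γ * (ε * ‖d‖ ^ 2) :=
        mul_le_mul_of_nonneg_left hmono hγ.le
      have hLne : L ≠ 0 := ne_of_gt hL
      have hfact : 1 - 2 * γ * ε + γ ^ 2 * L ^ 2 = c := by
        simp only [hγdef, hcdef]; field_simp; ring
      calc ‖d‖ ^ 2 - 2 * (γ * (inner ℝ d (B d) : ℝ)) + (γ * ‖B d‖) ^ 2
          ≤ ‖d‖ ^ 2 - 2 * (γ * (ε * ‖d‖ ^ 2)) + γ ^ 2 * L ^ 2 * ‖d‖ ^ 2 := by linarith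
        _ = c * ‖d‖ ^ 2 := by rw [← hfact]; ring
    have stepC : ‖d - γ • B d‖ ≤ k * ‖d‖ := by
      have := Real.sqrt_le_sqrt hsq
      rw [Real.sqrt_sq (norm_nonneg _), Real.sqrt_mul hc0, Real.sqrt_sq (norm_nonneg _)] at this
      exact this
    calc dist (T x) (T y) = ‖T x - T y‖ := dist_eq_norm _ _
    _ ≤ ‖u - v‖ := stepA
    _ = ‖d - γ • B d‖ := by rw [huv]
    _ ≤ k * ‖d‖ := stepC
    _ = k * dist x y := by rw [hd, dist_eq_norm]
  have hcT : ContractingWith K T := ⟨hK1, LipschitzWith.of_dist_le_mul hlip⟩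
  haveI : Nonempty E := ⟨0⟩
  let x0 : E := ContractingWith.fixedPoint T hcT
  have hfix : T x0 = x0 := hcT.fixedPoint_isFixedPt
  refine ⟨e x0, ?_, ?_, ?_⟩ <;> intro i <;>
    have hi : max (x0 i - γ * (A.mulVec (e x0) i + q i)) 0 = x0 i := by
      rw [← hTapp]; exact congrArg (fun z : E => z i) hfix
  · exact le_of_le_of_eq (le_max_right _ _) hi
  · rcases le_or_gt (x0 i - γ * (A.mulVec (e x0) i + q i)) 0 with h | h
    · rw [max_eq_right h] at hi
      have hxi : x0 i = 0 := hi.symm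
      rw [hxi] at h
      nlinarith
    · rw [max_eq_left h.le] at hi
      have h0 : γ * (A.mulVec (e x0) i + q i) = 0 := by linarith [hi]
      nlinarith
  · rcases le_or_gt (x0 i - γ * (A.mulVec (e x0) i + q i)) 0 with h | h
    · rw [max_eq_right h] at hi
      have hx0 : e x0 i = 0 := hi.symm
      rw [hx0]; ring
    · rw [max_eq_left h.le] at hi
      have h0 : γ * (A.mulVec (e x0) i + q i) = 0 := by linarith [hi]
      have h1 : A.mulVec (e x0) i + q i = 0 := by
        rcases mul_eq_zero.mp h0 with h' | h'
        · exact absurd h' (ne_of_gt hγ)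
        · exact h'
      rw [h1]; ring

/-- If the monotone LCP has a strictly feasible pair, then its solution set is
nonempty and bounded. -/
theorem stmt_1 (n : ℕ) (M : Matrix (Fin n) (Fin n) ℝ)
    (hM : ∀ u : Fin n → ℝ, 0 ≤ u ⬝ᵥ M.mulVec u)
    (q : Fin n → ℝ)
    (hfeas : ∃ x s : Fin n → ℝ, (∀ i, 0 < x i) ∧ (∀ i, 0 < s i) ∧ -(M.mulVec x) + s = q) :
    ({p : (Fin n → ℝ) × (Fin n → ℝ) |
        (∀ i, 0 ≤ p.1 i) ∧ (∀ i, 0 ≤ p.2 i) ∧ -(M.mulVec p.1) + p.2 = q ∧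
        ∀ i, p.1 i * p.2 i = 0}).Nonempty ∧
    Bornology.IsBounded {p : (Fin n → ℝ) × (Fin n → ℝ) |
        (∀ i, 0 ≤ p.1 i) ∧ (∀ i, 0 ≤ p.2 i) ∧ -(M.mulVec p.1) + p.2 = q ∧
        ∀ i, p.1 i * p.2 i = 0} := by
  obtain ⟨xh, sh, hxh, hsh, heqh⟩ := hfeas
  have hC : (0:ℝ) ≤ xh ⬝ᵥ sh :=
    Finset.sum_nonneg fun j _ => mul_nonneg (hxh j).le (hsh j).le
  have hxx : (0:ℝ) ≤ xh ⬝ᵥ xh :=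
    Finset.sum_nonneg fun j _ => mul_nonneg (hxh j).le (hxh j).le
  set C₀ : ℝ := xh ⬝ᵥ sh + xh ⬝ᵥ xh with hC₀def
  have hC₀ : 0 ≤ C₀ := by linarith
  constructor
  · -- Nonemptiness
    -- the regularized sequence
    have hex : ∀ m : ℕ, ∃ x : Fin n → ℝ,
        (∀ i, 0 ≤ x i) ∧
        (∀ i, 0 ≤ (M + (1/(m+1:ℝ)) • 1).mulVec x i + q i) ∧
        (∀ i, x i * ((M + (1/(m+1:ℝ)) • 1).mulVec x i + q i) = 0) := by
      intro m
      have hεm : (0:ℝ) < 1/(m+1:ℝ) := by positivity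
      apply lcp_exists_reg _ hεm
      intro u
      rw [Matrix.add_mulVec, dotProduct_add, Matrix.smul_mulVec,
        Matrix.one_mulVec, dotProduct_smul, smul_eq_mul]
      have := hM u
      linarith
    choose xs hxs1 hxs2 hxs3 using hex
    -- uniform bound on the sequence
    have hbd : ∀ m i, xs m i ≤ C₀ / sh i := by
      intro m i
      set ε : ℝ := 1/(m+1:ℝ) with hεdef
      have hε : 0 < ε := by positivity
      have hε1 : ε ≤ 1 := by
        rw [hεdef]
        rw [div_le_one (by positivity)]
        linarith [Nat.cast_nonneg (α := ℝ) m]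
      set A : Matrix (Fin n) (Fin n) ℝ := M + ε • 1 with hAdef
      have hA : ∀ u : Fin n → ℝ, 0 ≤ u ⬝ᵥ A.mulVec u := by
        intro u
        rw [hAdef, Matrix.add_mulVec, dotProduct_add, Matrix.smul_mulVec,
          Matrix.one_mulVec, dotProduct_smul, smul_eq_mul]
        have h1 := hM u
        have h2 : (0:ℝ) ≤ u ⬝ᵥ u := Finset.sum_nonneg fun j _ => mul_self_nonneg _
        nlinarith
      set shm : Fin n → ℝ := sh + ε • xh with hshmdef
      have hshm : ∀ i, 0 < shm i := by
        intro i
        have : shm i = sh i + ε * xh i := rfl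
        rw [this]
        have := hxh i; have := hsh i
        nlinarith
      have heqhm : -(A.mulVec xh) + shm = q := by
        rw [hAdef, hshmdef, Matrix.add_mulVec, Matrix.smul_mulVec, Matrix.one_mulVec,
          ← heqh]
        abel
      have heqm : -(A.mulVec (xs m)) + (A.mulVec (xs m) + q) = q := neg_add_cancel_left _ _
      have hkey := (lcp_bound A hA hxh hshm heqhm (hxs1 m)
        (fun i => hxs2 m i) heqm (fun i => hxs3 m i)).1 i
      have hdot : xh ⬝ᵥ shm = xh ⬝ᵥ sh + ε * (xh ⬝ᵥ xh) := by
        rw [hshmdef, dotProduct_add, dotProduct_smul, smul_eq_mul]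
      have hle : xh ⬝ᵥ shm ≤ C₀ := by
        rw [hdot, hC₀def]
        nlinarith
      have hmono : xs m i * sh i ≤ xs m i * shm i := by
        have h1 : sh i ≤ shm i := by
          have : shm i = sh i + ε * xh i := rfl
          rw [this]
          nlinarith [hxh i]
        exact mul_le_mul_of_nonneg_left h1 (hxs1 m i)
      rw [le_div_iff₀ (hsh i)]
      linarith
    -- the sequence lives in a closed ball
    set R1 : ℝ := ∑ i, C₀ / sh i with hR1def
    have hR1 : 0 ≤ R1 := Finset.sum_nonneg fun j _ => div_nonneg hC₀ (hsh j).le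
    have hmem : ∀ m, xs m ∈ Metric.closedBall (0 : Fin n → ℝ) R1 := by
      intro m
      rw [Metric.mem_closedBall, dist_zero_right]
      rw [pi_norm_le_iff_of_nonneg hR1]
      intro i
      rw [Real.norm_eq_abs, abs_of_nonneg (hxs1 m i)]
      calc xs m i ≤ C₀ / sh i := hbd m i
      _ ≤ R1 := Finset.single_le_sum
          (fun j _ => div_nonneg hC₀ (hsh j).le) (Finset.mem_univ i)
    obtain ⟨a, -, φ, hφ, hlim⟩ :=
      tendsto_subseq_of_bounded Metric.isBounded_closedBall hmem
    -- coordinatewise limits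
    have hlimi : ∀ i, Filter.Tendsto (fun m => xs (φ m) i) Filter.atTop (nhds (a i)) :=
      fun i => ((continuous_apply i).continuousAt.tendsto.comp hlim)
    have hεlim : Filter.Tendsto (fun m => 1/((φ m : ℝ)+1)) Filter.atTop (nhds 0) :=
      tendsto_one_div_add_atTop_nhds_zero_nat.comp hφ.tendsto_atTop
    have hMVi : ∀ i, Filter.Tendsto (fun m => M.mulVec (xs (φ m)) i) Filter.atTop
        (nhds (M.mulVec a i)) := by
      intro i
      have : ∀ y : Fin n → ℝ, M.mulVec y i = ∑ j, M i j * y j := fun y => rfl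
      simp only [this]
      exact tendsto_finset_sum _ fun j _ => (hlimi j).const_mul (M i j)
    have hsi : ∀ i, Filter.Tendsto
        (fun m => (M + (1/((φ m:ℝ)+1)) • 1).mulVec (xs (φ m)) i + q i) Filter.atTop
        (nhds (M.mulVec a i + q i)) := by
      intro i
      have hrw : ∀ m, (M + (1/((φ m:ℝ)+1)) • 1).mulVec (xs (φ m)) i + q i
          = M.mulVec (xs (φ m)) i + (1/((φ m:ℝ)+1)) * xs (φ m) i + q i := by
        intro m
        rw [Matrix.add_mulVec, Matrix.smul_mulVec, Matrix.one_mulVec]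
        rfl
      simp only [hrw]
      have h0 : Filter.Tendsto (fun m => (1/((φ m:ℝ)+1)) * xs (φ m) i) Filter.atTop
          (nhds 0) := by
        have := hεlim.mul (hlimi i)
        simpa using this
      have hfin : Filter.Tendsto
          (fun m => M.mulVec (xs (φ m)) i + (1/((φ m:ℝ)+1)) * xs (φ m) i + q i)
          Filter.atTop (nhds (M.mulVec a i + 0 + q i)) :=
        ((hMVi i).add h0).add tendsto_const_nhds
      simpa using hfin
    set sstar : Fin n → ℝ := fun i => M.mulVec a i + q i with hsstardef
    refine ⟨⟨a, sstar⟩, ?_, ?_, ?_, ?_⟩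
    · intro i
      exact ge_of_tendsto' (hlimi i) (fun m => hxs1 (φ m) i)
    · intro i
      exact ge_of_tendsto' (hsi i) (fun m => hxs2 (φ m) i)
    · funext i
      show -(M.mulVec a) i + sstar i = q i
      simp [hsstardef]
    · intro i
      show a i * sstar i = 0
      have hprod : Filter.Tendsto
          (fun m => xs (φ m) i * ((M + (1/((φ m:ℝ)+1)) • 1).mulVec (xs (φ m)) i + q i))
          Filter.atTop (nhds (a i * sstar i)) := (hlimi i).mul (hsi i)
      have hzero : Filter.Tendsto
          (fun m => xs (φ m) i * ((M + (1/((φ m:ℝ)+1)) • 1).mulVec (xs (φ m)) i + q i))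
          Filter.atTop (nhds 0) := by
        have : ∀ m, xs (φ m) i * ((M + (1/((φ m:ℝ)+1)) • 1).mulVec (xs (φ m)) i + q i) = 0 :=
          fun m => hxs3 (φ m) i
        simp only [this]
        exact tendsto_const_nhds
      exact tendsto_nhds_unique hprod hzero
  · -- Boundedness
    rw [isBounded_iff_forall_norm_le]
    set R : ℝ := ∑ i, ((xh ⬝ᵥ sh) / sh i + (xh ⬝ᵥ sh) / xh i) with hRdef
    have hterm : ∀ j, 0 ≤ (xh ⬝ᵥ sh) / sh j + (xh ⬝ᵥ sh) / xh j := fun j =>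
      add_nonneg (div_nonneg hC (hsh j).le) (div_nonneg hC (hxh j).le)
    have hR : 0 ≤ R := Finset.sum_nonneg fun j _ => hterm j
    refine ⟨R, ?_⟩
    rintro ⟨x, s⟩ ⟨hx, hs, heq, hcomp⟩
    have hkey := lcp_bound M hM hxh hsh heqh hx hs heq hcomp
    rw [Prod.norm_def]
    apply max_le <;> rw [pi_norm_le_iff_of_nonneg hR] <;> intro i
    · rw [Real.norm_eq_abs, abs_of_nonneg (hx i)]
      have h1 : x i ≤ (xh ⬝ᵥ sh) / sh i := by
        rw [le_div_iff₀ (hsh i)]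
        exact hkey.1 i
      calc x i ≤ (xh ⬝ᵥ sh) / sh i := h1
      _ ≤ (xh ⬝ᵥ sh) / sh i + (xh ⬝ᵥ sh) / xh i := by
          have := div_nonneg hC (hxh i).le; linarith
      _ ≤ R := Finset.single_le_sum (fun j _ => hterm j) (Finset.mem_univ i)
    · rw [Real.norm_eq_abs, abs_of_nonneg (hs i)]
      have h1 : s i ≤ (xh ⬝ᵥ sh) / xh i := by
        rw [le_div_iff₀ (hxh i)]
        have := hkey.2 i; linarith [hkey.2 i, mul_comm (s i) (xh i)]
      calc s i ≤ (xh ⬝ᵥ sh) / xh i := h1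
      _ ≤ (xh ⬝ᵥ sh) / sh i + (xh ⬝ᵥ sh) / xh i := by
          have := div_nonneg hC (hsh i).le; linarith
      _ ≤ R := Finset.single_le_sum (fun j _ => hterm j) (Finset.mem_univ i)
end

section
/- Let M be an n×n positive semidefinite real matrix, let x, s ∈ ℝⁿ have positive components, let a ∈ ℝⁿ, and let Δx, Δs ∈ ℝⁿ satisfy −M Δx + Δs = 0 and sᵢ Δxᵢ + xᵢ Δsᵢ = aᵢ for all i. Then ‖Δx Δs‖_∞ ≤ (1/4) ‖a/√(x s)‖² and ‖Δx Δs‖₁ ≤ (1/2) ‖a/√(x s)‖², where Δx Δs denotes the componentwise product, a/√(x s) the vector with components aᵢ/√(xᵢ sᵢ), and ‖·‖ the Euclidean norm. -/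
open scoped Matrix

/-- Bounds on the max-norm and ℓ₁-norm of the componentwise product `Δx Δs` of the
Newton directions for a monotone LCP. -/
theorem stmt_2 (n : ℕ) (M : Matrix (Fin n) (Fin n) ℝ)
    (hM : ∀ u : Fin n → ℝ, 0 ≤ u ⬝ᵥ M.mulVec u)
    (x s a dx ds : Fin n → ℝ) (hx : ∀ i, 0 < x i) (hs : ∀ i, 0 < s i)
    (h1 : -(M.mulVec dx) + ds = 0)
    (h2 : ∀ i, s i * dx i + x i * ds i = a i) :
    (∀ i, |dx i * ds i| ≤ (1 / 4) * ∑ j, (a j / Real.sqrt (x j * s j)) ^ 2) ∧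
    (∑ i, |dx i * ds i| ≤ (1 / 2) * ∑ j, (a j / Real.sqrt (x j * s j)) ^ 2) := by
  set S := ∑ j, (a j / Real.sqrt (x j * s j)) ^ 2 with hSdef
  have hds : ds = M.mulVec dx := by
    funext i
    have := congrFun h1 i
    simp only [Pi.add_apply, Pi.neg_apply, Pi.zero_apply] at this
    linarith
  have hdot : 0 ≤ ∑ i, dx i * ds i := by
    have := hM dx
    rw [hds]
    simpa [dotProduct] using this
  have hr : ∀ i, (a i / Real.sqrt (x i * s i)) ^ 2 = a i ^ 2 / (x i * s i) := fun i => by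
    rw [div_pow, Real.sq_sqrt (le_of_lt (mul_pos (hx i) (hs i)))]
  have hkey : ∀ i, dx i * ds i ≤ (a i / Real.sqrt (x i * s i)) ^ 2 / 4 := by
    intro i
    rw [hr i, div_div, le_div_iff₀ (by nlinarith [hx i, hs i])]
    rw [← h2 i]
    nlinarith [sq_nonneg (s i * dx i - x i * ds i)]
  have hmaxsum : ∑ i, max (dx i * ds i) 0 ≤ S / 4 := by
    calc ∑ i, max (dx i * ds i) 0 ≤ ∑ i, (a i / Real.sqrt (x i * s i)) ^ 2 / 4 :=
          Finset.sum_le_sum fun i _ => max_le (hkey i) (by positivity)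
      _ = S / 4 := by rw [← Finset.sum_div]
  have hnegsum : ∑ i, (max (dx i * ds i) 0 - dx i * ds i) ≤ S / 4 := by
    rw [Finset.sum_sub_distrib]
    linarith
  constructor
  · intro i
    have h1i : dx i * ds i ≤ S / 4 :=
      le_trans (le_trans (le_max_left _ _)
        (Finset.single_le_sum (f := fun j => max (dx j * ds j) 0)
          (fun j _ => le_max_right _ _) (Finset.mem_univ i))) hmaxsum
    have h2i : -(dx i * ds i) ≤ S / 4 := by
      have hle : -(dx i * ds i) ≤ ∑ j, (max (dx j * ds j) 0 - dx j * ds j) := by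
        have := Finset.single_le_sum (f := fun j => max (dx j * ds j) 0 - dx j * ds j)
          (fun j _ => by simp [le_max_left]) (Finset.mem_univ i)
        have h3 : -(dx i * ds i) ≤ max (dx i * ds i) 0 - dx i * ds i := by
          simp [le_max_right]
        exact h3.trans (by simpa using this)
      linarith
    rw [abs_le]
    constructor <;> linarith
  · have habs : ∀ i, |dx i * ds i| = 2 * max (dx i * ds i) 0 - dx i * ds i := by
      intro i
      rcases le_or_gt 0 (dx i * ds i) with h | h
      · rw [abs_of_nonneg h, max_eq_left h]; ring
      · rw [abs_of_neg h, max_eq_right h.le]; ring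
    have : ∑ i, |dx i * ds i| = 2 * (∑ i, max (dx i * ds i) 0) - ∑ i, dx i * ds i := by
      rw [Finset.mul_sum, ← Finset.sum_sub_distrib]
      exact Finset.sum_congr rfl fun i _ => habs i
    linarith
end

section
/- Let M be an n×n positive semidefinite real matrix, let x, s ∈ ℝⁿ have positive components, let a ∈ ℝⁿ, and let Δx, Δs ∈ ℝⁿ satisfy −M Δx + Δs = 0 and sᵢ Δxᵢ + xᵢ Δsᵢ = aᵢ for all i. Then ‖Δx Δs‖ ≤ (1/(2√2)) ‖a/√(x s)‖² and Δxᵀ Δs ≤ (1/4) ‖a/√(x s)‖², where Δx Δs denotes the componentwise product, a/√(x s) the vector with components aᵢ/√(xᵢ sᵢ), and ‖·‖ the Euclidean norm. -/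
open scoped Matrix

lemma aux_abstract (n : ℕ) (t r : Fin n → ℝ) (ht : ∀ i, 4 * t i ≤ r i)
    (hr : ∀ i, 0 ≤ r i) (hsum : 0 ≤ ∑ i, t i) :
    Real.sqrt (∑ i, t i ^ 2) ≤ (1 / (2 * Real.sqrt 2)) * ∑ i, r i ∧
    ∑ i, t i ≤ (1 / 4) * ∑ i, r i := by
  have hsecond : ∑ i, t i ≤ (1 / 4) * ∑ i, r i := by
    have : ∑ i, t i ≤ ∑ i, (1/4) * r i :=
      Finset.sum_le_sum (fun i _ => by linarith [ht i])
    rw [← Finset.mul_sum] at this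
    linarith
  refine ⟨?_, hsecond⟩
  set P := Finset.univ.filter (fun i => 0 ≤ t i) with hP
  set N := Finset.univ.filter (fun i => ¬ 0 ≤ t i) with hN
  set Sp := ∑ i ∈ P, t i with hSp
  set Sn := ∑ i ∈ N, -t i with hSn
  have hSpnn : 0 ≤ Sp := Finset.sum_nonneg (fun i hi => (Finset.mem_filter.mp hi).2)
  have hSnnn : 0 ≤ Sn := Finset.sum_nonneg (fun i hi => by
    have := (Finset.mem_filter.mp hi).2; linarith)
  have hsplit : Sp - Sn = ∑ i, t i := by
    rw [hSp, hSn, Finset.sum_neg_distrib]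
    rw [sub_neg_eq_add]
    exact Finset.sum_filter_add_sum_filter_not _ _ _
  have hSnSp : Sn ≤ Sp := by linarith
  have hsq : ∑ i, t i ^ 2 ≤ 2 * Sp ^ 2 := by
    have h1 : ∑ i ∈ P, t i ^ 2 ≤ Sp ^ 2 :=
      Finset.sum_sq_le_sq_sum_of_nonneg (fun i hi => (Finset.mem_filter.mp hi).2)
    have h2 : ∑ i ∈ N, t i ^ 2 ≤ Sn ^ 2 := by
      have : ∑ i ∈ N, (-t i) ^ 2 ≤ Sn ^ 2 :=
        Finset.sum_sq_le_sq_sum_of_nonneg (fun i hi => by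
          have := (Finset.mem_filter.mp hi).2; linarith)
      simpa using this
    have hall : ∑ i, t i ^ 2 = ∑ i ∈ P, t i ^ 2 + ∑ i ∈ N, t i ^ 2 :=
      (Finset.sum_filter_add_sum_filter_not _ _ _).symm
    nlinarith
  have hSpbound : Sp ≤ (1/4) * ∑ i, r i := by
    have h1 : Sp ≤ ∑ i ∈ P, (1/4) * r i :=
      Finset.sum_le_sum (fun i _ => by linarith [ht i])
    have h2 : ∑ i ∈ P, (1/4) * r i ≤ ∑ i, (1/4) * r i :=
      Finset.sum_le_sum_of_subset_of_nonneg (Finset.filter_subset _ _)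
        (fun i _ _ => by linarith [hr i])
    have h3 : (∑ i, (1/4 : ℝ) * r i) = (1/4) * ∑ i, r i := by rw [Finset.mul_sum]
    linarith
  have hsqrt2 : Real.sqrt 2 > 0 := by positivity
  calc Real.sqrt (∑ i, t i ^ 2) ≤ Real.sqrt (2 * Sp ^ 2) := Real.sqrt_le_sqrt hsq
    _ = Real.sqrt 2 * Sp := by
        rw [Real.sqrt_mul (by norm_num), Real.sqrt_sq hSpnn]
    _ ≤ Real.sqrt 2 * ((1/4) * ∑ i, r i) := by
        apply mul_le_mul_of_nonneg_left hSpbound (le_of_lt hsqrt2)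
    _ = (1 / (2 * Real.sqrt 2)) * ∑ i, r i := by
        have h2 : Real.sqrt 2 * Real.sqrt 2 = 2 := Real.mul_self_sqrt (by norm_num)
        field_simp
        nlinarith

/-- Bounds on the Euclidean norm of the componentwise product `Δx Δs` and on the
scalar product `Δxᵀ Δs` of the Newton directions for a monotone LCP. -/
theorem stmt_3 (n : ℕ) (M : Matrix (Fin n) (Fin n) ℝ)
    (hM : ∀ u : Fin n → ℝ, 0 ≤ u ⬝ᵥ M.mulVec u)
    (x s a dx ds : Fin n → ℝ) (hx : ∀ i, 0 < x i) (hs : ∀ i, 0 < s i)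
    (h1 : -(M.mulVec dx) + ds = 0)
    (h2 : ∀ i, s i * dx i + x i * ds i = a i) :
    Real.sqrt (∑ i, (dx i * ds i) ^ 2)
        ≤ (1 / (2 * Real.sqrt 2)) * ∑ j, (a j / Real.sqrt (x j * s j)) ^ 2 ∧
    ∑ i, dx i * ds i ≤ (1 / 4) * ∑ j, (a j / Real.sqrt (x j * s j)) ^ 2 := by
  have ht : ∀ i, 4 * (dx i * ds i) ≤ (a i / Real.sqrt (x i * s i)) ^ 2 := by
    intro i
    have hxs : 0 < x i * s i := mul_pos (hx i) (hs i)
    have hc : 0 < Real.sqrt (x i * s i) := Real.sqrt_pos.mpr hxs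
    have hcsq : Real.sqrt (x i * s i) ^ 2 = x i * s i := Real.sq_sqrt hxs.le
    have ha : a i ^ 2 = (s i * dx i + x i * ds i) ^ 2 := by rw [h2 i]
    rw [div_pow, hcsq, le_div_iff₀ hxs]
    nlinarith [sq_nonneg (s i * dx i - x i * ds i)]
  have hr : ∀ i, 0 ≤ (a i / Real.sqrt (x i * s i)) ^ 2 := fun i => sq_nonneg _
  have hds : ds = M.mulVec dx := by
    funext i
    have := congrFun h1 i
    simp only [Pi.add_apply, Pi.neg_apply, Pi.zero_apply] at this
    linarith
  have hsum : 0 ≤ ∑ i, dx i * ds i := by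
    have : (∑ i, dx i * ds i) = dx ⬝ᵥ ds := rfl
    rw [this, hds]
    exact hM dx
  exact aux_abstract n (fun i => dx i * ds i) (fun i => (a i / Real.sqrt (x i * s i)) ^ 2)
    ht hr hsum
end

section
/- Let M be an n×n positive semidefinite real matrix, let z = (x, s, w) with x, s > 0 componentwise, w = (v₀, v), and rᵢ(z) > 0 for i = 0,…,n. Let Δx, Δs solve −M Δx + Δs = 0 and sᵢ Δxᵢ + xᵢ Δsᵢ = aᵢ with the corrector right-hand side aᵢ = ρ(w) − xᵢ sᵢ + vᵢ². Then (2/ρ(w)) ∑_{i=1}^{n} |Δxᵢ Δsᵢ| ≤ ζ₀(z)². -/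
open scoped Matrix

/-- Estimate (2/ρ) ∑ |Δxᵢ Δsᵢ| ≤ ζ₀(z)² for the corrector direction. -/
theorem stmt_4 (n : ℕ) (hn : 1 ≤ n) (M : Matrix (Fin n) (Fin n) ℝ)
    (hM : ∀ u : Fin n → ℝ, 0 ≤ u ⬝ᵥ M.mulVec u)
    (x s v dx ds : Fin n → ℝ) (v0 : ℝ)
    (hx : ∀ i, 0 < x i) (hs : ∀ i, 0 < s i)
    (r : Fin (n + 1) → ℝ)
    (hr : r = Fin.cons (v0 - ∑ i, x i * s i) (fun i => x i * s i - (v i) ^ 2))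
    (hrpos : ∀ i, 0 < r i)
    (ρ : ℝ) (hρ : ρ = (v0 - ∑ i, (v i) ^ 2) / ((n : ℝ) + 1))
    (rhat : Fin (n + 1) → ℝ) (hrhat : ∀ i, rhat i = Real.sqrt (r i / ρ))
    (h1 : -(M.mulVec dx) + ds = 0)
    (h2 : ∀ i, s i * dx i + x i * ds i = ρ - x i * s i + (v i) ^ 2) :
    (2 / ρ) * ∑ i, |dx i * ds i| ≤ ∑ i, (rhat i - 1 / rhat i) ^ 2 := by
  have hsumr : ∑ i, r i = v0 - ∑ i, (v i) ^ 2 := by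
    subst hr
    rw [Fin.sum_cons, Finset.sum_sub_distrib]
    ring
  have hρpos : 0 < ρ := by
    have hpos : 0 < ∑ i, r i :=
      Finset.sum_pos (fun i _ => hrpos i) (by simp)
    rw [hρ, ← hsumr]
    positivity
  have hxs : ∀ i, 0 < x i * s i := fun i => mul_pos (hx i) (hs i)
  have hrxs : ∀ i : Fin n, r i.succ ≤ x i * s i := by
    intro i
    subst hr
    simp only [Fin.cons_succ]
    nlinarith [sq_nonneg (v i)]
  have hds : ds = M.mulVec dx := by
    funext i
    have := congrFun h1 i
    simp only [Pi.add_apply, Pi.neg_apply, Pi.zero_apply] at this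
    linarith
  have hdot : 0 ≤ ∑ i, dx i * ds i := by
    have := hM dx
    rw [hds]
    simpa [dotProduct] using this
  set a : Fin n → ℝ := fun i => ρ - x i * s i + (v i) ^ 2 with ha
  have hbound : ∀ i, dx i * ds i ≤ a i ^ 2 / (4 * (x i * s i)) := by
    intro i
    have ha' : a i = ρ - x i * s i + (v i) ^ 2 := rfl
    rw [le_div_iff₀ (mul_pos (by norm_num : (0:ℝ) < 4) (hxs i))]
    nlinarith [sq_nonneg (s i * dx i - x i * ds i), h2 i, hxs i, ha']
  have habs : ∀ i, |dx i * ds i| ≤ 2 * (a i ^ 2 / (4 * (x i * s i))) - dx i * ds i := by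
    intro i
    have hnn : (0:ℝ) ≤ a i ^ 2 / (4 * (x i * s i)) :=
      div_nonneg (sq_nonneg _) (mul_pos (by norm_num : (0:ℝ) < 4) (hxs i)).le
    rcases abs_cases (dx i * ds i) with ⟨h, _⟩ | ⟨h, _⟩
    · rw [h]; linarith [hbound i]
    · rw [h]; linarith
  have hsum1 : ∑ i, |dx i * ds i| ≤ ∑ i, a i ^ 2 / (2 * (x i * s i)) := by
    calc ∑ i, |dx i * ds i|
        ≤ ∑ i, (2 * (a i ^ 2 / (4 * (x i * s i))) - dx i * ds i) :=
          Finset.sum_le_sum (fun i _ => habs i)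
      _ = ∑ i, a i ^ 2 / (2 * (x i * s i)) - ∑ i, dx i * ds i := by
          rw [Finset.sum_sub_distrib]
          congr 1
          refine Finset.sum_congr rfl fun i _ => ?_
          have := (hxs i).ne'
          field_simp
          ring
      _ ≤ _ := by linarith
  have hhat : ∀ j : Fin (n+1), (rhat j - 1 / rhat j) ^ 2 = (r j - ρ) ^ 2 / (ρ * r j) := by
    intro j
    have hrj := hrpos j
    have ht2 : rhat j ^ 2 = r j / ρ := by
      rw [hrhat j]; exact Real.sq_sqrt (by positivity)
    have ht : 0 < rhat j := by
      rw [hrhat j]; exact Real.sqrt_pos.mpr (by positivity)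
    have key : (rhat j - 1 / rhat j) ^ 2 = rhat j ^ 2 + (rhat j ^ 2)⁻¹ - 2 := by
      field_simp
      ring
    rw [key, ht2]
    field_simp
    ring
  have step2 : ∀ i : Fin n,
      a i ^ 2 / (ρ * (x i * s i)) ≤ (rhat i.succ - 1 / rhat i.succ) ^ 2 := by
    intro i
    rw [hhat i.succ]
    have haeq : a i ^ 2 = (r i.succ - ρ) ^ 2 := by
      subst hr
      simp only [ha, Fin.cons_succ]
      ring
    rw [haeq]
    have h1' : 0 < ρ * r i.succ := mul_pos hρpos (hrpos i.succ)
    have h2' : ρ * r i.succ ≤ ρ * (x i * s i) :=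
      mul_le_mul_of_nonneg_left (hrxs i) hρpos.le
    exact div_le_div_of_nonneg_left (sq_nonneg _) h1' h2'
  calc (2 / ρ) * ∑ i, |dx i * ds i|
      ≤ (2 / ρ) * ∑ i, a i ^ 2 / (2 * (x i * s i)) :=
        mul_le_mul_of_nonneg_left hsum1 (by positivity)
    _ = ∑ i, a i ^ 2 / (ρ * (x i * s i)) := by
        rw [Finset.mul_sum]
        refine Finset.sum_congr rfl fun i _ => ?_
        have := (hxs i).ne'
        field_simp
    _ ≤ ∑ i : Fin n, (rhat i.succ - 1 / rhat i.succ) ^ 2 :=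
        Finset.sum_le_sum fun i _ => step2 i
    _ ≤ ∑ j, (rhat j - 1 / rhat j) ^ 2 := by
        rw [Fin.sum_univ_succ]
        have : (0:ℝ) ≤ (rhat 0 - 1 / rhat 0) ^ 2 := sq_nonneg _
        linarith
end

section
/- Let b ∈ ℝ^{n+1} satisfy ‖b‖ < 1 (Euclidean norm) and ∑_{i=0}^{n} bᵢ = 0. Then −∑_{i=0}^{n} ln(1 + bᵢ) ≤ ω_*(‖b‖), where ω_*(t) = −t − ln(1 − t). -/
/-- Shifted log series: for `|x| < 1`,
`x - log (1 + x) = ∑ (-x)^(n+2)/(n+2)`. -/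
lemma aux_hasSum_shift {x : ℝ} (h : |x| < 1) :
    HasSum (fun n : ℕ => (-x) ^ (n + 2) / ((n : ℝ) + 2)) (x - Real.log (1 + x)) := by
  have h' : |(-x)| < 1 := by rwa [abs_neg]
  have H := Real.hasSum_pow_div_log_of_abs_lt_one h'
  rw [sub_neg_eq_add] at H
  have H2 := (hasSum_nat_add_iff' (f := fun n : ℕ => (-x) ^ (n + 1) / ((n : ℝ) + 1)) 1).mpr H
  simp only [Finset.range_one, Finset.sum_singleton] at H2
  have hval : -Real.log (1 + x) - (-x) ^ (0 + 1) / ((0 : ℕ) + 1 : ℝ)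
      = x - Real.log (1 + x) := by
    norm_num
    ring
  rw [hval] at H2
  convert H2 using 1
  · rfl
  funext k
  push_cast
  ring_nf

/-- If `‖b‖ < 1` and the coordinates of `b ∈ ℝ^{n+1}` sum to zero, then
`-∑ ln(1 + bᵢ) ≤ ω_*(‖b‖)`, where `ω_*(t) = -t - ln(1 - t)`. -/
theorem stmt_5 (n : ℕ) (b : Fin (n + 1) → ℝ)
    (hb : Real.sqrt (∑ i, (b i) ^ 2) < 1) (hsum : ∑ i, b i = 0) :
    -∑ i, Real.log (1 + b i)
      ≤ -Real.sqrt (∑ i, (b i) ^ 2) - Real.log (1 - Real.sqrt (∑ i, (b i) ^ 2)) := by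
  set r := Real.sqrt (∑ i, (b i) ^ 2) with hrdef
  have hr0 : 0 ≤ r := Real.sqrt_nonneg _
  have hr2 : r ^ 2 = ∑ i, (b i) ^ 2 := Real.sq_sqrt (by positivity)
  have habs : ∀ i, |b i| ≤ r := by
    intro i
    rw [← Real.sqrt_sq_eq_abs]
    exact Real.sqrt_le_sqrt
      (Finset.single_le_sum (f := fun j => (b j) ^ 2) (fun j _ => sq_nonneg _)
        (Finset.mem_univ i))
  have hb1 : ∀ i, |b i| < 1 := fun i => lt_of_le_of_lt (habs i) hb
  -- sum of the coordinate series
  have hS : HasSum (fun k : ℕ => ∑ i, (-(b i)) ^ (k + 2) / ((k : ℝ) + 2))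
      (∑ i, (b i - Real.log (1 + b i))) :=
    hasSum_sum (fun i _ => aux_hasSum_shift (hb1 i))
  -- series for the right-hand side
  have hR : HasSum (fun k : ℕ => (-(-r)) ^ (k + 2) / ((k : ℝ) + 2))
      (-r - Real.log (1 - r)) := by
    have := aux_hasSum_shift (x := -r) (by rwa [abs_neg, abs_of_nonneg hr0])
    simpa [sub_neg_eq_add, ← sub_eq_add_neg] using this
  have hR' : HasSum (fun k : ℕ => r ^ (k + 2) / ((k : ℝ) + 2))
      (-r - Real.log (1 - r)) := by
    simpa using hR
  -- pointwise comparison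
  have key : ∀ k : ℕ, ∑ i, (-(b i)) ^ (k + 2) / ((k : ℝ) + 2)
      ≤ r ^ (k + 2) / ((k : ℝ) + 2) := by
    intro k
    rw [← Finset.sum_div]
    have hk : (0 : ℝ) < (k : ℝ) + 2 := by positivity
    gcongr
    show ∑ i, (-(b i)) ^ (k + 2) ≤ r ^ (k + 2)
    have hnum : ∑ i, (-(b i)) ^ (k + 2) ≤ r ^ (k + 2) := by
      calc ∑ i, (-(b i)) ^ (k + 2) ≤ ∑ i, |b i| ^ (k + 2) := by
            refine Finset.sum_le_sum fun i _ => ?_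
            calc (-(b i)) ^ (k + 2) ≤ |(-(b i)) ^ (k + 2)| := le_abs_self _
              _ = |b i| ^ (k + 2) := by rw [abs_pow, abs_neg]
        _ ≤ ∑ i, (b i) ^ 2 * r ^ k := by
            refine Finset.sum_le_sum fun i _ => ?_
            have : |b i| ^ (k + 2) = |b i| ^ 2 * |b i| ^ k := by ring
            rw [this, sq_abs]
            exact mul_le_mul_of_nonneg_left
              (pow_le_pow_left₀ (abs_nonneg _) (habs i) k) (sq_nonneg _)
        _ = r ^ (k + 2) := by rw [← Finset.sum_mul, ← hr2]; ring
    exact hnum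
  have hle : ∑ i, (b i - Real.log (1 + b i)) ≤ -r - Real.log (1 - r) :=
    hasSum_le key hS hR'
  have hLHS : ∑ i, (b i - Real.log (1 + b i)) = -∑ i, Real.log (1 + b i) := by
    rw [Finset.sum_sub_distrib, hsum, zero_sub]
  linarith [hle, hLHS ▸ hle]
end

section
/- Let z = (x, s, w) with x, s > 0 componentwise, w = (v₀, v), rᵢ(z) > 0 for i = 0,…,n, and suppose δ(z) ≤ β for some β < 1/2. Then ζ₀(z) ≤ β/√(1−β) and 1 − β ≤ r̂ᵢ(z)² ≤ 1/(1−β) for every i = 0,…,n. -/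
lemma stmt6_aux_key (ζ0 ζ1 β m : ℝ) (hζ0pos : 0 < ζ0 ^ 2) (hβnn : 0 ≤ β)
    (hmpos : 0 < m) (hA : ζ0 ^ 2 ≤ β * ζ1) (hz1 : ζ1 ^ 2 * m ≤ ζ0 ^ 2) :
    ζ0 ^ 2 * m ≤ β ^ 2 := by
  have h4 : ζ0 ^ 2 * ζ0 ^ 2 ≤ (β * ζ1) * (β * ζ1) :=
    mul_self_le_mul_self (sq_nonneg ζ0) hA
  nlinarith [mul_le_mul_of_nonneg_left hz1 (sq_nonneg β),
    mul_le_mul_of_nonneg_right h4 hmpos.le]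

lemma stmt6_aux_bounds (u β : ℝ) (hupos : 0 < u) (hβnn : 0 ≤ β) (hβ : β < 1 / 2)
    (hq : (u - 1) ^ 2 * (1 - β) ≤ β ^ 2 * u) : 1 - β ≤ u ∧ u ≤ 1 / (1 - β) := by
  have h1β : (0:ℝ) < 1 - β := by linarith
  have hfac : 0 ≥ (1 - β - u) * (1 - (1 - β) * u) := by nlinarith [hq]
  constructor
  · by_contra h
    push_neg at h
    have f2 : 0 < 1 - (1 - β) * u := by nlinarith [mul_lt_mul_of_pos_left h h1β]
    have : 0 < (1 - β - u) * (1 - (1 - β) * u) := mul_pos (by linarith) f2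
    linarith
  · rw [le_div_iff₀ h1β]
    by_contra h
    push_neg at h
    have hu1 : 1 < u := by nlinarith
    have : 0 < (1 - β - u) * (1 - (1 - β) * u) :=
      mul_pos_of_neg_of_neg (by linarith) (by nlinarith)
    linarith

lemma stmt6_aux_z0 (ζ0 β : ℝ) (hζ0nn : 0 ≤ ζ0) (hβnn : 0 ≤ β) (h1β : (0:ℝ) < 1 - β)
    (hb : ζ0 ^ 2 * (1 - β) ≤ β ^ 2) : ζ0 ≤ β / Real.sqrt (1 - β) := by
  have hs1 : 0 < Real.sqrt (1 - β) := Real.sqrt_pos.mpr h1β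
  rw [le_div_iff₀ hs1]
  have hsq : (ζ0 * Real.sqrt (1 - β)) ^ 2 ≤ β ^ 2 := by
    rw [mul_pow, Real.sq_sqrt h1β.le]
    exact hb
  nlinarith [mul_nonneg hζ0nn hs1.le, hsq, hβnn]

set_option maxHeartbeats 1600000 in
/-- If `δ(z) ≤ β` with `β < 1/2`, then `ζ₀(z) ≤ β/√(1-β)` and
`1 - β ≤ r̂ᵢ(z)² ≤ 1/(1-β)` for all `i`. -/
theorem stmt_6 (n : ℕ) (hn : 1 ≤ n) (x s v : Fin n → ℝ) (v0 : ℝ)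
    (hx : ∀ i, 0 < x i) (hs : ∀ i, 0 < s i)
    (r : Fin (n + 1) → ℝ)
    (hr : r = Fin.cons (v0 - ∑ i, x i * s i) (fun i => x i * s i - (v i) ^ 2))
    (hrpos : ∀ i, 0 < r i)
    (ρ : ℝ) (hρ : ρ = (v0 - ∑ i, (v i) ^ 2) / ((n : ℝ) + 1))
    (rhat : Fin (n + 1) → ℝ) (hrhat : ∀ i, rhat i = Real.sqrt (r i / ρ))
    (ζ0 ζ1 : ℝ)
    (hζ0 : ζ0 = Real.sqrt (∑ i, (rhat i - 1 / rhat i) ^ 2))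
    (hζ1 : ζ1 = Real.sqrt (∑ i, (1 / (rhat i) ^ 2 - 1) ^ 2))
    (β : ℝ) (hβ : β < 1 / 2)
    (hδ : ζ0 ^ 2 / ζ1 ≤ β) :
    ζ0 ≤ β / Real.sqrt (1 - β) ∧
    ∀ i, 1 - β ≤ (rhat i) ^ 2 ∧ (rhat i) ^ 2 ≤ 1 / (1 - β) := by
  have hsum : ∑ i, r i = v0 - ∑ i, (v i) ^ 2 := by
    rw [hr, Fin.sum_cons, Finset.sum_sub_distrib]; ring
  have hρpos : 0 < ρ := by
    have h1 : 0 < ∑ i, r i :=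
      Finset.sum_pos (fun i _ => hrpos i) ⟨0, Finset.mem_univ 0⟩
    rw [hsum] at h1
    rw [hρ]; positivity
  set t : Fin (n+1) → ℝ := fun i => r i / ρ with ht
  have htpos : ∀ i, 0 < t i := fun i => div_pos (hrpos i) hρpos
  have hrt : ∀ i, rhat i ^ 2 = t i := fun i => by
    rw [hrhat i, Real.sq_sqrt (le_of_lt (htpos i))]
  have hrhatpos : ∀ i, 0 < rhat i := fun i => by
    rw [hrhat i]; exact Real.sqrt_pos.mpr (htpos i)
  have hsumt : ∑ i, t i = (n : ℝ) + 1 := by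
    have h2 : ∑ i, t i = (∑ i, r i) / ρ := by rw [Finset.sum_div]
    have hpos2 : 0 < v0 - ∑ i, (v i) ^ 2 := by
      have h1 : 0 < ∑ i, r i :=
        Finset.sum_pos (fun i _ => hrpos i) ⟨0, Finset.mem_univ 0⟩
      rwa [hsum] at h1
    have hne : v0 - ∑ i, (v i) ^ 2 ≠ 0 := ne_of_gt hpos2
    rw [h2, hsum, hρ]
    field_simp
  have hterm0 : ∀ i, (rhat i - 1 / rhat i) ^ 2 = (t i - 1) ^ 2 / t i := by
    intro i
    rw [← hrt i]
    have hne : rhat i ≠ 0 := ne_of_gt (hrhatpos i)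
    field_simp
  have hterm1 : ∀ i, (1 / (rhat i) ^ 2 - 1) ^ 2 = (t i - 1) ^ 2 / (t i) ^ 2 := by
    intro i
    rw [← hrt i]
    have hne : rhat i ≠ 0 := ne_of_gt (hrhatpos i)
    field_simp
    ring
  have hζ0nn : 0 ≤ ζ0 := by rw [hζ0]; exact Real.sqrt_nonneg _
  have hζ1nn : 0 ≤ ζ1 := by rw [hζ1]; exact Real.sqrt_nonneg _
  have hζ0sq : ζ0 ^ 2 = ∑ i, (t i - 1) ^ 2 / t i := by
    rw [hζ0, Real.sq_sqrt (by positivity)]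
    exact Finset.sum_congr rfl (fun i _ => hterm0 i)
  have hζ1sq : ζ1 ^ 2 = ∑ i, (t i - 1) ^ 2 / (t i) ^ 2 := by
    rw [hζ1, Real.sq_sqrt (by positivity)]
    exact Finset.sum_congr rfl (fun i _ => hterm1 i)
  clear ht
  clear_value t
  have hβnn : 0 ≤ β := le_trans (div_nonneg (sq_nonneg _) hζ1nn) hδ
  have h1β : (0:ℝ) < 1 - β := by linarith
  by_cases hall : ∀ i, t i = 1
  · have hζ0z : ζ0 = 0 := by
      have : ζ0 ^ 2 = 0 := by
        rw [hζ0sq]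
        apply Finset.sum_eq_zero
        intro i _
        rw [hall i]; norm_num
      nlinarith
    constructor
    · rw [hζ0z]
      exact div_nonneg hβnn (Real.sqrt_nonneg _)
    · intro i
      rw [hrt i, hall i]
      constructor
      · linarith
      · rw [le_div_iff₀ h1β]; nlinarith
  · push_neg at hall
    obtain ⟨j, hj⟩ := hall
    have hjne : t j - 1 ≠ 0 := sub_ne_zero.mpr hj
    have hjsq : 0 < (t j - 1) ^ 2 := by positivity
    have htermle : ∀ i, (t i - 1) ^ 2 / t i ≤ ζ0 ^ 2 := by
      intro i
      rw [hζ0sq]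
      exact Finset.single_le_sum (f := fun k => (t k - 1) ^ 2 / t k) (fun k _ => div_nonneg (sq_nonneg _) (htpos k).le) (Finset.mem_univ i)
    have hζ0pos : 0 < ζ0 ^ 2 :=
      lt_of_lt_of_le (div_pos hjsq (htpos j)) (htermle j)
    have hζ1pos : 0 < ζ1 := by
      have h1 : 0 < ζ1 ^ 2 := by
        rw [hζ1sq]
        apply lt_of_lt_of_le (div_pos hjsq (pow_pos (htpos j) 2))
        exact Finset.single_le_sum (f := fun k => (t k - 1) ^ 2 / (t k) ^ 2) (fun k _ => div_nonneg (sq_nonneg _) (sq_nonneg _)) (Finset.mem_univ j)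
      nlinarith
    have hA : ζ0 ^ 2 ≤ β * ζ1 := by rwa [div_le_iff₀ hζ1pos] at hδ
    obtain ⟨i0, _, hmin⟩ := Finset.exists_min_image Finset.univ t ⟨0, Finset.mem_univ 0⟩
    set m : ℝ := t i0 with hmdef
    clear_value m
    have hmpos : 0 < m := hmdef ▸ htpos i0
    have hm : ∀ i, m ≤ t i := fun i => hmin i (Finset.mem_univ i)
    have hm1 : m ≤ 1 := by
      by_contra h
      push_neg at h
      have hlt : ((n:ℝ)+1) < ∑ i, t i := by
        calc ((n:ℝ)+1) = ∑ _i : Fin (n+1), (1:ℝ) := by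
              rw [Finset.sum_const, Finset.card_univ, Fintype.card_fin]
              push_cast; ring
        _ < ∑ i, t i := by
              apply Finset.sum_lt_sum_of_nonempty ⟨0, Finset.mem_univ 0⟩
              intro i _
              exact lt_of_lt_of_le h (hm i)
      linarith [hsumt]
    have hz1 : ζ1 ^ 2 * m ≤ ζ0 ^ 2 := by
      rw [hζ0sq, hζ1sq, Finset.sum_mul]
      apply Finset.sum_le_sum
      intro i _
      have hne : t i ≠ 0 := ne_of_gt (htpos i)
      have h1 : (t i - 1) ^ 2 / (t i) ^ 2 * m = ((t i - 1) ^ 2 / t i) * (m / t i) := by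
        rw [div_mul_eq_mul_div, div_mul_div_comm]; ring
      rw [h1]
      have h2 : m / t i ≤ 1 := (div_le_one (htpos i)).mpr (hm i)
      exact mul_le_of_le_one_right (div_nonneg (sq_nonneg _) (htpos i).le) h2
    clear hr hrhat hζ0 hζ1 hδ hsum hρ hρpos hterm0 hterm1 hζ0sq hζ1sq hsumt hmin hjne hjsq hj hx hs hrpos
    clear r x s v v0 ρ j
    have hkey : ζ0 ^ 2 * m ≤ β ^ 2 := stmt6_aux_key ζ0 ζ1 β m hζ0pos hβnn hmpos hA hz1
    have hmsq : (m - 1) ^ 2 ≤ β ^ 2 := by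
      have h1 := htermle i0
      rw [← hmdef] at h1
      have h2 : (m - 1) ^ 2 / m * m ≤ ζ0 ^ 2 * m :=
        mul_le_mul_of_nonneg_right h1 hmpos.le
      rw [div_mul_cancel₀ _ (ne_of_gt hmpos)] at h2
      linarith
    have hmβ : 1 - β ≤ m := by nlinarith
    have hζ0b : ζ0 ^ 2 * (1 - β) ≤ β ^ 2 := by nlinarith
    constructor
    · exact stmt6_aux_z0 ζ0 β hζ0nn hβnn h1β hζ0b
    · intro i
      rw [hrt i]
      set u : ℝ := t i with hudef
      clear_value u
      have hupos : 0 < u := hudef ▸ htpos i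
      have h2 : (u - 1) ^ 2 ≤ ζ0 ^ 2 * u := by
        have h3 := mul_le_mul_of_nonneg_right (htermle i) hupos.le
        rw [← hudef] at h3
        rwa [div_mul_cancel₀ _ (ne_of_gt hupos)] at h3
      have hq : (u - 1) ^ 2 * (1 - β) ≤ β ^ 2 * u := by
        nlinarith [mul_le_mul_of_nonneg_right h2 h1β.le,
          mul_le_mul_of_nonneg_right hζ0b hupos.le]
      exact stmt6_aux_bounds u β hupos hβnn hβ hq
end

section
/- Let z = (x, s, w) with x, s > 0 componentwise, w = (v₀, v), rᵢ(z) > 0 for i = 0,…,n, and suppose δ(z) ≤ β for some β < 1/2. Suppose further x(w), s(w) ∈ ℝⁿ have positive components and satisfy xᵢ(w) sᵢ(w) = vᵢ² + ρ(w) for all i = 1,…,n. Then 1 − β ≤ (xᵢ sᵢ)/(xᵢ(w) sᵢ(w)) ≤ 1/(1−β) for every i = 1,…,n. -/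
set_option maxHeartbeats 1000000


/-- If `δ(z) ≤ β` with `β < 1/2` and `x(w), s(w)` is the analytic center
(`xᵢ(w) sᵢ(w) = vᵢ² + ρ(w)`), then `1 - β ≤ xᵢsᵢ/(xᵢ(w)sᵢ(w)) ≤ 1/(1-β)`. -/
theorem stmt_7 (n : ℕ) (hn : 1 ≤ n) (x s v : Fin n → ℝ) (v0 : ℝ)
    (hx : ∀ i, 0 < x i) (hs : ∀ i, 0 < s i)
    (r : Fin (n + 1) → ℝ)
    (hr : r = Fin.cons (v0 - ∑ i, x i * s i) (fun i => x i * s i - (v i) ^ 2))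
    (hrpos : ∀ i, 0 < r i)
    (ρ : ℝ) (hρ : ρ = (v0 - ∑ i, (v i) ^ 2) / ((n : ℝ) + 1))
    (rhat : Fin (n + 1) → ℝ) (hrhat : ∀ i, rhat i = Real.sqrt (r i / ρ))
    (ζ0 ζ1 : ℝ)
    (hζ0 : ζ0 = Real.sqrt (∑ i, (rhat i - 1 / rhat i) ^ 2))
    (hζ1 : ζ1 = Real.sqrt (∑ i, (1 / (rhat i) ^ 2 - 1) ^ 2))
    (β : ℝ) (hβ : β < 1 / 2)
    (hδ : ζ0 ^ 2 / ζ1 ≤ β)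
    (xw sw : Fin n → ℝ) (hxw : ∀ i, 0 < xw i) (hsw : ∀ i, 0 < sw i)
    (hcenter : ∀ i, xw i * sw i = (v i) ^ 2 + ρ) :
    ∀ i, 1 - β ≤ (x i * s i) / (xw i * sw i) ∧
      (x i * s i) / (xw i * sw i) ≤ 1 / (1 - β) := by
  have hβ1 : (0:ℝ) < 1 - β := by linarith
  have hrsum : ∑ j : Fin (n+1), r j = v0 - ∑ j, (v j)^2 := by
    subst hr
    rw [Fin.sum_univ_succ]
    simp only [Fin.cons_zero, Fin.cons_succ]
    rw [Finset.sum_sub_distrib]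
    ring
  have hρpos : 0 < ρ := by
    have h1 : 0 < ∑ j : Fin (n+1), r j :=
      Finset.sum_pos (fun j _ => hrpos j) Finset.univ_nonempty
    rw [hρ]
    rw [hrsum] at h1
    positivity
  set t : Fin (n+1) → ℝ := fun j => r j / ρ with ht
  have htpos : ∀ j, 0 < t j := fun j => div_pos (hrpos j) hρpos
  have hv : 0 < v0 - ∑ j, (v j)^2 := by
    rw [← hrsum]; exact Finset.sum_pos (fun j _ => hrpos j) Finset.univ_nonempty
  have htsum : ∑ j, t j = (n:ℝ) + 1 := by
    simp only [ht]
    rw [← Finset.sum_div, hrsum, hρ]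
    field_simp
  have hrhat2 : ∀ j, (rhat j)^2 = t j := fun j => by
    rw [hrhat j, Real.sq_sqrt (le_of_lt (htpos j))]
  have hrhatpos : ∀ j, 0 < rhat j := fun j => by
    rw [hrhat j]; exact Real.sqrt_pos.mpr (htpos j)
  have hζ0sq : ζ0^2 = ∑ j, (t j - 1)^2 / t j := by
    rw [hζ0, Real.sq_sqrt (Finset.sum_nonneg fun j _ => sq_nonneg _)]
    refine Finset.sum_congr rfl fun j _ => ?_
    have hne : rhat j ≠ 0 := ne_of_gt (hrhatpos j)
    have e1 : rhat j - 1/rhat j = (rhat j^2 - 1)/rhat j := by field_simp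
    rw [e1, div_pow, hrhat2 j]
  have hζ1sq : ζ1^2 = ∑ j, (1/t j - 1)^2 := by
    rw [hζ1, Real.sq_sqrt (Finset.sum_nonneg fun j _ => sq_nonneg _)]
    exact Finset.sum_congr rfl fun j _ => by rw [hrhat2 j]
  have hζ1nonneg : 0 ≤ ζ1 := by rw [hζ1]; exact Real.sqrt_nonneg _
  have hβ0 : 0 ≤ β := by
    rcases eq_or_lt_of_le hζ1nonneg with h0 | h0
    · rw [← h0, div_zero] at hδ; exact hδ
    · exact le_trans (div_nonneg (sq_nonneg _) hζ1nonneg) hδ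
  have hAle : ∀ j, (t j - 1)^2 / t j ≤ ζ0^2 := by
    intro j
    rw [hζ0sq]
    exact Finset.single_le_sum (f := fun j => (t j - 1)^2 / t j)
      (fun j _ => div_nonneg (sq_nonneg _) (htpos j).le) (Finset.mem_univ j)
  obtain ⟨k, -, hk⟩ := Finset.exists_min_image Finset.univ t Finset.univ_nonempty
  have hζ1ζ0 : ζ1^2 * t k ≤ ζ0^2 := by
    rw [hζ1sq, hζ0sq, Finset.sum_mul]
    apply Finset.sum_le_sum
    intro j _
    have htj := htpos j
    have hinv : t j * (1/t j) = 1 := mul_one_div_cancel (ne_of_gt htj)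
    rw [le_div_iff₀ htj]
    have hkj := hk j (Finset.mem_univ j)
    have e2 : (1/t j - 1)^2 * (t j)^2 = (t j - 1)^2 := by field_simp; ring
    have e3 : 0 ≤ (1/t j - 1)^2 * (t j * (t j - t k)) :=
      mul_nonneg (sq_nonneg _) (mul_nonneg htj.le (by linarith))
    nlinarith [e2, e3]
  have key : ∀ j, 1 - β ≤ t j ∧ t j ≤ 1/(1-β) := by
    rcases eq_or_lt_of_le hζ1nonneg with h0 | h0
    · -- ζ1 = 0 : all t j = 1
      have hsum0 : ∑ j, (1/t j - 1)^2 = 0 := by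
        rw [← hζ1sq, ← h0]; ring
      intro j
      have hz : (1/t j - 1)^2 = 0 := by
        have h1 := Finset.single_le_sum (f := fun j => (1/t j - 1)^2)
          (fun j _ => sq_nonneg _) (Finset.mem_univ j)
        rw [hsum0] at h1
        exact le_antisymm h1 (sq_nonneg _)
      have h2 : 1/t j = 1 := by
        have := sq_eq_zero_iff.mp hz; linarith
      have h3 : t j = 1 := by
        have htj := htpos j
        field_simp at h2
        linarith
      rw [h3]
      constructor
      · linarith
      · rw [le_div_iff₀ hβ1]; nlinarith
    · -- ζ1 > 0
      have hζ0β : ζ0^2 ≤ β * ζ1 := by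
        rw [div_le_iff₀ h0] at hδ; linarith
      have hζ1b : ζ1 * t k ≤ β := by
        nlinarith [hζ1ζ0, hζ0β, htpos k]
      have hmlb : 1 - β ≤ t k := by
        have hAk : (t k - 1)^2 / t k ≤ β * ζ1 := le_trans (hAle k) hζ0β
        rw [div_le_iff₀ (htpos k)] at hAk
        have h1 : (t k - 1)^2 ≤ β^2 := by nlinarith [htpos k]
        nlinarith [h1]
      intro j
      have hjlb : 1 - β ≤ t j := le_trans hmlb (hk j (Finset.mem_univ j))
      refine ⟨hjlb, ?_⟩
      have hAj : (t j - 1)^2 / t j ≤ β * ζ1 := le_trans (hAle j) hζ0β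
      rw [div_le_iff₀ (htpos j)] at hAj
      have hζ1β : ζ1 * (1 - β) ≤ β := by nlinarith [hζ1b, hmlb, hζ1nonneg]
      have hAj2 : (t j - 1)^2 * (1 - β) ≤ β^2 * t j := by
        nlinarith [mul_le_mul_of_nonneg_left hζ1β (mul_nonneg hβ0 (htpos j).le), hAj]
      rw [le_div_iff₀ hβ1]
      by_contra hcon
      push_neg at hcon
      have hb : 0 < t j - (1 - β) := by
        nlinarith [mul_nonneg hβ0 (htpos j).le]
      have hprod : 0 < (t j * (1 - β) - 1) * (t j - (1 - β)) :=
        mul_pos (by linarith) hb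
      nlinarith [hAj2, hprod]
  intro i
  have hkey := key i.succ
  have hri : r i.succ = x i * s i - (v i)^2 := by rw [hr]; simp [Fin.cons_succ]
  have hxs : x i * s i = (v i)^2 + r i.succ := by rw [hri]; ring
  have hdeq : xw i * sw i = (v i)^2 + ρ := hcenter i
  have hdenpos : 0 < (v i)^2 + ρ := by positivity
  have htdef : t i.succ = r i.succ / ρ := rfl
  have hlo : (1 - β) * ρ ≤ r i.succ := by
    have := hkey.1
    rw [htdef, le_div_iff₀ hρpos] at this
    linarith
  have hhi : (1 - β) * r i.succ ≤ ρ := by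
    have := hkey.2
    rw [htdef, div_le_div_iff₀ hρpos hβ1] at this
    linarith
  rw [hxs, hdeq]
  constructor
  · rw [le_div_iff₀ hdenpos]
    nlinarith [sq_nonneg (v i), hβ0, hlo]
  · rw [div_le_div_iff₀ hdenpos hβ1]
    nlinarith [sq_nonneg (v i), hβ0, hhi, mul_nonneg hβ0 (sq_nonneg (v i))]
end

section
/- Let z = (x, s, w) with x, s > 0 componentwise, w = (v₀, v), rᵢ(z) > 0 for i = 0,…,n, and suppose δ(z) ≤ β for some β < 1/2. Then ζ₂(z) = ‖r̂(z)² − ē‖ ≤ β/(1−β); equivalently ‖r(z) − ρ(w) ē‖ ≤ (β/(1−β)) ρ(w). -/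
set_option maxHeartbeats 1000000 in
/-- If `δ(z) ≤ β` with `β < 1/2`, then `ζ₂(z) = ‖r̂(z)² - ē‖ ≤ β/(1-β)`,
equivalently `‖r(z) - ρ(w) ē‖ ≤ (β/(1-β)) ρ(w)`. -/
theorem stmt_8 (n : ℕ) (hn : 1 ≤ n) (x s v : Fin n → ℝ) (v0 : ℝ)
    (hx : ∀ i, 0 < x i) (hs : ∀ i, 0 < s i)
    (r : Fin (n + 1) → ℝ)
    (hr : r = Fin.cons (v0 - ∑ i, x i * s i) (fun i => x i * s i - (v i) ^ 2))
    (hrpos : ∀ i, 0 < r i)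
    (ρ : ℝ) (hρ : ρ = (v0 - ∑ i, (v i) ^ 2) / ((n : ℝ) + 1))
    (rhat : Fin (n + 1) → ℝ) (hrhat : ∀ i, rhat i = Real.sqrt (r i / ρ))
    (ζ0 ζ1 : ℝ)
    (hζ0 : ζ0 = Real.sqrt (∑ i, (rhat i - 1 / rhat i) ^ 2))
    (hζ1 : ζ1 = Real.sqrt (∑ i, (1 / (rhat i) ^ 2 - 1) ^ 2))
    (β : ℝ) (hβ : β < 1 / 2)
    (hδ : ζ0 ^ 2 / ζ1 ≤ β) :
    Real.sqrt (∑ i, ((rhat i) ^ 2 - 1) ^ 2) ≤ β / (1 - β) ∧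
    Real.sqrt (∑ i, (r i - ρ) ^ 2) ≤ (β / (1 - β)) * ρ := by
  -- ρ is positive
  have hsum : v0 - ∑ i, (v i) ^ 2 = ∑ i, r i := by
    rw [hr, Fin.sum_univ_succ]
    simp only [Fin.cons_zero, Fin.cons_succ]
    rw [Finset.sum_sub_distrib]
    ring
  have hρpos : 0 < ρ := by
    rw [hρ, hsum]
    apply div_pos
    · exact Finset.sum_pos (fun i _ => hrpos i) Finset.univ_nonempty
    · positivity
  -- basic facts about t_i = r i / ρ
  have ht : ∀ i, rhat i ^ 2 = r i / ρ := by
    intro i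
    rw [hrhat i, Real.sq_sqrt (le_of_lt (div_pos (hrpos i) hρpos))]
  have htpos : ∀ i, 0 < rhat i ^ 2 := fun i => by
    rw [ht i]; exact div_pos (hrpos i) hρpos
  set p : Fin (n + 1) → ℝ := fun i => rhat i ^ 2 - 1 with hp
  set q : Fin (n + 1) → ℝ := fun i => 1 / rhat i ^ 2 - 1 with hq
  -- componentwise identities
  have hpq : ∀ i, p i * q i = -(p i + q i) := by
    intro i
    have h := (htpos i).ne'
    have h' : rhat i ≠ 0 := fun h0 => h (by rw [h0]; ring)
    simp only [hp, hq]
    field_simp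
    ring
  have hpqneg : ∀ i, 0 ≤ -(p i * q i) := by
    intro i
    have h := htpos i
    have heq : p i * q i = -((rhat i ^ 2 - 1) ^ 2 / rhat i ^ 2) := by
      have h' : rhat i ≠ 0 := fun h0 => by rw [h0] at h; norm_num at h
      simp only [hp, hq]
      field_simp
      ring
    rw [heq, neg_neg]
    exact div_nonneg (sq_nonneg _) h.le
  have hz0term : ∀ i, (rhat i - 1 / rhat i) ^ 2 = p i + q i := by
    intro i
    have h : rhat i ≠ 0 := by
      intro h0
      exact absurd (h0 ▸ htpos i) (by norm_num)
    simp only [hp, hq]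
    field_simp
    ring
  set c : ℝ := ∑ i, (p i + q i) with hc
  set A : ℝ := ∑ i, (p i) ^ 2 with hA
  set B : ℝ := ∑ i, (q i) ^ 2 with hB
  have hApos : 0 ≤ A := Finset.sum_nonneg fun i _ => sq_nonneg _
  have hBpos : 0 ≤ B := Finset.sum_nonneg fun i _ => sq_nonneg _
  have hcnn : 0 ≤ c := by
    rw [hc]
    apply Finset.sum_nonneg
    intro i _
    have h1 := hpqneg i
    have h2 := hpq i
    linarith
  have hζ0sq : ζ0 ^ 2 = c := by
    rw [hζ0, Real.sq_sqrt (Finset.sum_nonneg fun i _ => sq_nonneg _)]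
    rw [hc]
    exact Finset.sum_congr rfl fun i _ => hz0term i
  have hζ1B : ζ1 = Real.sqrt B := by rw [hζ1, hB]
  have hβ0 : 0 ≤ β := le_trans (div_nonneg (sq_nonneg _) (hζ1 ▸ Real.sqrt_nonneg _)) hδ
  set b : ℝ := Real.sqrt B with hbdef
  have hbnn : 0 ≤ b := Real.sqrt_nonneg _
  have hbsq : b ^ 2 = B := Real.sq_sqrt hBpos
  -- c ≤ β * b
  have hcb : c ≤ β * b := by
    rcases eq_or_lt_of_le hbnn with h0 | h0
    · -- b = 0 → B = 0 → q = 0 → p = 0 → c = 0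
      have hB0 : B = 0 := by rw [← hbsq, ← h0]; ring
      have hs0 : ∑ i, (q i) ^ 2 = 0 := by rw [← hB]; exact hB0
      have hq0 : ∀ i, q i = 0 := by
        intro i
        have h1 := (Finset.sum_eq_zero_iff_of_nonneg
          (fun j _ => sq_nonneg (q j))).mp hs0 i (Finset.mem_univ i)
        exact pow_eq_zero_iff (two_ne_zero) |>.mp h1
      have hp0 : ∀ i, p i = 0 := by
        intro i
        have h1 := hpq i
        rw [hq0 i] at h1
        simpa using h1
      have hc0 : c = 0 := by
        rw [hc]; apply Finset.sum_eq_zero; intro i _; rw [hp0 i, hq0 i]; ring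
      rw [hc0, ← h0]
      simp
    · have hζ1pos : 0 < ζ1 := by rw [hζ1B]; exact h0
      have h1 := (div_le_iff₀ hζ1pos).mp hδ
      rw [hζ0sq, hζ1B] at h1
      exact h1
  -- A + B ≤ c^2 + 2c
  have hsumsq : ∑ i, (p i + q i) ^ 2 ≤ c ^ 2 := by
    have hcc : (∑ i, -(p i * q i)) = c := by
      rw [hc]
      exact Finset.sum_congr rfl fun i _ => by rw [hpq i]; ring
    calc ∑ i, (p i + q i) ^ 2 = ∑ i, (-(p i * q i)) ^ 2 := by
          exact Finset.sum_congr rfl fun i _ => by rw [hpq i]; ring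
      _ ≤ (∑ i, -(p i * q i)) ^ 2 :=
          Finset.sum_sq_le_sq_sum_of_nonneg fun i _ => hpqneg i
      _ = c ^ 2 := by rw [hcc]
  have hAB : A + B ≤ c ^ 2 + 2 * c := by
    have hexp : ∑ i, (p i + q i) ^ 2 = A + B + 2 * ∑ i, p i * q i := by
      rw [hA, hB, Finset.mul_sum, ← Finset.sum_add_distrib, ← Finset.sum_add_distrib]
      exact Finset.sum_congr rfl fun i _ => by ring
    have hsumpq : ∑ i, p i * q i = -c := by
      rw [hc, ← Finset.sum_neg_distrib]
      exact Finset.sum_congr rfl fun i _ => hpq i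
    rw [hsumpq] at hexp
    linarith [hsumsq, hexp]
  -- key algebra: A ≤ (β/(1-β))^2
  have h1β : 0 < 1 - β := by linarith
  have h1β' : 0 < 1 + β := by linarith
  have hE : A ≤ β ^ 2 * b ^ 2 + 2 * β * b - b ^ 2 := by
    have hcsq : c ^ 2 ≤ (β * b) ^ 2 := by
      have := mul_le_mul hcb hcb hcnn (mul_nonneg hβ0 hbnn)
      nlinarith [this]
    nlinarith [hAB, hbsq, hcb, hcsq]
  have hid : (1 + β) * (β ^ 2 - (1 - β) ^ 2 * (β ^ 2 * b ^ 2 + 2 * β * b - b ^ 2))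
      = (1 - β) * ((1 - β ^ 2) * b - β) ^ 2 + 2 * β ^ 3 := by ring
  have h2 : 0 ≤ (1 - β) * ((1 - β ^ 2) * b - β) ^ 2 + 2 * β ^ 3 :=
    add_nonneg (mul_nonneg h1β.le (sq_nonneg _))
      (by nlinarith [pow_nonneg hβ0 3])
  have hX : 0 ≤ β ^ 2 - (1 - β) ^ 2 * (β ^ 2 * b ^ 2 + 2 * β * b - b ^ 2) := by
    nlinarith [hid, h2, h1β']
  have hkey : A ≤ (β / (1 - β)) ^ 2 := by
    rw [div_pow, le_div_iff₀ (by positivity)]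
    nlinarith [mul_le_mul_of_nonneg_right hE (sq_nonneg (1 - β)), hX]
  have hgoal1 : Real.sqrt (∑ i, ((rhat i) ^ 2 - 1) ^ 2) ≤ β / (1 - β) := by
    have h3 : Real.sqrt A ≤ β / (1 - β) := by
      rw [show β / (1 - β) = Real.sqrt ((β / (1 - β)) ^ 2) from
        (Real.sqrt_sq (by positivity)).symm]
      exact Real.sqrt_le_sqrt hkey
    exact h3
  refine ⟨hgoal1, ?_⟩
  -- second goal
  have hrρ : ∀ i, r i - ρ = ρ * p i := by
    intro i
    simp only [hp]
    rw [ht i]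
    field_simp
  have hsum2 : ∑ i, (r i - ρ) ^ 2 = ρ ^ 2 * A := by
    rw [hA, Finset.mul_sum]
    exact Finset.sum_congr rfl fun i _ => by rw [hrρ i]; ring
  rw [hsum2, Real.sqrt_mul (sq_nonneg ρ), Real.sqrt_sq hρpos.le]
  calc ρ * Real.sqrt A ≤ ρ * (β / (1 - β)) :=
        mul_le_mul_of_nonneg_left hgoal1 hρpos.le
    _ = (β / (1 - β)) * ρ := by ring
end

section
/- Let z = (x, s, w) with x, s > 0 componentwise, w = (v₀, v), rᵢ(z) > 0 for i = 0,…,n, and suppose δ(z) ≤ β for some 0 < β < 1/3. Then Ψ(z) ≤ ω_*(β/(1−β)) < ω_*(2β/(1−β)). -/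
lemma log_cubic {h : ℝ} (hh : -1 < h) :
    Real.log (1 + h) ≤ h - h ^ 2 / 2 + h ^ 3 / 3 := by
  set f : ℝ → ℝ := fun y => y - y ^ 2 / 2 + y ^ 3 / 3 - Real.log (1 + y) with hf
  have key : ∀ x ∈ Set.Ioi (-1 : ℝ), HasDerivAt f (x ^ 3 / (1 + x)) x := by
    intro x hx
    have hx1 : (0:ℝ) < 1 + x := by have : (-1:ℝ) < x := hx; linarith
    have h1 : HasDerivAt (fun y : ℝ => 1 + y) 1 x := by
      simpa using (hasDerivAt_id x).const_add (1:ℝ)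
    have hlog : HasDerivAt (fun y => Real.log (1 + y)) (1 / (1 + x)) x := by
      simpa using h1.log (ne_of_gt hx1)
    have hpoly : HasDerivAt (fun y : ℝ => y - y ^ 2 / 2 + y ^ 3 / 3)
        (1 - x + x ^ 2) x := by
      have := ((hasDerivAt_id x).sub (((hasDerivAt_pow 2 x)).div_const 2)).add
        ((hasDerivAt_pow 3 x).div_const 3)
      refine this.congr_deriv ?_
      norm_num
    have := hpoly.sub hlog
    refine this.congr_deriv ?_
    field_simp
    ring
  have hdiff : ∀ x ∈ Set.Ioi (-1 : ℝ), DifferentiableAt ℝ f x :=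
    fun x hx => (key x hx).differentiableAt
  have hderiv : ∀ x ∈ Set.Ioi (-1 : ℝ), deriv f x = x ^ 3 / (1 + x) :=
    fun x hx => (key x hx).deriv
  have hf0 : f 0 = 0 := by simp [hf]
  have main : 0 ≤ f h := by
    rcases le_or_gt 0 h with h0 | h0
    · have hsub : Set.Icc (0:ℝ) h ⊆ Set.Ioi (-1 : ℝ) := fun y hy => by
        simp only [Set.mem_Ioi]; linarith [hy.1]
      have hsub' : interior (Set.Icc (0:ℝ) h) ⊆ Set.Ioi (-1:ℝ) := by
        refine subset_trans ?_ hsub; exact interior_subset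
      have mono : MonotoneOn f (Set.Icc 0 h) := by
        apply monotoneOn_of_deriv_nonneg (convex_Icc 0 h)
        · exact fun y hy => ((hdiff y (hsub hy)).continuousAt).continuousWithinAt
        · exact fun y hy => ((hdiff y (hsub' hy)).differentiableWithinAt)
        · intro y hy
          rw [hderiv y (hsub' hy)]
          rw [interior_Icc] at hy
          have h1y : (0:ℝ) < 1 + y := by linarith [hy.1]
          exact div_nonneg (pow_nonneg hy.1.le 3) h1y.le
      have := mono (Set.left_mem_Icc.mpr h0) (Set.right_mem_Icc.mpr h0) h0
      linarith [hf0 ▸ this]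
    · have hsub : Set.Icc h (0:ℝ) ⊆ Set.Ioi (-1 : ℝ) := fun y hy => by
        simp only [Set.mem_Ioi]; linarith [hy.1]
      have hsub' : interior (Set.Icc h (0:ℝ)) ⊆ Set.Ioi (-1:ℝ) :=
        subset_trans interior_subset hsub
      have anti : AntitoneOn f (Set.Icc h 0) := by
        apply antitoneOn_of_deriv_nonpos (convex_Icc h 0)
        · exact fun y hy => ((hdiff y (hsub hy)).continuousAt).continuousWithinAt
        · exact fun y hy => ((hdiff y (hsub' hy)).differentiableWithinAt)
        · intro y hy
          rw [hderiv y (hsub' hy)]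
          rw [interior_Icc] at hy
          have hy1 : (0:ℝ) < 1 + y := by linarith [hy.1, hh]
          have : y ^ 3 ≤ 0 := Odd.pow_nonpos (by decide) hy.2.le
          exact div_nonpos_of_nonpos_of_nonneg this hy1.le
      have := anti (Set.left_mem_Icc.mpr h0.le) (Set.right_mem_Icc.mpr h0.le) h0.le
      linarith [hf0 ▸ this]
  simp only [hf] at main
  linarith

set_option maxHeartbeats 1000000 in
/-- If `δ(z) ≤ β` with `0 < β < 1/3`, then
`Ψ(z) ≤ ω_*(β/(1-β)) < ω_*(2β/(1-β))`, where `ω_*(t) = -t - ln(1-t)`. -/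
theorem stmt_9 (n : ℕ) (hn : 1 ≤ n) (x s v : Fin n → ℝ) (v0 : ℝ)
    (hx : ∀ i, 0 < x i) (hs : ∀ i, 0 < s i)
    (r : Fin (n + 1) → ℝ)
    (hr : r = Fin.cons (v0 - ∑ i, x i * s i) (fun i => x i * s i - (v i) ^ 2))
    (hrpos : ∀ i, 0 < r i)
    (ρ : ℝ) (hρ : ρ = (v0 - ∑ i, (v i) ^ 2) / ((n : ℝ) + 1))
    (rhat : Fin (n + 1) → ℝ) (hrhat : ∀ i, rhat i = Real.sqrt (r i / ρ))
    (ζ0 ζ1 : ℝ)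
    (hζ0 : ζ0 = Real.sqrt (∑ i, (rhat i - 1 / rhat i) ^ 2))
    (hζ1 : ζ1 = Real.sqrt (∑ i, (1 / (rhat i) ^ 2 - 1) ^ 2))
    (β : ℝ) (hβ0 : 0 < β) (hβ : β < 1 / 3)
    (hδ : ζ0 ^ 2 / ζ1 ≤ β)
    (ωs : ℝ → ℝ) (hωs : ∀ t, ωs t = -t - Real.log (1 - t)) :
    (-∑ i, Real.log ((rhat i) ^ 2)) ≤ ωs (β / (1 - β)) ∧
    ωs (β / (1 - β)) < ωs (2 * β / (1 - β)) := by
  have h1β : (0:ℝ) < 1 - β := by linarith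
  obtain ⟨τ, hτdef⟩ : ∃ τ : ℝ, τ = β / (1 - β) := ⟨_, rfl⟩
  rw [← hτdef]
  have hτpos : 0 < τ := hτdef ▸ div_pos hβ0 h1β
  have hβτ : β * (1 + τ) = τ := by
    rw [hτdef]; field_simp; ring
  have hτhalf : τ < 1/2 := by
    rw [hτdef, div_lt_iff₀ h1β]; linarith
  have h1τ : (0:ℝ) < 1 - τ := by linarith
  -- Part 2
  have part2 : ωs τ < ωs (2 * β / (1 - β)) := by
    have h2τ : 2 * β / (1 - β) = 2 * τ := by rw [hτdef]; ring
    rw [h2τ, hωs, hωs]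
    have hx2 : (0:ℝ) < 1 - 2*τ := by linarith
    have hlog := Real.log_le_sub_one_of_pos
      (show (0:ℝ) < (1 - 2*τ)/(1 - τ) from by positivity)
    rw [Real.log_div (by linarith) (by linarith)] at hlog
    have h5 : (1 - 2*τ)/(1 - τ) - 1 < -τ := by
      rw [div_sub_one (by linarith : (1:ℝ) - τ ≠ 0), div_lt_iff₀ h1τ]
      nlinarith [hτpos]
    have h6 : Real.log (1 - 2*τ) - Real.log (1 - τ) < -τ := lt_of_le_of_lt hlog h5
    have h7 : (1:ℝ) - 2 * τ = 1 - 2*τ := by ring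
    rw [h7]
    linarith
  refine ⟨?_, part2⟩
  -- Part 1
  have hrsum : ∑ i, r i = v0 - ∑ i, (v i)^2 := by
    subst hr
    rw [Fin.sum_cons, Finset.sum_sub_distrib]
    ring
  have hSpos : 0 < ∑ i, r i := Finset.sum_pos (fun i _ => hrpos i) Finset.univ_nonempty
  have hS : (0:ℝ) < v0 - ∑ i, (v i)^2 := hrsum ▸ hSpos
  have hρpos : 0 < ρ := by
    rw [hρ]; exact div_pos hS (by positivity)
  obtain ⟨t, htdef⟩ : ∃ t : Fin (n+1) → ℝ, t = fun i => r i / ρ := ⟨_, rfl⟩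
  have htpos : ∀ i, 0 < t i := fun i => by
    rw [htdef]; exact div_pos (hrpos i) hρpos
  have hrhat_sq : ∀ i, rhat i ^ 2 = t i := fun i => by
    rw [hrhat, htdef]; exact Real.sq_sqrt (div_pos (hrpos i) hρpos).le
  have hrhatpos : ∀ i, 0 < rhat i := fun i => by
    rw [hrhat]; exact Real.sqrt_pos.mpr (div_pos (hrpos i) hρpos)
  have hone : ∑ _i : Fin (n+1), (1:ℝ) = (n:ℝ) + 1 := by
    simp
  have htsum : ∑ i, t i = (n:ℝ) + 1 := by
    have e : ∑ i, t i = (∑ i, r i) / ρ := by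
      rw [htdef, Finset.sum_div]
    rw [e, hrsum, hρ]
    field_simp
  obtain ⟨q, hqdef⟩ : ∃ q : Fin (n+1) → ℝ, q = fun i => 1 / t i - 1 := ⟨_, rfl⟩
  have hq1 : ∀ i, 1 + q i = 1 / t i := fun i => by rw [hqdef]; ring
  have hqgt : ∀ i, -1 < q i := fun i => by
    rw [hqdef]
    have := one_div_pos.mpr (htpos i)
    simp only
    linarith
  -- ζ1 facts
  have hζ1_eq : ζ1 = Real.sqrt (∑ i, q i ^ 2) := by
    rw [hζ1]
    congr 1
    refine Finset.sum_congr rfl (fun i _ => ?_)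
    rw [hrhat_sq i, hqdef]
  have hζ1nonneg : 0 ≤ ζ1 := hζ1_eq ▸ Real.sqrt_nonneg _
  have hζ1sq : ζ1 ^ 2 = ∑ i, q i ^ 2 := by
    rw [hζ1_eq]; exact Real.sq_sqrt (Finset.sum_nonneg fun i _ => sq_nonneg _)
  -- ζ0 facts
  have hζ0sq : ζ0 ^ 2 = ∑ i, (rhat i - 1 / rhat i) ^ 2 := by
    rw [hζ0]; exact Real.sq_sqrt (Finset.sum_nonneg fun i _ => sq_nonneg _)
  have hterm : ∀ i, (rhat i - 1 / rhat i) ^ 2 = t i + 1 / t i - 2 := by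
    intro i
    have h0 := hrhatpos i
    have hne : rhat i ≠ 0 := ne_of_gt h0
    have h2 : rhat i * (1 / rhat i) = 1 := by field_simp
    calc (rhat i - 1 / rhat i) ^ 2
        = rhat i ^ 2 + (1 / rhat i) ^ 2 - 2 * (rhat i * (1 / rhat i)) := by ring
      _ = t i + 1 / t i - 2 := by
          rw [div_pow, one_pow, hrhat_sq i, h2]; ring
  have hA : ζ0 ^ 2 = ∑ i, q i := by
    have e1 : ∀ i ∈ Finset.univ, (rhat i - 1 / rhat i) ^ 2 = q i + (t i - 1) := by
      intro i _
      rw [hterm i, hqdef]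
      ring
    rw [hζ0sq, Finset.sum_congr rfl e1, Finset.sum_add_distrib,
      Finset.sum_sub_distrib, htsum, hone]
    ring
  -- |q i| ≤ ζ1
  have hqabs : ∀ i, |q i| ≤ ζ1 := by
    intro i
    have h1 : q i ^ 2 ≤ ∑ j, q j ^ 2 :=
      Finset.single_le_sum (f := fun j => q j ^ 2) (fun j _ => sq_nonneg _)
        (Finset.mem_univ i)
    rw [← hζ1sq] at h1
    calc |q i| = Real.sqrt (q i ^ 2) := (Real.sqrt_sq_eq_abs _).symm
      _ ≤ Real.sqrt (ζ1 ^ 2) := Real.sqrt_le_sqrt h1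
      _ = ζ1 := Real.sqrt_sq hζ1nonneg
  -- ζ1² ≤ (1+ζ1) ζ0²
  have hAB : ζ1 ^ 2 ≤ (1 + ζ1) * ζ0 ^ 2 := by
    rw [hζ1sq, hζ0sq, Finset.mul_sum]
    refine Finset.sum_le_sum (fun i _ => ?_)
    have hqi : q i ≤ ζ1 := (abs_le.mp (hqabs i)).2
    have h1t : 1 ≤ (1 + ζ1) * t i := by
      have h2 : 1 / t i ≤ 1 + ζ1 := by rw [← hq1 i]; linarith
      exact (div_le_iff₀ (htpos i)).mp h2
    have hq2t : (rhat i - 1 / rhat i) ^ 2 = q i ^ 2 * t i := by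
      rw [hterm i, hqdef]
      simp only
      have hne : t i ≠ 0 := ne_of_gt (htpos i)
      field_simp
      ring
    rw [hq2t]
    calc q i ^ 2 = q i ^ 2 * 1 := by ring
      _ ≤ q i ^ 2 * ((1 + ζ1) * t i) :=
          mul_le_mul_of_nonneg_left h1t (sq_nonneg _)
      _ = (1 + ζ1) * (q i ^ 2 * t i) := by ring
  -- ζ0² ≤ β ζ1
  have hδ' : ζ0 ^ 2 ≤ β * ζ1 := by
    rcases eq_or_lt_of_le hζ1nonneg with hz | hz
    · have hsum0 : ∑ i, q i ^ 2 = 0 := by rw [← hζ1sq, ← hz]; ring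
      have hq0 : ∀ i ∈ Finset.univ, q i ^ 2 = 0 :=
        (Finset.sum_eq_zero_iff_of_nonneg (fun i _ => sq_nonneg _)).mp hsum0
      have hqz : ∀ i ∈ Finset.univ, q i = 0 := fun i hi =>
        pow_eq_zero_iff (by norm_num) |>.mp (hq0 i hi)
      rw [hA, Finset.sum_eq_zero hqz]
      exact mul_nonneg hβ0.le hζ1nonneg
    · exact (div_le_iff₀ hz).mp hδ
  -- ζ1 ≤ τ
  have hζ1τ : ζ1 ≤ τ := by
    rcases eq_or_lt_of_le hζ1nonneg with hz | hz
    · rw [← hz]; exact hτpos.le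
    · have h1 : ζ1 ^ 2 ≤ (1 + ζ1) * (β * ζ1) :=
        le_trans hAB (mul_le_mul_of_nonneg_left hδ' (by positivity))
      have h2 : ζ1 ≤ (1 + ζ1) * β := by nlinarith [hz]
      rw [hτdef, le_div_iff₀ h1β]
      nlinarith [h2]
  -- Ψ rewrite
  have hΨ : (-∑ i, Real.log ((rhat i) ^ 2)) = ∑ i, Real.log (1 + q i) := by
    have e2 : ∀ i ∈ Finset.univ, Real.log ((rhat i) ^ 2) = -Real.log (1 + q i) := by
      intro i _
      rw [hrhat_sq i, hq1 i, one_div, Real.log_inv, neg_neg]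
    rw [Finset.sum_congr rfl e2, Finset.sum_neg_distrib, neg_neg]
  -- per-term cubic bound and sum bounds
  have hcub : ∑ i, Real.log (1 + q i) ≤ ∑ i, (q i - q i ^ 2 / 2 + q i ^ 3 / 3) :=
    Finset.sum_le_sum (fun i _ => log_cubic (hqgt i))
  have hsplit : ∑ i, (q i - q i ^ 2 / 2 + q i ^ 3 / 3)
      = ζ0 ^ 2 - ζ1 ^ 2 / 2 + (∑ i, q i ^ 3) / 3 := by
    rw [hA, hζ1sq, Finset.sum_add_distrib, Finset.sum_sub_distrib,
      ← Finset.sum_div, ← Finset.sum_div]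
  have hcube : ∑ i, q i ^ 3 ≤ ζ1 * ζ1 ^ 2 := by
    rw [hζ1sq, Finset.mul_sum]
    refine Finset.sum_le_sum (fun i _ => ?_)
    calc q i ^ 3 ≤ |q i ^ 3| := le_abs_self _
      _ = |q i| * q i ^ 2 := by rw [abs_pow, ← sq_abs]; ring
      _ ≤ ζ1 * q i ^ 2 := mul_le_mul_of_nonneg_right (hqabs i) (sq_nonneg _)
  -- ωs lower bound
  rw [hωs]
  have hωlb : τ ^ 2 / 2 + τ ^ 3 / 3 ≤ -τ - Real.log (1 - τ) := by
    have h := log_cubic (show (-1:ℝ) < -τ by linarith)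
    rw [show (1:ℝ) + -τ = 1 - τ by ring] at h
    nlinarith [h]
  -- final polynomial inequality
  have hkey : β * ζ1 - ζ1 ^ 2 / 2 + ζ1 ^ 3 / 3 ≤ τ ^ 2 / 2 + τ ^ 3 / 3 := by
    have ha : 2 * (1 + τ) * (β * ζ1) ≤ τ ^ 2 + ζ1 ^ 2 := by
      nlinarith [sq_nonneg (τ - ζ1), hβτ]
    have f1 : 0 ≤ (τ - ζ1) * ζ1 ^ 2 := mul_nonneg (by linarith) (sq_nonneg _)
    have f2 : 0 ≤ (1 - 2*τ) * (τ * ζ1 ^ 2) :=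
      mul_nonneg (by linarith) (mul_nonneg hτpos.le (sq_nonneg _))
    have f3 : 0 ≤ (τ - ζ1) * ζ1 ^ 2 * τ := mul_nonneg f1 hτpos.le
    have hb : ζ1 ^ 2 / 2 ≤ (1 + τ) * (ζ1 ^ 2 / 2 - ζ1 ^ 3 / 3) := by nlinarith [f1, f2, f3]
    have hc : τ ^ 2 / 2 ≤ (1 + τ) * (τ ^ 2 / 2 + τ ^ 3 / 3) := by nlinarith [pow_pos hτpos 3, pow_pos hτpos 4]
    have hcomb : (1 + τ) * (β * ζ1 - ζ1 ^ 2 / 2 + ζ1 ^ 3 / 3) ≤ (1 + τ) * (τ ^ 2 / 2 + τ ^ 3 / 3) := by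
      nlinarith [ha, hb, hc]
    exact le_of_mul_le_mul_left hcomb (by linarith)
  calc (-∑ i, Real.log ((rhat i) ^ 2)) = ∑ i, Real.log (1 + q i) := hΨ
    _ ≤ ζ0 ^ 2 - ζ1 ^ 2 / 2 + (∑ i, q i ^ 3) / 3 := by rw [← hsplit]; exact hcub
    _ ≤ β * ζ1 - ζ1 ^ 2 / 2 + ζ1 ^ 3 / 3 := by
        have e3 : ζ1 * ζ1 ^ 2 = ζ1 ^ 3 := by ring
        rw [← e3]
        linarith [hδ', hcube]
    _ ≤ τ ^ 2 / 2 + τ ^ 3 / 3 := hkey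
    _ ≤ -τ - Real.log (1 - τ) := hωlb
end

section
/- Let n ≥ 1, let r ∈ ℝ^{n+1} have positive components, set ρ = (∑_{i=0}^{n} rᵢ)/(n+1) and d = r − ρ ē, where ē ∈ ℝ^{n+1} is the all-ones vector. Let 0 < β < 1/3. If −∑_{i=0}^{n} ln(rᵢ/ρ) ≥ ω_*(2β/(1−β)), then ‖d‖ ≥ (2β/(1−β)) ρ. -/
open Real Set

private lemma mono_aux (f f' : ℝ → ℝ) (a b : ℝ) (hab : a ≤ b)
    (hd : ∀ x ∈ Set.Icc a b, HasDerivAt f (f' x) x)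
    (hf' : ∀ x ∈ Set.Ioo a b, 0 ≤ f' x) : f a ≤ f b := by
  have hmono : MonotoneOn f (Set.Icc a b) := by
    apply monotoneOn_of_deriv_nonneg (convex_Icc a b)
    · exact fun x hx => (hd x hx).continuousAt.continuousWithinAt
    · intro x hx
      rw [interior_Icc] at hx
      exact (hd x (Set.Ioo_subset_Icc_self hx)).differentiableAt.differentiableWithinAt
    · intro x hx
      rw [interior_Icc] at hx
      rw [(hd x (Set.Ioo_subset_Icc_self hx)).deriv]
      exact hf' x hx
  exact hmono (Set.left_mem_Icc.2 hab) (Set.right_mem_Icc.2 hab) hab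

private lemma hasDerivAt_log_one_sub (x : ℝ) (hx : x < 1) :
    HasDerivAt (fun y : ℝ => Real.log (1 - y)) (-(1 - x)⁻¹) x := by
  have h1 : (1 : ℝ) - x ≠ 0 := by linarith
  have hinner : HasDerivAt (fun y : ℝ => 1 - y) (-1) x := (hasDerivAt_id x).const_sub 1
  have := (Real.hasDerivAt_log h1).comp x hinner
  exact this.congr_deriv (by ring)

private lemma hasDerivAt_log_one_add (x : ℝ) (hx : -1 < x) :
    HasDerivAt (fun y : ℝ => Real.log (1 + y)) ((1 + x)⁻¹) x := by
  have h1 : (1 : ℝ) + x ≠ 0 := by linarith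
  have hinner : HasDerivAt (fun y : ℝ => 1 + y) 1 x := (hasDerivAt_id x).const_add 1
  have := (Real.hasDerivAt_log h1).comp x hinner
  exact this.congr_deriv (by ring)

/-- ω_*(s) ≥ s²/2 -/
private lemma omega_ge (s : ℝ) (h0 : 0 ≤ s) (h1 : s < 1) :
    s ^ 2 / 2 ≤ -s - Real.log (1 - s) := by
  have := mono_aux (fun t => -t - Real.log (1 - t) - t ^ 2 / 2)
      (fun t => -1 + (1 - t)⁻¹ - t) 0 s h0
      (fun x hx => by
        have hx1 : x < 1 := lt_of_le_of_lt hx.2 h1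
        have h1x : (0:ℝ) < 1 - x := by linarith
        have := ((hasDerivAt_id x).neg.sub (hasDerivAt_log_one_sub x hx1)).sub
          (((hasDerivAt_pow 2 x)).div_const 2)
        refine this.congr_deriv ?_
        push_cast; ring)
      (fun x hx => by
        have h1x : (0:ℝ) < 1 - x := by nlinarith [hx.2]
        have key : -1 + (1 - x)⁻¹ - x = x ^ 2 / (1 - x) := by
          field_simp; ring
        rw [key]; positivity)
  simpa using this

/-- ω_*(s) ≤ s²/(2(1-s)) -/
private lemma omega_le (s : ℝ) (h0 : 0 ≤ s) (h1 : s < 1) :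
    -s - Real.log (1 - s) ≤ s ^ 2 / (2 * (1 - s)) := by
  have := mono_aux (fun t => t ^ 2 / (2 * (1 - t)) + t + Real.log (1 - t))
      (fun t => ((2 * t) * (2 * (1 - t)) - t ^ 2 * (-2)) / (2 * (1 - t)) ^ 2 + 1 + (-(1 - t)⁻¹))
      0 s h0
      (fun x hx => by
        have hx1 : x < 1 := lt_of_le_of_lt hx.2 h1
        have h1x : (2:ℝ) * (1 - x) ≠ 0 := by
          intro hc; nlinarith
        have hd1 : HasDerivAt (fun t : ℝ => t ^ 2 / (2 * (1 - t)))
            (((2 * x) * (2 * (1 - x)) - x ^ 2 * (-2)) / (2 * (1 - x)) ^ 2) x := by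
          have hnum : HasDerivAt (fun t : ℝ => t ^ 2) (2 * x) x := by
            simpa using hasDerivAt_pow 2 x
          have hden : HasDerivAt (fun t : ℝ => 2 * (1 - t)) (-2) x := by
            have : HasDerivAt (fun t : ℝ => 1 - t) (-1) x := (hasDerivAt_id x).const_sub 1
            simpa using this.const_mul 2
          exact hnum.div hden h1x
        exact (hd1.add (hasDerivAt_id x)).add (hasDerivAt_log_one_sub x hx1))
      (fun x hx => by
        have h1x : (0:ℝ) < 1 - x := by nlinarith [hx.2]
        have key : ((2 * x) * (2 * (1 - x)) - x ^ 2 * (-2)) / (2 * (1 - x)) ^ 2 + 1 + (-(1 - x)⁻¹)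
            = x ^ 2 / (2 * (1 - x) ^ 2) := by
          field_simp; ring
        rw [key]; positivity)
  norm_num at this
  nlinarith [this]

/-- ω_*(y)/y² increasing: for 0 < y ≤ s < 1 : s² ω_*(y) ≤ y² ω_*(s). -/
private lemma omega_mono (y s : ℝ) (hy0 : 0 < y) (hys : y ≤ s) (hs1 : s < 1) :
    s ^ 2 * (-y - Real.log (1 - y)) ≤ y ^ 2 * (-s - Real.log (1 - s)) := by
  have hy1 : y < 1 := lt_of_le_of_lt hys hs1
  have hwy : -y - Real.log (1 - y) ≤ y ^ 2 / (2 * (1 - y)) := omega_le y hy0.le hy1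
  have := mono_aux
      (fun t => y ^ 2 * (-t - Real.log (1 - t)) - t ^ 2 * (-y - Real.log (1 - y)))
      (fun t => y ^ 2 * (-1 + (1 - t)⁻¹) - 2 * t * (-y - Real.log (1 - y)))
      y s hys
      (fun x hx => by
        have hx1 : x < 1 := lt_of_le_of_lt hx.2 hs1
        have hd1 : HasDerivAt (fun t : ℝ => -t - Real.log (1 - t)) (-1 + (1 - x)⁻¹) x := by
          have := (hasDerivAt_id x).neg.sub (hasDerivAt_log_one_sub x hx1)
          exact this.congr_deriv (by ring)
        have hd2 : HasDerivAt (fun t : ℝ => t ^ 2 * (-y - Real.log (1 - y)))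
            (2 * x * (-y - Real.log (1 - y))) x := by
          have := (hasDerivAt_pow 2 x).mul_const (-y - Real.log (1 - y))
          refine this.congr_deriv ?_
          push_cast; ring
        exact (hd1.const_mul (y ^ 2)).sub hd2)
      (fun x hx => by
        have hxy : y < x := hx.1
        have hx1 : x < 1 := hx.2.trans hs1
        have h1x : (0:ℝ) < 1 - x := by linarith
        have h1y : (0:ℝ) < 1 - y := by linarith
        have hx0 : 0 < x := hy0.trans hxy
        -- need: 2 * x * ω_*(y) ≤ y² * (x/(1-x)) , using ω_*(y) ≤ y²/(2(1-y)) ≤ y²/(2(1-x))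
        have h2 : -y - Real.log (1 - y) ≤ y ^ 2 / (2 * (1 - x)) := by
          apply hwy.trans
          apply div_le_div_of_nonneg_left (by positivity) (by positivity)
          nlinarith
        have hkey : y ^ 2 * (-1 + (1 - x)⁻¹) = y ^ 2 * (x / (1 - x)) := by
          field_simp; ring
        rw [hkey]
        have h3 : 2 * x * (-y - Real.log (1 - y)) ≤ 2 * x * (y ^ 2 / (2 * (1 - x))) := by
          apply mul_le_mul_of_nonneg_left h2 (by positivity)
        have h4 : 2 * x * (y ^ 2 / (2 * (1 - x))) = y ^ 2 * (x / (1 - x)) := by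
          field_simp
        linarith)
  nlinarith [this]

/-- For x ≥ 0: x - log(1+x) ≤ x²/2 -/
private lemma log_lb (x : ℝ) (hx : 0 ≤ x) : x - Real.log (1 + x) ≤ x ^ 2 / 2 := by
  have := mono_aux (fun y => Real.log (1 + y) - y + y ^ 2 / 2)
      (fun y => (1 + y)⁻¹ - 1 + y) 0 x hx
      (fun z hz => by
        have hz1 : -1 < z := by linarith [hz.1]
        have := ((hasDerivAt_log_one_add z hz1).sub (hasDerivAt_id z)).add
          ((hasDerivAt_pow 2 z).div_const 2)
        refine this.congr_deriv ?_
        push_cast; ring)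
      (fun z hz => by
        have hz0 : 0 < z := hz.1
        have h1z : (0:ℝ) < 1 + z := by linarith
        have key : (1 + z)⁻¹ - 1 + z = z ^ 2 / (1 + z) := by field_simp; ring
        rw [key]; positivity)
  norm_num at this
  nlinarith [this]

/-- scalar key inequality: for s ∈ (0,1), x ≥ -s :
    s² (x - log(1+x)) ≤ x² ω_*(s). -/
private lemma scalar_bound (s x : ℝ) (hs0 : 0 < s) (hs1 : s < 1) (hx : -s ≤ x) :
    s ^ 2 * (x - Real.log (1 + x)) ≤ x ^ 2 * (-s - Real.log (1 - s)) := by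
  rcases le_or_gt 0 x with hx0 | hx0
  · have h1 := log_lb x hx0
    have h2 := omega_ge s hs0.le hs1
    nlinarith [sq_nonneg x, sq_nonneg s]
  · set y := -x with hy
    have hy0 : 0 < y := by simp only [hy]; linarith
    have hys : y ≤ s := by simp only [hy]; linarith
    have h := omega_mono y s hy0 hys hs1
    have hrw : 1 + x = 1 - y := by simp only [hy]; ring
    rw [hrw]
    have hx2 : x ^ 2 = y ^ 2 := by simp only [hy]; ring
    have hx' : x = -y := by simp only [hy, neg_neg]
    rw [hx2, hx']
    linarith [h]

/-- If the functional proximity of `r` to its average `ρ` is at least `ω_*(2β/(1-β))`,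
then `‖r - ρ ē‖ ≥ (2β/(1-β)) ρ`. -/
theorem stmt_11 (n : ℕ) (hn : 1 ≤ n) (r : Fin (n + 1) → ℝ) (hr : ∀ i, 0 < r i)
    (ρ : ℝ) (hρ : ρ = (∑ i, r i) / ((n : ℝ) + 1))
    (β : ℝ) (hβ0 : 0 < β) (hβ : β < 1 / 3)
    (h : -(2 * β / (1 - β)) - Real.log (1 - 2 * β / (1 - β))
          ≤ -∑ i, Real.log (r i / ρ)) :
    (2 * β / (1 - β)) * ρ ≤ Real.sqrt (∑ i, (r i - ρ) ^ 2) := by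
  set t := 2 * β / (1 - β) with ht
  have hβ1 : (0:ℝ) < 1 - β := by linarith
  have ht0 : 0 < t := by positivity
  have ht1 : t < 1 := by
    rw [ht, div_lt_one hβ1]; linarith
  have hsum_pos : 0 < ∑ i, r i :=
    Finset.sum_pos (fun i _ => hr i) Finset.univ_nonempty
  have hρ0 : 0 < ρ := by
    rw [hρ]; positivity
  by_contra hcon
  push_neg at hcon
  have hS : ∑ i, (r i - ρ) ^ 2 < (t * ρ) ^ 2 :=
    (Real.sqrt_lt' (by positivity)).mp hcon
  set u : Fin (n + 1) → ℝ := fun i => (r i - ρ) / ρ with hu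
  have hsum_eq : ∑ i, r i = ((n : ℝ) + 1) * ρ := by
    rw [hρ]; field_simp
  have hu_sum : ∑ i, u i = 0 := by
    simp only [hu]
    rw [← Finset.sum_div]
    rw [Finset.sum_sub_distrib, Finset.sum_const, hsum_eq]
    simp [Finset.card_univ]
  have husq : ∑ i, (u i) ^ 2 < t ^ 2 := by
    have : ∑ i, (u i) ^ 2 = (∑ i, (r i - ρ) ^ 2) / ρ ^ 2 := by
      rw [Finset.sum_div]
      refine Finset.sum_congr rfl fun i _ => ?_
      rw [hu, div_pow]
    rw [this, div_lt_iff₀ (by positivity)]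
    nlinarith [hS]
  have hui : ∀ i, -t ≤ u i := by
    intro i
    have h1 : (u i) ^ 2 ≤ ∑ j, (u j) ^ 2 :=
      Finset.single_le_sum (fun j _ => sq_nonneg (u j)) (Finset.mem_univ i)
    nlinarith [h1, husq]
  have hlog : ∀ i, Real.log (r i / ρ) = Real.log (1 + u i) := by
    intro i
    congr 1
    rw [hu]
    field_simp; ring
  have hbound : ∀ i, t ^ 2 * (u i - Real.log (1 + u i))
      ≤ (u i) ^ 2 * (-t - Real.log (1 - t)) :=
    fun i => scalar_bound t (u i) ht0 ht1 (hui i)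
  have hsum_bound : t ^ 2 * (∑ i, (u i - Real.log (1 + u i)))
      ≤ (∑ i, (u i) ^ 2) * (-t - Real.log (1 - t)) := by
    rw [Finset.mul_sum, Finset.sum_mul]
    exact Finset.sum_le_sum fun i _ => hbound i
  have hω_pos : 0 < -t - Real.log (1 - t) := by
    have := omega_ge t ht0.le ht1
    nlinarith
  have hfinal : (∑ i, (u i) ^ 2) * (-t - Real.log (1 - t))
      < t ^ 2 * (-t - Real.log (1 - t)) :=
    mul_lt_mul_of_pos_right husq hω_pos
  have hrewrite : ∑ i, (u i - Real.log (1 + u i)) = -∑ i, Real.log (r i / ρ) := by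
    rw [Finset.sum_sub_distrib, hu_sum]
    simp only [hlog]
    ring
  rw [hrewrite] at hsum_bound
  have : t ^ 2 * (-∑ i, Real.log (r i / ρ)) < t ^ 2 * (-t - Real.log (1 - t)) :=
    lt_of_le_of_lt hsum_bound hfinal
  have hlt : -∑ i, Real.log (r i / ρ) < -t - Real.log (1 - t) :=
    lt_of_mul_lt_mul_left this (by positivity)
  linarith [h]
end

section
/- Let v, Δx, Δs ∈ ℝⁿ and define g ∈ ℝ^{n+1} by g₀ = ‖v‖²/(n+1) − Δxᵀ Δs and gᵢ = Δxᵢ Δsᵢ − vᵢ² + ‖v‖²/(n+1) for i = 1,…,n. Then ‖g‖ ≤ ‖v‖² + √((Δxᵀ Δs)² + ‖Δx Δs‖²), where Δx Δs denotes the componentwise product and ‖·‖ the Euclidean norm. -/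
/-- Bound on the norm of the vector `g(z)` appearing in the predictor-step analysis. -/
theorem stmt_12 (n : ℕ) (v dx ds : Fin n → ℝ) :
    Real.sqrt (((∑ j, (v j) ^ 2) / ((n : ℝ) + 1) - ∑ i, dx i * ds i) ^ 2
        + ∑ i, (dx i * ds i - (v i) ^ 2 + (∑ j, (v j) ^ 2) / ((n : ℝ) + 1)) ^ 2)
      ≤ (∑ j, (v j) ^ 2)
        + Real.sqrt ((∑ i, dx i * ds i) ^ 2 + ∑ i, (dx i * ds i) ^ 2) := by
  classical
  set S : ℝ := ∑ j, (v j) ^ 2 with hS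
  set s : ℝ := ∑ i, dx i * ds i with hs
  set μ : ℝ := S / ((n : ℝ) + 1) with hμ
  set a : Fin (n + 1) → ℝ := Fin.cons (-s) (fun i => dx i * ds i) with ha
  set b : Fin (n + 1) → ℝ := Fin.cons μ (fun i => μ - (v i) ^ 2) with hb
  have hSnn : 0 ≤ S := Finset.sum_nonneg fun i _ => sq_nonneg _
  have hn1 : (0 : ℝ) < (n : ℝ) + 1 := by positivity
  have hμnn : 0 ≤ μ := by positivity
  have hμS : ((n : ℝ) + 1) * μ = S := by rw [hμ]; field_simp [hn1.ne']
  -- sum of a^2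
  have hQ : ∑ i, (a i) ^ 2 = s ^ 2 + ∑ i, (dx i * ds i) ^ 2 := by
    rw [Fin.sum_univ_succ]
    simp [ha, neg_sq]
  -- sum of b^2 ≤ S^2
  have hv4 : ∑ i, ((v i) ^ 2) ^ 2 ≤ S ^ 2 :=
    Finset.sum_sq_le_sq_sum_of_nonneg fun i _ => sq_nonneg _
  have hBeq : ∑ i, (b i) ^ 2 = (∑ i, ((v i) ^ 2) ^ 2) - μ * S := by
    rw [Fin.sum_univ_succ]
    simp only [hb, Fin.cons_zero, Fin.cons_succ]
    have : ∑ i, (μ - (v i) ^ 2) ^ 2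
        = (n : ℝ) * μ ^ 2 - 2 * μ * S + ∑ i, ((v i) ^ 2) ^ 2 := by
      rw [Finset.sum_congr rfl (fun i _ => by ring :
        ∀ i ∈ Finset.univ, (μ - (v i) ^ 2) ^ 2 = μ ^ 2 - 2 * μ * (v i) ^ 2 + ((v i) ^ 2) ^ 2)]
      rw [Finset.sum_add_distrib, Finset.sum_sub_distrib, Finset.sum_const,
        ← Finset.mul_sum, ← hS]
      simp [Finset.card_univ]
    rw [this]
    nlinarith [hμS]
  have hB : ∑ i, (b i) ^ 2 ≤ S ^ 2 := by
    rw [hBeq]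
    nlinarith [mul_nonneg hμnn hSnn]
  have hBnn : 0 ≤ ∑ i, (b i) ^ 2 := Finset.sum_nonneg fun i _ => sq_nonneg _
  have hQnn : 0 ≤ ∑ i, (a i) ^ 2 := Finset.sum_nonneg fun i _ => sq_nonneg _
  -- Cauchy-Schwarz
  have hCS : ∑ i, a i * b i ≤ Real.sqrt (∑ i, (a i) ^ 2) * Real.sqrt (∑ i, (b i) ^ 2) := by
    have h1 := Finset.sum_mul_sq_le_sq_mul_sq Finset.univ a b
    have h2 : ∑ i, a i * b i ≤ |∑ i, a i * b i| := le_abs_self _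
    have h3 : |∑ i, a i * b i| = Real.sqrt ((∑ i, a i * b i) ^ 2) := (Real.sqrt_sq_eq_abs _).symm
    calc ∑ i, a i * b i ≤ Real.sqrt ((∑ i, a i * b i) ^ 2) := h3 ▸ h2
      _ ≤ Real.sqrt ((∑ i, (a i) ^ 2) * ∑ i, (b i) ^ 2) := Real.sqrt_le_sqrt h1
      _ = _ := Real.sqrt_mul hQnn _
  have hsqrtB : Real.sqrt (∑ i, (b i) ^ 2) ≤ S := by
    calc Real.sqrt (∑ i, (b i) ^ 2) ≤ Real.sqrt (S ^ 2) := Real.sqrt_le_sqrt hB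
      _ = S := Real.sqrt_sq hSnn
  set Q : ℝ := s ^ 2 + ∑ i, (dx i * ds i) ^ 2 with hQdef
  have hsqQ : Real.sqrt (∑ i, (a i) ^ 2) = Real.sqrt Q := by rw [hQ]
  have hsqQ2 : Real.sqrt Q ^ 2 = Q := Real.sq_sqrt (hQ ▸ hQnn)
  have hCS' : ∑ i, a i * b i ≤ Real.sqrt Q * S := by
    calc ∑ i, a i * b i ≤ Real.sqrt (∑ i, (a i) ^ 2) * Real.sqrt (∑ i, (b i) ^ 2) := hCS
      _ = Real.sqrt Q * Real.sqrt (∑ i, (b i) ^ 2) := by rw [hsqQ]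
      _ ≤ Real.sqrt Q * S := by
          exact mul_le_mul_of_nonneg_left hsqrtB (Real.sqrt_nonneg _)
  -- rewrite LHS inner expression as ∑ (a+b)^2
  have hLHS : (μ - s) ^ 2 + ∑ i, (dx i * ds i - (v i) ^ 2 + μ) ^ 2
      = ∑ i, (a i + b i) ^ 2 := by
    rw [Fin.sum_univ_succ]
    simp only [ha, hb, Fin.cons_zero, Fin.cons_succ]
    congr 1
    · ring
    · exact Finset.sum_congr rfl fun i _ => by ring
  have hsum : ∑ i, (a i + b i) ^ 2
      = ∑ i, (a i) ^ 2 + 2 * ∑ i, a i * b i + ∑ i, (b i) ^ 2 := by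
    rw [Finset.mul_sum, ← Finset.sum_add_distrib, ← Finset.sum_add_distrib]
    exact Finset.sum_congr rfl fun i _ => by ring
  have hmain : ∑ i, (a i + b i) ^ 2 ≤ (S + Real.sqrt Q) ^ 2 := by
    rw [hsum]
    have hexp : (S + Real.sqrt Q) ^ 2 = S ^ 2 + 2 * (Real.sqrt Q * S) + Q := by
      rw [add_sq, hsqQ2]; ring
    rw [hexp, hQ]
    linarith [hCS', hB]
  calc Real.sqrt ((μ - s) ^ 2 + ∑ i, (dx i * ds i - (v i) ^ 2 + μ) ^ 2)
      = Real.sqrt (∑ i, (a i + b i) ^ 2) := by rw [hLHS]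
    _ ≤ Real.sqrt ((S + Real.sqrt Q) ^ 2) := Real.sqrt_le_sqrt hmain
    _ = S + Real.sqrt Q := Real.sqrt_sq (by positivity)
end

section
/- Let z = (x, s, w) with x, s > 0 componentwise, w = (v₀, v), v ≠ 0, rᵢ(z) > 0 for i = 0,…,n, and δ(z) ≤ β for some β < 1/3. Suppose x(w), s(w) ∈ ℝⁿ have positive components and satisfy xᵢ(w) sᵢ(w) = vᵢ² + ρ(w) for all i. Let ᾱ(w) = v₀/‖v‖² (so ᾱ(w) > 1) and let a_ut ∈ ℝⁿ have components (a_ut)ᵢ = ‖v‖²/(n+1) − ρ(w) − 2vᵢ². Then ∑_{i=1}^{n} (a_ut)ᵢ²/(xᵢ sᵢ) ≤ (‖v‖²/(1−β)) · ᾱ(w)²/(ᾱ(w) − 1). -/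
set_option maxHeartbeats 1600000 in
/-- Bound on `∑ (a_ut)ᵢ²/(xᵢ sᵢ)` for the universal tangent direction. -/
theorem stmt_13 (n : ℕ) (hn : 1 ≤ n) (x s v : Fin n → ℝ) (v0 : ℝ)
    (hx : ∀ i, 0 < x i) (hs : ∀ i, 0 < s i) (hv : v ≠ 0)
    (r : Fin (n + 1) → ℝ)
    (hr : r = Fin.cons (v0 - ∑ i, x i * s i) (fun i => x i * s i - (v i) ^ 2))
    (hrpos : ∀ i, 0 < r i)
    (ρ : ℝ) (hρ : ρ = (v0 - ∑ i, (v i) ^ 2) / ((n : ℝ) + 1))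
    (rhat : Fin (n + 1) → ℝ) (hrhat : ∀ i, rhat i = Real.sqrt (r i / ρ))
    (ζ0 ζ1 : ℝ)
    (hζ0 : ζ0 = Real.sqrt (∑ i, (rhat i - 1 / rhat i) ^ 2))
    (hζ1 : ζ1 = Real.sqrt (∑ i, (1 / (rhat i) ^ 2 - 1) ^ 2))
    (β : ℝ) (hβ : β < 1 / 3)
    (hδ : ζ0 ^ 2 / ζ1 ≤ β)
    (xw sw : Fin n → ℝ) (hxw : ∀ i, 0 < xw i) (hsw : ∀ i, 0 < sw i)
    (hcenter : ∀ i, xw i * sw i = (v i) ^ 2 + ρ)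
    (αbar : ℝ) (hαbar : αbar = v0 / ∑ i, (v i) ^ 2)
    (aut : Fin n → ℝ)
    (haut : ∀ i, aut i = (∑ j, (v j) ^ 2) / ((n : ℝ) + 1) - ρ - 2 * (v i) ^ 2) :
    ∑ i, (aut i) ^ 2 / (x i * s i)
      ≤ ((∑ i, (v i) ^ 2) / (1 - β)) * (αbar ^ 2 / (αbar - 1)) := by
  have hN : (0:ℝ) < (n:ℝ) + 1 := by positivity
  set V := ∑ i, (v i) ^ 2 with hVdef
  clear_value V
  have hVpos : 0 < V := by
    rw [hVdef]
    obtain ⟨i, hi⟩ := Function.ne_iff.mp hv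
    exact Finset.sum_pos' (fun j _ => sq_nonneg _) ⟨i, Finset.mem_univ i, lt_of_le_of_ne (sq_nonneg _) (Ne.symm (pow_ne_zero 2 hi))⟩
  have hrsum : ∑ i, r i = v0 - V := by
    rw [hVdef, hr, Fin.sum_univ_succ]
    simp only [Fin.cons_zero, Fin.cons_succ]
    rw [Finset.sum_sub_distrib]
    ring
  have hDpos : 0 < v0 - V := by
    rw [← hrsum]; exact Finset.sum_pos (fun i _ => hrpos i) Finset.univ_nonempty
  have hρpos : 0 < ρ := by rw [hρ]; exact div_pos hDpos hN
  have hζ1nn : 0 ≤ ζ1 := hζ1 ▸ Real.sqrt_nonneg _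
  have hβ0 : 0 ≤ β := le_trans (div_nonneg (sq_nonneg _) hζ1nn) hδ
  have hβ1 : 0 < 1 - β := by linarith
  have hrρ : ∀ i, 0 < r i / ρ := fun i => div_pos (hrpos i) hρpos
  have hrhatpos : ∀ i, 0 < rhat i := fun i => by
    rw [hrhat]; exact Real.sqrt_pos.mpr (hrρ i)
  have hrhatsq : ∀ i, rhat i ^ 2 = r i / ρ := fun i => by
    rw [hrhat]; exact Real.sq_sqrt (hrρ i).le
  have hζ0sq : ζ0 ^ 2 = ∑ i, (r i / ρ + ρ / r i - 2) := by
    rw [hζ0, Real.sq_sqrt (Finset.sum_nonneg fun i _ => sq_nonneg _)]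
    refine Finset.sum_congr rfl fun i _ => ?_
    have ha := hrhatpos i
    have hab : rhat i * (1 / rhat i) = 1 := by field_simp
    have hb : (1 / rhat i) ^ 2 = ρ / r i := by
      rw [div_pow, one_pow, hrhatsq i, one_div_div]
    calc (rhat i - 1 / rhat i) ^ 2
        = rhat i ^ 2 + (1 / rhat i) ^ 2 - 2 * (rhat i * (1 / rhat i)) := by ring
      _ = r i / ρ + ρ / r i - 2 := by rw [hab, hb, hrhatsq i]; ring
  have hζ1sq : ζ1 ^ 2 = ∑ i, (ρ / r i - 1) ^ 2 := by
    rw [hζ1, Real.sq_sqrt (Finset.sum_nonneg fun i _ => sq_nonneg _)]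
    refine Finset.sum_congr rfl fun i _ => ?_
    rw [hrhatsq i, one_div_div]
  have hterm_nonneg : ∀ i, 0 ≤ r i / ρ + ρ / r i - 2 := by
    intro i
    have h1 : 0 < r i := hrpos i
    have h5 : r i / ρ + ρ / r i - 2 = (r i - ρ) ^ 2 / (ρ * r i) := by
      field_simp
      ring
    rw [h5]; positivity
  have hkey : ∀ i, (1 - β) * ρ ≤ r i := by
    rcases eq_or_lt_of_le hζ1nn with h0 | hpos
    · intro i
      have hsum0 : ∑ j, (ρ / r j - 1) ^ 2 = 0 := by rw [← hζ1sq, ← h0]; ring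
      have hi0 : (ρ / r i - 1) ^ 2 = 0 :=
        (Finset.sum_eq_zero_iff_of_nonneg (fun j _ => sq_nonneg _)).mp hsum0 i
          (Finset.mem_univ i)
      have h1 : ρ / r i - 1 = 0 := by
        exact pow_eq_zero_iff (by norm_num) |>.mp hi0
      have h2 : ρ = r i := by
        have h3 : ρ / r i = 1 := by linarith
        rw [div_eq_one_iff_eq (hrpos i).ne'] at h3
        exact h3
      nlinarith [hρpos, hβ0]
    · have hζ0le : ζ0 ^ 2 ≤ β * ζ1 := by
        rw [div_le_iff₀ hpos] at hδ; linarith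
      have hp : ∀ i, ρ / r i - 1 ≤ ζ1 := by
        intro i
        have h1 : (ρ / r i - 1) ^ 2 ≤ ζ1 ^ 2 := by
          rw [hζ1sq]
          exact Finset.single_le_sum (f := fun j => (ρ / r j - 1) ^ 2) (fun j _ => sq_nonneg _) (Finset.mem_univ i)
        nlinarith
      have hζ1ζ0 : ζ1 ^ 2 ≤ (1 + ζ1) * ζ0 ^ 2 := by
        rw [hζ1sq, hζ0sq, Finset.mul_sum]
        refine Finset.sum_le_sum fun i _ => ?_
        have h1 : 0 < r i := hrpos i
        have h2 := hp i
        have h3 := hterm_nonneg i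
        have h4 : (ρ / r i - 1) ^ 2 = (ρ / r i) * (r i / ρ + ρ / r i - 2) := by
          field_simp
          ring
        rw [h4]
        exact mul_le_mul_of_nonneg_right (by linarith) h3
      have hζ1b : ζ1 ≤ β / (1 - β) := by
        rw [le_div_iff₀ hβ1]
        nlinarith [mul_le_mul_of_nonneg_left hζ0le (by linarith : (0:ℝ) ≤ 1 + ζ1)]
      intro i
      have h2 := hp i
      have h3 : ρ / r i ≤ 1 / (1 - β) := by
        have h5 : β / (1 - β) + 1 = 1 / (1 - β) := by field_simp; ring
        linarith
      have h4 : 0 < r i := hrpos i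
      rw [div_le_div_iff₀ h4 hβ1] at h3
      linarith
  have hu : ∀ i : Fin n, 0 < v i ^ 2 + ρ := fun i => by positivity
  have hxs : ∀ i : Fin n, (1 - β) * (v i ^ 2 + ρ) ≤ x i * s i := by
    intro i
    have h1 : r i.succ = x i * s i - v i ^ 2 := by rw [hr]; simp
    have h2 := hkey i.succ
    rw [h1] at h2
    have h3 : 0 ≤ β * v i ^ 2 := mul_nonneg hβ0 (sq_nonneg _)
    linarith only [h2, h3]
  have step1 : ∑ i, aut i ^ 2 / (x i * s i)
      ≤ ∑ i, aut i ^ 2 / ((1 - β) * (v i ^ 2 + ρ)) := by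
    refine Finset.sum_le_sum fun i _ => ?_
    exact div_le_div_of_nonneg_left (sq_nonneg _) (mul_pos hβ1 (hu i)) (hxs i)
  have step2 : ∑ i, aut i ^ 2 / ((1 - β) * (v i ^ 2 + ρ))
      = (1 / (1 - β)) * ∑ i, aut i ^ 2 / (v i ^ 2 + ρ) := by
    rw [Finset.mul_sum]
    refine Finset.sum_congr rfl fun i _ => ?_
    rw [div_mul_eq_div_div, div_right_comm, eq_comm, one_div, inv_mul_eq_div]
  have hautval : ∀ i, aut i = v0 / ((n:ℝ) + 1) - 2 * (v i ^ 2 + ρ) := by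
    intro i
    rw [haut, hρ]
    field_simp
    ring
  have hidty : ∀ i : Fin n, aut i ^ 2 / (v i ^ 2 + ρ)
      = (v0 / ((n:ℝ) + 1)) ^ 2 * (1 / (v i ^ 2 + ρ)) - 4 * (v0 / ((n:ℝ) + 1))
        + 4 * (v i ^ 2 + ρ) := by
    intro i
    have hu0 : v i ^ 2 + ρ ≠ 0 := (hu i).ne'
    rw [hautval i, mul_one_div,
      show (v0 / ((n:ℝ) + 1) - 2 * (v i ^ 2 + ρ)) ^ 2
        = (v0 / ((n:ℝ) + 1)) ^ 2
          + (-(4 * (v0 / ((n:ℝ) + 1))) + 4 * (v i ^ 2 + ρ)) * (v i ^ 2 + ρ) from by ring,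
      add_div, mul_div_cancel_right₀ _ hu0]
    ring
  have hsum1 : ∑ i : Fin n, (1:ℝ) / (v i ^ 2 + ρ) ≤ (n:ℝ) / ρ := by
    calc ∑ i : Fin n, (1:ℝ) / (v i ^ 2 + ρ) ≤ ∑ _i : Fin n, 1 / ρ := by
          refine Finset.sum_le_sum fun i _ => ?_
          apply one_div_le_one_div_of_le hρpos
          nlinarith [sq_nonneg (v i)]
      _ = (n:ℝ) / ρ := by
          rw [Finset.sum_const, Finset.card_univ, Fintype.card_fin, nsmul_eq_mul]
          ring
  have hsum2 : ∑ i, (v i ^ 2 + ρ) = V + (n:ℝ) * ρ := by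
    rw [Finset.sum_add_distrib, Finset.sum_const, Finset.card_univ, Fintype.card_fin,
      nsmul_eq_mul, hVdef]
  have step3 : ∑ i, aut i ^ 2 / (v i ^ 2 + ρ) ≤ v0 ^ 2 / (v0 - V) := by
    have e1 : ∑ i, aut i ^ 2 / (v i ^ 2 + ρ)
        = (v0 / ((n:ℝ) + 1)) ^ 2 * (∑ i : Fin n, (1:ℝ) / (v i ^ 2 + ρ))
          - 4 * (v0 / ((n:ℝ) + 1)) * (n:ℝ) + 4 * (V + (n:ℝ) * ρ) := by
      rw [Finset.sum_congr rfl (fun i _ => hidty i), Finset.sum_add_distrib,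
        Finset.sum_sub_distrib, ← Finset.mul_sum, Finset.sum_const, Finset.card_univ,
        Fintype.card_fin, nsmul_eq_mul, ← Finset.mul_sum, hsum2]
      ring
    rw [e1]
    have hmono : (v0 / ((n:ℝ) + 1)) ^ 2 * (∑ i : Fin n, (1:ℝ) / (v i ^ 2 + ρ))
        ≤ (v0 / ((n:ℝ) + 1)) ^ 2 * ((n:ℝ) / ρ) :=
      mul_le_mul_of_nonneg_left hsum1 (sq_nonneg _)
    have hfrac : v0 ^ 2 / (v0 - V)
        - ((v0 / ((n:ℝ) + 1)) ^ 2 * ((n:ℝ) / ρ) - 4 * (v0 / ((n:ℝ) + 1)) * (n:ℝ)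
            + 4 * (V + (n:ℝ) * ρ))
        = (v0 - 2 * (v0 - V)) ^ 2 / (((n:ℝ) + 1) * (v0 - V)) := by
      rw [hρ]
      field_simp
      ring
    have hge : 0 ≤ (v0 - 2 * (v0 - V)) ^ 2 / (((n:ℝ) + 1) * (v0 - V)) :=
      div_nonneg (sq_nonneg _) (mul_pos hN hDpos).le
    linarith
  have hrhs : (V / (1 - β)) * (αbar ^ 2 / (αbar - 1))
      = (1 / (1 - β)) * (v0 ^ 2 / (v0 - V)) := by
    rw [hαbar]
    have h4 : v0 / V - 1 = (v0 - V) / V := by field_simp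
    rw [h4]
    field_simp [hVpos.ne', hDpos.ne', hβ1.ne']
  calc ∑ i, aut i ^ 2 / (x i * s i)
      ≤ ∑ i, aut i ^ 2 / ((1 - β) * (v i ^ 2 + ρ)) := step1
    _ = (1 / (1 - β)) * ∑ i, aut i ^ 2 / (v i ^ 2 + ρ) := step2
    _ ≤ (1 / (1 - β)) * (v0 ^ 2 / (v0 - V)) :=
        mul_le_mul_of_nonneg_left step3 (div_nonneg zero_le_one hβ1.le)
    _ = _ := hrhs.symm
end

section
/- Let z = (x, s, w) with x, s > 0 componentwise, w = (v₀, v), v ≠ 0, rᵢ(z) > 0 for i = 0,…,n, and δ(z) ≤ β for some β < 1/3. Suppose x(w), s(w) ∈ ℝⁿ have positive components and satisfy xᵢ(w) sᵢ(w) = vᵢ² + ρ(w) for all i. Let ᾱ(w) = v₀/‖v‖² (so ᾱ(w) > 1) and let a_ac ∈ ℝⁿ have components (a_ac)ᵢ = ‖v‖²/(n+1) − vᵢ² − xᵢ sᵢ. Then ∑_{i=1}^{n} (a_ac)ᵢ²/(xᵢ sᵢ) ≤ (‖v‖²/(1−β)) · ᾱ(w)²/(ᾱ(w) − 1). -/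
set_option maxHeartbeats 2000000

private lemma chord_bound (A μ V c : ℝ) (hμ : 0 < μ) (hV : 0 < V)
    (hc : 0 ≤ c) (hcV : c ≤ V) :
    (A - c) ^ 2 / (c + μ) ≤ A ^ 2 / μ + ((V - A) ^ 2 / (V + μ) - A ^ 2 / μ) * (c / V) := by
  have hcμ : 0 < c + μ := by linarith
  have hVμ : 0 < V + μ := by linarith
  rw [← sub_nonneg]
  have h : A ^ 2 / μ + ((V - A) ^ 2 / (V + μ) - A ^ 2 / μ) * (c / V) - (A - c) ^ 2 / (c + μ)
      = (A + μ) ^ 2 * (c * (V - c)) / (μ * (V + μ) * (c + μ)) := by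
    field_simp
    ring
  rw [h]
  apply div_nonneg
  · exact mul_nonneg (sq_nonneg _) (mul_nonneg hc (by linarith))
  · positivity

private lemma key_ineq (N V μ ρ : ℝ) (hN : 2 ≤ N) (hV : 0 < V) (hμ : 0 < μ) (hμρ : μ ≤ ρ) :
    (N - 1) * (((V / N) ^ 2) / μ) + ((V - V / N) ^ 2 / (V + μ) - ((V / N) ^ 2) / μ)
      - 2 * (N - 1) * (V / N) + 2 * V + (V + N * ρ - μ)
      ≤ (V + N * ρ) ^ 2 / (N * μ) := by
  have hN0 : 0 < N := by linarith
  have hVμ : 0 < V + μ := by linarith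
  have hρ : 0 < ρ := lt_of_lt_of_le hμ hμρ
  rw [← sub_nonneg]
  have h : (V + N * ρ) ^ 2 / (N * μ) -
      ((N - 1) * (((V / N) ^ 2) / μ) + ((V - V / N) ^ 2 / (V + μ) - ((V / N) ^ 2) / μ)
        - 2 * (N - 1) * (V / N) + 2 * V + (V + N * ρ - μ))
      = (N ^ 3 * ρ * (μ + V) * (ρ - μ) + 2 * N ^ 2 * V ^ 2 * (ρ - μ)
          + 2 * N * (N - 1) * V * μ ^ 2 + N ^ 2 * μ ^ 3 + 2 * N ^ 2 * V * μ * (ρ - μ)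
          + V ^ 2 * μ + 2 * V ^ 3) / (N ^ 2 * μ * (V + μ)) := by
    field_simp
    ring
  rw [h]
  apply div_nonneg _ (by positivity)
  have h1 : 0 ≤ ρ - μ := by linarith
  have h2 : 0 ≤ N - 1 := by linarith
  have t1 : 0 ≤ N ^ 3 * ρ * (μ + V) * (ρ - μ) := mul_nonneg (by positivity) h1
  have t2 : 0 ≤ 2 * N ^ 2 * V ^ 2 * (ρ - μ) := mul_nonneg (by positivity) h1
  have t3 : 0 ≤ 2 * N * (N - 1) * V * μ ^ 2 :=
    mul_nonneg (mul_nonneg (mul_nonneg (by positivity) h2) hV.le) (sq_nonneg μ)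
  have t4 : 0 ≤ 2 * N ^ 2 * V * μ * (ρ - μ) := mul_nonneg (by positivity) h1
  have t5 : 0 ≤ N ^ 2 * μ ^ 3 := by positivity
  have t6 : 0 ≤ V ^ 2 * μ := by positivity
  have t7 : 0 ≤ 2 * V ^ 3 := by positivity
  linarith

/-- Bound on `∑ (a_ac)ᵢ²/(xᵢ sᵢ)` for the auto-corrector direction. -/
theorem stmt_14 (n : ℕ) (hn : 1 ≤ n) (x s v : Fin n → ℝ) (v0 : ℝ)
    (hx : ∀ i, 0 < x i) (hs : ∀ i, 0 < s i) (hv : v ≠ 0)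
    (r : Fin (n + 1) → ℝ)
    (hr : r = Fin.cons (v0 - ∑ i, x i * s i) (fun i => x i * s i - (v i) ^ 2))
    (hrpos : ∀ i, 0 < r i)
    (ρ : ℝ) (hρ : ρ = (v0 - ∑ i, (v i) ^ 2) / ((n : ℝ) + 1))
    (rhat : Fin (n + 1) → ℝ) (hrhat : ∀ i, rhat i = Real.sqrt (r i / ρ))
    (ζ0 ζ1 : ℝ)
    (hζ0 : ζ0 = Real.sqrt (∑ i, (rhat i - 1 / rhat i) ^ 2))
    (hζ1 : ζ1 = Real.sqrt (∑ i, (1 / (rhat i) ^ 2 - 1) ^ 2))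
    (β : ℝ) (hβ : β < 1 / 3)
    (hδ : ζ0 ^ 2 / ζ1 ≤ β)
    (xw sw : Fin n → ℝ) (hxw : ∀ i, 0 < xw i) (hsw : ∀ i, 0 < sw i)
    (hcenter : ∀ i, xw i * sw i = (v i) ^ 2 + ρ)
    (αbar : ℝ) (hαbar : αbar = v0 / ∑ i, (v i) ^ 2)
    (aac : Fin n → ℝ)
    (haac : ∀ i, aac i = (∑ j, (v j) ^ 2) / ((n : ℝ) + 1) - (v i) ^ 2 - x i * s i) :
    ∑ i, (aac i) ^ 2 / (x i * s i)
      ≤ ((∑ i, (v i) ^ 2) / (1 - β)) * (αbar ^ 2 / (αbar - 1)) := by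
  have hN0 : (0:ℝ) < (n : ℝ) + 1 := by positivity
  set N : ℝ := (n : ℝ) + 1 with hNdef
  set V : ℝ := ∑ i, (v i) ^ 2 with hVdef
  have hV : 0 < V := by
    obtain ⟨i, hi⟩ := Function.ne_iff.mp hv
    exact Finset.sum_pos' (fun j _ => sq_nonneg _)
      ⟨i, Finset.mem_univ i, (sq_nonneg _).lt_of_ne' (pow_ne_zero 2 hi)⟩
  have hsumr : ∑ i, r i = v0 - V := by
    rw [hr, Fin.sum_cons, hVdef, Finset.sum_sub_distrib]
    ring
  have hρpos : 0 < ρ := by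
    rw [hρ]
    apply div_pos _ hN0
    have : 0 < ∑ i, r i := Finset.sum_pos (fun i _ => hrpos i) Finset.univ_nonempty
    rw [hsumr] at this
    linarith
  have hζ1nn : 0 ≤ ζ1 := by rw [hζ1]; exact Real.sqrt_nonneg _
  have hβ0 : 0 ≤ β := le_trans (div_nonneg (sq_nonneg _) hζ1nn) hδ
  have h1β : 0 < 1 - β := by linarith
  set μ : ℝ := (1 - β) * ρ with hμdef
  have hμpos : 0 < μ := mul_pos h1β hρpos
  have hμρ : μ ≤ ρ := by nlinarith
  -- lower bound on the residuals from the proximity condition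
  have hrlow : ∀ i, μ ≤ r i := by
    obtain ⟨i0, -, hmin⟩ := Finset.exists_min_image Finset.univ r ⟨0, Finset.mem_univ 0⟩
    have hi0 : μ ≤ r i0 := by
      by_cases hc : ρ ≤ r i0
      · nlinarith
      · push_neg at hc
        have hrhat2 : ∀ j, (rhat j) ^ 2 = r j / ρ := fun j => by
          rw [hrhat]; exact Real.sq_sqrt (div_nonneg (hrpos j).le hρpos.le)
        have hterm0 : ∀ j, (rhat j - 1 / rhat j) ^ 2 = (r j / ρ) * (ρ / r j - 1) ^ 2 := by
          intro j
          have hne : rhat j ≠ 0 := by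
            have : (0:ℝ) < rhat j := by
              rw [hrhat]; exact Real.sqrt_pos.mpr (div_pos (hrpos j) hρpos)
            exact this.ne'
          have h1 : (rhat j - 1 / rhat j) ^ 2 = ((rhat j) ^ 2 - 1) ^ 2 / (rhat j) ^ 2 := by
            field_simp
          rw [h1, hrhat2]
          field_simp [(hrpos j).ne', hρpos.ne']
          ring
        have hterm1 : ∀ j, (1 / (rhat j) ^ 2 - 1) ^ 2 = (ρ / r j - 1) ^ 2 := by
          intro j
          rw [hrhat2, one_div_div]
        have hζ0sq : ζ0 ^ 2 = ∑ j, (r j / ρ) * (ρ / r j - 1) ^ 2 := by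
          rw [hζ0, Real.sq_sqrt (Finset.sum_nonneg fun j _ => sq_nonneg _)]
          exact Finset.sum_congr rfl fun j _ => hterm0 j
        have hζ1eq : ζ1 = Real.sqrt (∑ j, (ρ / r j - 1) ^ 2) := by
          rw [hζ1]; congr 1; exact Finset.sum_congr rfl fun j _ => hterm1 j
        have hζ1sq : ζ1 ^ 2 = ∑ j, (ρ / r j - 1) ^ 2 := by
          rw [hζ1eq, Real.sq_sqrt (Finset.sum_nonneg fun j _ => sq_nonneg _)]
        have hge : ρ / (r i0) - 1 ≤ ζ1 := by
          have hs1 : (ρ / (r i0) - 1) ^ 2 ≤ ∑ j, (ρ / r j - 1) ^ 2 :=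
            Finset.single_le_sum (f := fun j => (ρ / r j - 1) ^ 2)
              (fun j _ => sq_nonneg _) (Finset.mem_univ i0)
          calc ρ / (r i0) - 1 ≤ |ρ / (r i0) - 1| := le_abs_self _
            _ = Real.sqrt ((ρ / (r i0) - 1) ^ 2) := (Real.sqrt_sq_eq_abs _).symm
            _ ≤ Real.sqrt (∑ j, (ρ / r j - 1) ^ 2) := Real.sqrt_le_sqrt hs1
            _ = ζ1 := hζ1eq.symm
        have hζ1pos : 0 < ζ1 := by
          have h0 : 0 < ρ / (r i0) - 1 := by
            rw [sub_pos]
            exact (one_lt_div (hrpos i0)).mpr hc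
          linarith
        have hζ0ge : (r i0 / ρ) * ζ1 ^ 2 ≤ ζ0 ^ 2 := by
          rw [hζ0sq, hζ1sq, Finset.mul_sum]
          refine Finset.sum_le_sum fun j _ => ?_
          exact mul_le_mul_of_nonneg_right
            ((div_le_div_iff_of_pos_right hρpos).mpr (hmin j (Finset.mem_univ j))) (sq_nonneg _)
        have hchain : (r i0 / ρ) * ζ1 ≤ β := by
          have h1 : (r i0 / ρ) * ζ1 = ((r i0 / ρ) * ζ1 ^ 2) / ζ1 := by
            field_simp
          rw [h1]
          exact le_trans ((div_le_div_iff_of_pos_right hζ1pos).mpr hζ0ge) hδ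
        have hfinal : 1 - r i0 / ρ ≤ β := by
          have h2 : (r i0 / ρ) * (ρ / (r i0) - 1) = 1 - r i0 / ρ := by
            field_simp [(hrpos i0).ne', hρpos.ne']
          nlinarith [mul_le_mul_of_nonneg_left hge (div_nonneg (hrpos i0).le hρpos.le)]
        have h3 : 1 - β ≤ r i0 / ρ := by linarith
        calc μ = (1 - β) * ρ := hμdef
          _ ≤ (r i0 / ρ) * ρ := mul_le_mul_of_nonneg_right h3 hρpos.le
          _ = r i0 := div_mul_cancel₀ _ hρpos.ne'
    exact fun i => le_trans hi0 (hmin i (Finset.mem_univ i))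
  -- basic identities
  have hv0 : v0 = V + N * ρ := by
    rw [hρ, mul_div_cancel₀ _ hN0.ne']
    ring
  have hr0 : r 0 = v0 - ∑ i, x i * s i := by rw [hr]; simp
  have hd : ∀ i : Fin n, x i * s i = (v i) ^ 2 + r i.succ := by
    intro i
    rw [hr]
    simp only [Fin.cons_succ]
    ring
  set A : ℝ := V / N with hAdef
  -- pointwise bound
  have hpoint : ∀ i : Fin n, (aac i) ^ 2 / (x i * s i)
      ≤ A ^ 2 / μ + ((V - A) ^ 2 / (V + μ) - A ^ 2 / μ) * ((v i) ^ 2 / V)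
        - 2 * A + 2 * (v i) ^ 2 + x i * s i := by
    intro i
    have hdpos : 0 < x i * s i := mul_pos (hx i) (hs i)
    have hdlow : (v i) ^ 2 + μ ≤ x i * s i := by
      rw [hd i]
      have := hrlow i.succ
      linarith
    have hsplit : (aac i) ^ 2 / (x i * s i)
        = (A - (v i) ^ 2) ^ 2 / (x i * s i) - 2 * (A - (v i) ^ 2) + x i * s i := by
      rw [haac i]
      field_simp [(hx i).ne', (hs i).ne']
      ring
    have hb : (A - (v i) ^ 2) ^ 2 / (x i * s i) ≤ (A - (v i) ^ 2) ^ 2 / ((v i) ^ 2 + μ) :=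
      div_le_div_of_nonneg_left (sq_nonneg _) (by positivity) hdlow
    have hcV : (v i) ^ 2 ≤ V :=
      hVdef ▸ Finset.single_le_sum (fun j _ => sq_nonneg (v j)) (Finset.mem_univ i)
    have hch := chord_bound A μ V ((v i) ^ 2) hμpos hV (sq_nonneg _) hcV
    rw [hsplit]
    linarith
  -- sum the pointwise bounds
  have hsum_le : ∑ i, (aac i) ^ 2 / (x i * s i)
      ≤ ∑ i : Fin n, (A ^ 2 / μ + ((V - A) ^ 2 / (V + μ) - A ^ 2 / μ) * ((v i) ^ 2 / V)
        - 2 * A + 2 * (v i) ^ 2 + x i * s i) :=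
    Finset.sum_le_sum fun i _ => hpoint i
  have hsum_eq : ∑ i : Fin n, (A ^ 2 / μ + ((V - A) ^ 2 / (V + μ) - A ^ 2 / μ) * ((v i) ^ 2 / V)
        - 2 * A + 2 * (v i) ^ 2 + x i * s i)
      = (n : ℝ) * (A ^ 2 / μ) + ((V - A) ^ 2 / (V + μ) - A ^ 2 / μ)
        - 2 * (n : ℝ) * A + 2 * V + ∑ i, x i * s i := by
    have e1 : ∑ i : Fin n, ((v i) ^ 2 / V) = 1 := by
      rw [← Finset.sum_div]
      exact div_self hV.ne'
    have e2 : ∑ i : Fin n, (2:ℝ) * (v i) ^ 2 = 2 * V := by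
      rw [← Finset.mul_sum, ← hVdef]
    rw [Finset.sum_add_distrib, Finset.sum_add_distrib, Finset.sum_sub_distrib,
      Finset.sum_add_distrib, ← Finset.mul_sum, e1, e2, Finset.sum_const,
      Finset.sum_const, Finset.card_univ, Fintype.card_fin]
    simp only [nsmul_eq_mul, mul_one]
    ring
  have hxs_le : ∑ i, x i * s i ≤ V + N * ρ - μ := by
    have h0 := hrlow 0
    have : ∑ i, x i * s i = v0 - r 0 := by linarith [hr0]
    rw [this, hv0]
    linarith
  have hN2 : 2 ≤ N := by
    rw [hNdef]
    have : (1:ℝ) ≤ (n:ℝ) := by exact_mod_cast hn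
    linarith
  have hkey := key_ineq N V μ ρ hN2 hV hμpos hμρ
  have hnN : (n : ℝ) = N - 1 := by rw [hNdef]; ring
  -- right-hand side identity
  have hα1 : αbar - 1 = N * ρ / V := by
    rw [hαbar, hv0]
    field_simp
    ring
  have hRHS : (V / (1 - β)) * (αbar ^ 2 / (αbar - 1)) = (V + N * ρ) ^ 2 / (N * μ) := by
    rw [hα1, hαbar, hv0, hμdef]
    have hNρ : (0:ℝ) < N * ρ := by positivity
    field_simp
  rw [hRHS]
  calc ∑ i, (aac i) ^ 2 / (x i * s i)
      ≤ (n : ℝ) * (A ^ 2 / μ) + ((V - A) ^ 2 / (V + μ) - A ^ 2 / μ)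
        - 2 * (n : ℝ) * A + 2 * V + ∑ i, x i * s i := by
        rw [← hsum_eq]; exact hsum_le
    _ ≤ (N - 1) * (((V / N) ^ 2) / μ) + ((V - V / N) ^ 2 / (V + μ) - ((V / N) ^ 2) / μ)
        - 2 * (N - 1) * (V / N) + 2 * V + (V + N * ρ - μ) := by
        rw [← hAdef, ← hnN]
        exact add_le_add_right hxs_le _
    _ ≤ (V + N * ρ) ^ 2 / (N * μ) := hkey
end

section
/- Let n ≥ 2 be a natural number, 0 < β < 1/3, ᾱ > 1, and set t = (n+1) (ᾱ/(ᾱ−1))² (1−β)/β. If α ≥ 0 satisfies 1 ≤ 2α + t α², then α > (1/(2√n)) · ((ᾱ−1)/ᾱ) · √(β/(1−β)). -/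
set_option maxHeartbeats 1000000 in
/-- The quadratic-inequality estimate lower-bounding the predictor step length by a
quantity of order `1/√n`. -/
theorem stmt_15 (n : ℕ) (hn : 2 ≤ n) (β αbar α : ℝ)
    (hβ0 : 0 < β) (hβ : β < 1 / 3) (hαbar : 1 < αbar)
    (t : ℝ) (ht : t = ((n : ℝ) + 1) * (αbar / (αbar - 1)) ^ 2 * (1 - β) / β)
    (hα : 0 ≤ α) (h : 1 ≤ 2 * α + t * α ^ 2) :
    α > (1 / (2 * Real.sqrt (n : ℝ))) * ((αbar - 1) / αbar) * Real.sqrt (β / (1 - β)) := by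
  by_contra hcon
  push_neg at hcon
  have hn2 : (2:ℝ) ≤ (n:ℝ) := by exact_mod_cast hn
  have hnpos : (0:ℝ) < (n:ℝ) := by linarith
  have hsn : 0 < Real.sqrt (n:ℝ) := Real.sqrt_pos.mpr hnpos
  have hnsq : Real.sqrt (n:ℝ) ^ 2 = (n:ℝ) := Real.sq_sqrt hnpos.le
  have ha : 0 < αbar - 1 := by linarith
  have hab : 0 < αbar := by linarith
  have hr0 : 0 < (αbar - 1) / αbar := div_pos ha hab
  have hr1 : (αbar - 1) / αbar < 1 := (div_lt_one hab).mpr (by linarith)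
  have hb : 0 < 1 - β := by linarith
  have hs : 0 < β / (1 - β) := div_pos hβ0 hb
  have hs2 : β / (1 - β) < 1/2 := by rw [div_lt_iff₀ hb]; linarith
  have hss : 0 < Real.sqrt (β/(1-β)) := Real.sqrt_pos.mpr hs
  have hssq : Real.sqrt (β/(1-β)) ^ 2 = β/(1-β) := Real.sq_sqrt hs.le
  have hst : Real.sqrt (β/(1-β)) < Real.sqrt (1/2) := Real.sqrt_lt_sqrt hs.le hs2
  have h2pos : (0:ℝ) < Real.sqrt 2 := Real.sqrt_pos.mpr (by norm_num)
  have h2sq : Real.sqrt 2 ^ 2 = 2 := Real.sq_sqrt (by norm_num)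
  have h12 : Real.sqrt (1/2) = Real.sqrt 2 / 2 := by
    have h' : ((Real.sqrt 2 / 2)^2) = 1/2 := by rw [div_pow, h2sq]; norm_num
    rw [← h', Real.sqrt_sq (by positivity)]
  have hsqn : Real.sqrt 2 ≤ Real.sqrt (n:ℝ) := Real.sqrt_le_sqrt hn2
  set c := (1 / (2 * Real.sqrt (n:ℝ))) * ((αbar - 1) / αbar) * Real.sqrt (β/(1-β)) with hc
  -- 2c < 1/2
  have hnum : ((αbar - 1) / αbar) * Real.sqrt (β/(1-β)) < Real.sqrt (1/2) := by
    calc ((αbar - 1) / αbar) * Real.sqrt (β/(1-β)) < 1 * Real.sqrt (1/2) :=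
      mul_lt_mul'' hr1 hst hr0.le hss.le
    _ = Real.sqrt (1/2) := one_mul _
  have h2c : 2 * c < 1/2 := by
    have hceq : 2 * c = ((αbar - 1) / αbar) * Real.sqrt (β/(1-β)) / Real.sqrt (n:ℝ) := by
      rw [hc]; field_simp
    have step1 : ((αbar - 1) / αbar) * Real.sqrt (β/(1-β)) / Real.sqrt (n:ℝ)
        ≤ ((αbar - 1) / αbar) * Real.sqrt (β/(1-β)) / Real.sqrt 2 :=
      div_le_div_of_nonneg_left (by positivity) h2pos hsqn
    have step2 : ((αbar - 1) / αbar) * Real.sqrt (β/(1-β)) / Real.sqrt 2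
        < Real.sqrt (1/2) / Real.sqrt 2 := (div_lt_div_iff_of_pos_right h2pos).mpr hnum
    have step3 : Real.sqrt (1/2) / Real.sqrt 2 = 1/2 := by
      rw [h12]
      field_simp
    rw [hceq]
    calc _ ≤ _ := step1
    _ < _ := step2
    _ = 1/2 := step3
  -- t * c² = (n+1)/(4n)
  have htpos : 0 < t := by
    rw [ht]
    have : 0 < (αbar / (αbar - 1)) ^ 2 := by positivity
    positivity
  have hc2 : c ^ 2 = ((αbar-1)/αbar)^2 * (β/(1-β)) / (4*(n:ℝ)) := by
    have he : c^2 = (1/(2*Real.sqrt (n:ℝ)))^2 * ((αbar-1)/αbar)^2 * (Real.sqrt (β/(1-β)))^2 := by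
      rw [hc]; ring
    rw [he, hssq, div_pow, one_pow, mul_pow, hnsq]
    ring
  have hβne : β ≠ 0 := hβ0.ne'
  have hbne : (1-β) ≠ 0 := hb.ne'
  have hane : αbar - 1 ≠ 0 := ha.ne'
  have habne : αbar ≠ 0 := hab.ne'
  have hnne : (n:ℝ) ≠ 0 := hnpos.ne'
  have htc : t * c ^ 2 = ((n:ℝ)+1)/(4*(n:ℝ)) := by
    rw [ht, hc2]
    field_simp
  have hbound : ((n:ℝ)+1)/(4*(n:ℝ)) ≤ 3/8 := by
    rw [div_le_iff₀ (by linarith)]; linarith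
  have hα2 : α ^ 2 ≤ c ^ 2 := by
    apply pow_le_pow_left₀ hα hcon
  have htα : t * α ^ 2 ≤ t * c ^ 2 := by nlinarith
  nlinarith [h, htα, htc, hbound, h2c, hcon]
end

section
/- Let w = (v₀, v) ∈ ℝ × ℝⁿ with v₀ > ‖v‖² > 0, and define ᾱ(w) = v₀/‖v‖² and μ*(w) = v₀²/(v₀ − ‖v‖²). For α ∈ (0,1) set w(α) = ((1−α) v₀, (1−α) v). If α ≥ γ (ᾱ(w) − 1)/ᾱ(w) for some γ ∈ (0,1), then μ*(w(α)) < μ*(w)/(1+γ). -/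
/-- Decrease of the merit function `μ*(w) = v₀²/(v₀ - ‖v‖²)` along the predictor step. -/
theorem stmt_16 (n : ℕ) (v0 : ℝ) (v : Fin n → ℝ)
    (h1 : 0 < ∑ i, (v i) ^ 2) (h2 : ∑ i, (v i) ^ 2 < v0)
    (α γ : ℝ) (hα0 : 0 < α) (hα1 : α < 1) (hγ0 : 0 < γ) (hγ1 : γ < 1)
    (h : γ * ((v0 / ∑ i, (v i) ^ 2 - 1) / (v0 / ∑ i, (v i) ^ 2)) ≤ α) :
    ((1 - α) * v0) ^ 2 / ((1 - α) * v0 - ∑ i, ((1 - α) * v i) ^ 2)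
      < (v0 ^ 2 / (v0 - ∑ i, (v i) ^ 2)) / (1 + γ) := by
  set s : ℝ := ∑ i, (v i) ^ 2 with hs
  have hsum : ∑ i, ((1 - α) * v i) ^ 2 = (1 - α) ^ 2 * s := by
    rw [Finset.mul_sum]; congr 1; ext i; ring
  rw [hsum]
  have hv0 : (0:ℝ) < v0 := lt_trans h1 h2
  have hα : γ * (v0 - s) / v0 ≤ α := by
    have he : (v0 / s - 1) / (v0 / s) = (v0 - s) / v0 := by field_simp
    rw [he, ← mul_div_assoc] at h
    exact h
  have h1α : (0:ℝ) < 1 - α := by linarith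
  have hd2 : (0:ℝ) < v0 - s := by linarith
  have hd0 : (0:ℝ) < v0 - (1 - α) * s := by nlinarith [mul_pos hα0 h1]
  have hd1 : (0:ℝ) < (1 - α) * v0 - (1 - α) ^ 2 * s := by nlinarith [mul_pos h1α hd0]
  have key : γ * (v0 - s) ≤ α * v0 := (div_le_iff₀ hv0).mp hα
  rw [div_lt_div_iff₀ hd1 (by positivity), div_mul_eq_mul_div, lt_div_iff₀ hd2]
  have hb : 0 < v0 - (1 - α) * s - (1 - α) * (1 + γ) * (v0 - s) := by
    nlinarith [mul_pos (mul_pos hα0 hγ0) hd2]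
  nlinarith [mul_pos (mul_pos h1α (mul_pos hv0 hv0)) hb]
end

section
/- Let M be an n×n positive semidefinite real matrix and q ∈ ℝⁿ. Let (x, s) and (x*, s*) satisfy x, s, x*, s* ≥ 0 componentwise, −M x + s = q, −M x* + s* = q, and xᵢ* sᵢ* = 0 for all i. Then xᵀ s* + sᵀ x* ≤ xᵀ s. -/
open scoped Matrix

/-- For a feasible pair `(x, s)` and a solution `(x*, s*)` of the monotone LCP,
`xᵀ s* + sᵀ x* ≤ xᵀ s`. -/
theorem stmt_17 (n : ℕ) (M : Matrix (Fin n) (Fin n) ℝ)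
    (hM : ∀ u : Fin n → ℝ, 0 ≤ u ⬝ᵥ M.mulVec u)
    (q x s xstar sstar : Fin n → ℝ)
    (hx : ∀ i, 0 ≤ x i) (hs : ∀ i, 0 ≤ s i)
    (hxstar : ∀ i, 0 ≤ xstar i) (hsstar : ∀ i, 0 ≤ sstar i)
    (h1 : -(M.mulVec x) + s = q) (h2 : -(M.mulVec xstar) + sstar = q)
    (h3 : ∀ i, xstar i * sstar i = 0) :
    (∑ i, x i * sstar i) + ∑ i, s i * xstar i ≤ ∑ i, x i * s i := by
  have hMu : M.mulVec (x - xstar) = s - sstar := by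
    rw [Matrix.mulVec_sub]
    funext i
    have h := congrFun (h1.trans h2.symm) i
    simp only [Pi.add_apply, Pi.neg_apply, Pi.sub_apply] at h ⊢
    linarith
  have key := hM (x - xstar)
  rw [hMu] at key
  have h0 : ∑ i, xstar i * sstar i = 0 := by simp [h3]
  have key' : 0 ≤ ∑ i, (x i * s i - x i * sstar i - s i * xstar i
      + xstar i * sstar i) := by
    refine key.trans (le_of_eq ?_)
    simp only [dotProduct, Pi.sub_apply]
    exact Finset.sum_congr rfl fun i _ => by ring
  rw [Finset.sum_add_distrib, Finset.sum_sub_distrib, Finset.sum_sub_distrib, h0] at key'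
  linarith
end

section
/- Let M be an n×n real matrix partitioned by an index split {1,…,n} = B ∪ N into blocks M_BB, M_BN, M_NB, M_NN, with M_BB invertible. Let x, s, x*, s* ∈ ℝⁿ satisfy M(x − x*) = s − s*, with x*_N = 0 and s*_B = 0. Define the block matrix M̂ = [[M_BB⁻¹, −M_BB⁻¹ M_BN], [M_NB M_BB⁻¹, M_NN − M_NB M_BB⁻¹ M_BN]]. Then the vector (x_B − x*_B, s_N − s*_N) equals M̂ applied to the vector (s_B, x_N); consequently, with κ = max over all entries of |M̂|, one has ‖(x_B − x*_B, s_N − s*_N)‖_∞ ≤ κ ‖(s_B, x_N)‖₁. -/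
open scoped Matrix

/-- Block-matrix identity for the deviation from a strictly complementary solution
and the resulting `‖·‖_∞ ≤ κ ‖·‖₁` estimate. -/
theorem stmt_19 {B N : Type*} [Fintype B] [Fintype N] [DecidableEq B] [DecidableEq N]
    [Nonempty B]
    (MBB : Matrix B B ℝ) (MBN : Matrix B N ℝ) (MNB : Matrix N B ℝ) (MNN : Matrix N N ℝ)
    (hMBB : IsUnit MBB.det)
    (x s xstar sstar : B ⊕ N → ℝ)
    (hxN : ∀ j, xstar (Sum.inr j) = 0) (hsB : ∀ i, sstar (Sum.inl i) = 0)
    (hM : (Matrix.fromBlocks MBB MBN MNB MNN).mulVec (x - xstar) = s - sstar)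
    (Mhat : Matrix (B ⊕ N) (B ⊕ N) ℝ)
    (hMhat : Mhat = Matrix.fromBlocks MBB⁻¹ (-(MBB⁻¹ * MBN))
        (MNB * MBB⁻¹) (MNN - MNB * MBB⁻¹ * MBN))
    (κ : ℝ)
    (hκ : κ = Finset.univ.sup' Finset.univ_nonempty
        (fun p : (B ⊕ N) × (B ⊕ N) => |Mhat p.1 p.2|)) :
    (Sum.elim (fun i => x (Sum.inl i) - xstar (Sum.inl i))
        (fun j => s (Sum.inr j) - sstar (Sum.inr j))
      = Mhat.mulVec (Sum.elim (fun i => s (Sum.inl i)) (fun j => x (Sum.inr j)))) ∧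
    ∀ k, |Sum.elim (fun i => x (Sum.inl i) - xstar (Sum.inl i))
        (fun j => s (Sum.inr j) - sstar (Sum.inr j)) k|
      ≤ κ * ∑ l, |Sum.elim (fun i => s (Sum.inl i)) (fun j => x (Sum.inr j)) l| := by
  set xdB : B → ℝ := fun i => x (Sum.inl i) - xstar (Sum.inl i) with hxdB
  set sdN : N → ℝ := fun j => s (Sum.inr j) - sstar (Sum.inr j) with hsdN
  set sB : B → ℝ := fun i => s (Sum.inl i) with hsB'
  set xN : N → ℝ := fun j => x (Sum.inr j) with hxN'
  have hx : x - xstar = Sum.elim xdB xN := by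
    funext k; cases k <;> simp [hxN, hxdB, hxN']
  have hs : s - sstar = Sum.elim sB sdN := by
    funext k; cases k <;> simp [hsB, hsdN, hsB']
  rw [hx, hs, Matrix.fromBlocks_mulVec] at hM
  have h1 : MBB.mulVec xdB + MBN.mulVec xN = sB := funext fun i => congrFun hM (Sum.inl i)
  have h2 : MNB.mulVec xdB + MNN.mulVec xN = sdN := funext fun j => congrFun hM (Sum.inr j)
  have hinv : ∀ v : B → ℝ, MBB⁻¹.mulVec (MBB.mulVec v) = v := by
    intro v
    rw [Matrix.mulVec_mulVec, Matrix.nonsing_inv_mul _ hMBB, Matrix.one_mulVec]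
  have hxdB_eq : xdB = MBB⁻¹.mulVec sB - (MBB⁻¹ * MBN).mulVec xN := by
    have := congrArg (MBB⁻¹.mulVec) h1
    rw [Matrix.mulVec_add, hinv] at this
    rw [← this, ← Matrix.mulVec_mulVec]
    abel
  have e1 : MBB⁻¹.mulVec sB + (-(MBB⁻¹ * MBN)).mulVec xN = xdB := by
    rw [hxdB_eq, Matrix.neg_mulVec]; abel
  have e2 : (MNB * MBB⁻¹).mulVec sB + (MNN - MNB * MBB⁻¹ * MBN).mulVec xN = sdN := by
    rw [Matrix.mul_assoc MNB MBB⁻¹ MBN, ← h2, hxdB_eq, Matrix.mulVec_sub, Matrix.mulVec_mulVec, Matrix.mulVec_mulVec,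
      Matrix.sub_mulVec]
    abel
  have hmain : Sum.elim xdB sdN = Mhat.mulVec (Sum.elim sB xN) := by
    rw [hMhat, Matrix.fromBlocks_mulVec]
    simp only [Sum.elim_comp_inl, Sum.elim_comp_inr, e1, e2]
  refine ⟨hmain, fun k => ?_⟩
  rw [hmain]
  have hκk : ∀ l, |Mhat k l| ≤ κ := fun l =>
    hκ ▸ Finset.le_sup' (fun p : (B ⊕ N) × (B ⊕ N) => |Mhat p.1 p.2|) (Finset.mem_univ (k, l))
  calc |Mhat.mulVec (Sum.elim sB xN) k| = |∑ l, Mhat k l * Sum.elim sB xN l| := by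
        simp [Matrix.mulVec, dotProduct]
    _ ≤ ∑ l, |Mhat k l * Sum.elim sB xN l| := Finset.abs_sum_le_sum_abs _ _
    _ ≤ ∑ l, κ * |Sum.elim sB xN l| := by
        refine Finset.sum_le_sum fun l _ => ?_
        rw [abs_mul]
        exact mul_le_mul_of_nonneg_right (hκk l) (abs_nonneg _)
    _ = κ * ∑ l, |Sum.elim sB xN l| := by rw [Finset.mul_sum]
end
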